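/- arXiv:1504.03099 — 9 statements merged into one kernel-verified Lean document; each statement's English description precedes it below -/
import Mathlib

section
/- Let α ≥ 1 and let π be a permutation of {1,...,2α} that is a product of α disjoint transpositions, no two of which are interlaced (i.e., whenever a < b < π(a) then a < π(b) < π(a)). Let σ = (1,2,...,2α) be the cyclic permutation. Then the permutation π∘σ has exactly α+1 disjoint cycles. -/
/-- Number of disjoint cycles (orbits, fixed points included) of a permutation. -/
noncomputable def cycleCount {m : ℕ} (f : Equiv.Perm (Fin m)) : ℕ :=
  Nat.card (Quotient (⟨f.SameCycle,
    ⟨fun x => Equiv.Perm.SameCycle.refl f x, fun h => h.symm, fun h h' => h.trans h'⟩⟩ :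
    Setoid (Fin m)))

open Equiv Equiv.Perm in
def scS {m : ℕ} (f : Equiv.Perm (Fin m)) : Setoid (Fin m) :=
  ⟨f.SameCycle,
    ⟨fun x => Equiv.Perm.SameCycle.refl f x, fun h => h.symm, fun h h' => h.trans h'⟩⟩

private lemma cycleCount_def {m : ℕ} (f : Equiv.Perm (Fin m)) :
    cycleCount f = Nat.card (Quotient (scS f)) := rfl

private lemma cycleCount_one (m : ℕ) : cycleCount (1 : Equiv.Perm (Fin m)) = m := by
  have e : Quotient (scS (1 : Equiv.Perm (Fin m))) ≃ Fin m :=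
    { toFun := Quotient.lift id (fun a b h => Equiv.Perm.sameCycle_one.mp h)
      invFun := Quotient.mk _
      left_inv := fun q => q.inductionOn (fun a => rfl)
      right_inv := fun a => rfl }
  rw [cycleCount_def, Nat.card_congr e, Nat.card_eq_fintype_card, Fintype.card_fin]



private lemma reduction {n m : ℕ} (τ : Equiv.Perm (Fin n)) (τ' : Equiv.Perm (Fin m))
    (i j : Fin n) (hij : j ≠ i)
    (e : Fin m → Fin n) (d : Fin n → Fin m)
    (hde : ∀ x, d (e x) = x)
    (hed : ∀ u, u ≠ i → u ≠ j → e (d u) = u)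
    (hrange : ∀ x, e x ≠ i ∧ e x ≠ j)
    (hfix : τ i = i) (hjj : τ j ≠ j)
    (hstep : ∀ x : Fin m, e (τ' x) = if τ (e x) = j then τ (τ (e x)) else τ (e x)) :
    Nat.card (Quotient (scS τ)) = Nat.card (Quotient (scS τ')) + 1 := by
  classical
  -- i's orbit is a singleton
  have horb : ∀ y, τ.SameCycle i y → y = i := by
    rintro y ⟨k, rfl⟩
    exact Equiv.Perm.zpow_apply_eq_self_of_apply_eq_self hfix k
  have hτi : ∀ u, τ u = i → u = i := fun u hu => τ.injective (hu.trans hfix.symm)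
  have hτji : τ j ≠ i := fun h => hij (hτi j h)
  -- step lemmas
  have step1 : ∀ u, u ≠ i → u ≠ j → τ u ≠ j → τ' (d u) = d (τ u) := by
    intro u hu1 hu2 hu3
    have h := hstep (d u)
    rw [hed u hu1 hu2, if_neg hu3] at h
    rw [← h, hde]
  have step2 : ∀ u, u ≠ i → u ≠ j → τ u = j → τ' (d u) = d (τ j) := by
    intro u hu1 hu2 hu3
    have h := hstep (d u)
    rw [hed u hu1 hu2, if_pos hu3, hu3] at h
    rw [← h, hde]
  -- forward
  have fwd0 : ∀ y : Fin m, τ.SameCycle (e y) (e (τ' y)) := by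
    intro y
    rw [hstep y]
    split
    · exact (Equiv.Perm.sameCycle_apply_right.2
        (Equiv.Perm.sameCycle_apply_right.2 (Equiv.Perm.SameCycle.refl _ _)))
    · exact Equiv.Perm.sameCycle_apply_right.2 (Equiv.Perm.SameCycle.refl _ _)
  have fwd : ∀ (k : ℕ) (x : Fin m), τ.SameCycle (e x) (e ((τ' ^ k) x)) := by
    intro k
    induction k with
    | zero => intro x; simp; exact Equiv.Perm.SameCycle.refl _ _
    | succ k ih =>
      intro x
      have : (τ' ^ (k+1)) x = τ' ((τ' ^ k) x) := by
        rw [pow_succ']; rfl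
      rw [this]
      exact (ih x).trans (fwd0 _)
  have FWD : ∀ x y : Fin m, τ'.SameCycle x y → τ.SameCycle (e x) (e y) := by
    intro x y h
    obtain ⟨k, _, _, hk⟩ := h.exists_pow_eq''
    rw [← hk]; exact fwd k x
  -- backward
  have BWD : ∀ (k : ℕ) (u v : Fin n), (τ ^ k) u = v → u ≠ i → u ≠ j → v ≠ i → v ≠ j →
      τ'.SameCycle (d u) (d v) := by
    intro k
    induction k using Nat.strong_induction_on with
    | _ k IH =>
      intro u v hk hu1 hu2 hv1 hv2
      match k, hk with
      | 0, hk => simp at hk; rw [hk]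
      | (k+1), hk =>
        have hw1 : τ u ≠ i := fun h => hu1 (hτi u h)
        by_cases hw2 : τ u = j
        · -- need k ≥ 1
          match k, hk with
          | 0, hk => simp [hw2] at hk; exact absurd hk.symm hv2
          | (k'+1), hk =>
            have h2 : (τ ^ (k'+1+1)) u = (τ ^ k') (τ (τ u)) := by
              rw [pow_succ, pow_succ]; rfl
            rw [h2, hw2] at hk
            have hstep' : τ'.SameCycle (d u) (d (τ j)) := by
              rw [← step2 u hu1 hu2 hw2]
              exact Equiv.Perm.sameCycle_apply_right.2 (Equiv.Perm.SameCycle.refl _ _)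
            exact hstep'.trans (IH k' (by omega) (τ j) v hk hτji hjj hv1 hv2)
        · have h2 : (τ ^ (k+1)) u = (τ ^ k) (τ u) := by rw [pow_succ]; rfl
          rw [h2] at hk
          have hstep' : τ'.SameCycle (d u) (d (τ u)) := by
            rw [← step1 u hu1 hu2 hw2]
            exact Equiv.Perm.sameCycle_apply_right.2 (Equiv.Perm.SameCycle.refl _ _)
          exact hstep'.trans (IH k (by omega) (τ u) v hk hw1 hw2 hv1 hv2)
  -- star
  set star : Fin n → Fin n := fun u => if u = j then τ j else u with hstar
  have hstar1 : ∀ u, u ≠ i → star u ≠ i ∧ star u ≠ j := by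
    intro u hu
    by_cases h : u = j <;> simp [hstar, h, hτji, hjj, hu]
  have hstarSC : ∀ u, τ.SameCycle u (star u) := by
    intro u
    by_cases h : u = j
    · simp only [hstar, if_pos h]; rw [h]
      exact Equiv.Perm.sameCycle_apply_right.2 (Equiv.Perm.SameCycle.refl _ _)
    · simp only [hstar, if_neg h]
      exact Equiv.Perm.SameCycle.refl _ _
  have BWD' : ∀ u v : Fin n, u ≠ i → v ≠ i → τ.SameCycle u v →
      τ'.SameCycle (d (star u)) (d (star v)) := by
    intro u v hu hv h
    have h' : τ.SameCycle (star u) (star v) :=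
      ((hstarSC u).symm.trans h).trans (hstarSC v)
    obtain ⟨k, _, _, hk⟩ := h'.exists_pow_eq''
    exact BWD k _ _ hk (hstar1 u hu).1 (hstar1 u hu).2 (hstar1 v hv).1 (hstar1 v hv).2
  -- the equivalence
  have equ : Quotient (scS τ) ≃ Option (Quotient (scS τ')) := by
    refine ⟨Quotient.lift
        (fun u => if u = i then none else some (Quotient.mk (scS τ') (d (star u)))) ?_,
      fun o => o.elim (Quotient.mk (scS τ) i)
        (Quotient.lift (fun x => Quotient.mk (scS τ) (e x))
          (fun x y h => Quotient.sound (FWD x y h))), ?_, ?_⟩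
    · intro u v h
      by_cases hu : u = i
      · have hv : v = i := horb v (hu ▸ h)
        simp [hu, hv]
      · have hv : v ≠ i := fun hv => hu (horb u (hv ▸ h.symm))
        simp only [if_neg hu, if_neg hv, Option.some.injEq]
        exact Quotient.sound (BWD' u v hu hv h)
    · intro q
      induction q using Quotient.inductionOn with
      | _ u =>
        by_cases hu : u = i
        · simp only [Quotient.lift_mk, if_pos hu, Option.elim]
          exact congrArg _ hu.symm
        · simp only [Quotient.lift_mk, if_neg hu, Option.elim]
          have h1 : e (d (star u)) = star u := hed _ (hstar1 u hu).1 (hstar1 u hu).2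
          rw [h1]
          exact Quotient.sound (hstarSC u).symm
    · intro o
      match o with
      | none =>
        simp only [Option.elim, Quotient.lift_mk, if_pos rfl]
        simp
      | some q =>
        induction q using Quotient.inductionOn with
        | _ x =>
          simp only [Option.elim, Quotient.lift_mk]
          rw [if_neg (hrange x).1]
          have h1 : star (e x) = e x := by simp [hstar, (hrange x).2]
          rw [h1, hde]
  rw [Nat.card_congr equ]
  have : Finite (Quotient (scS τ')) := Quotient.finite _
  exact Finite.card_option


private lemma shortArc {n : ℕ} (hn : 2 ≤ n) (π : Equiv.Perm (Fin n)) (hnofix : ∀ k, π k ≠ k)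
    (hni : ∀ a b : Fin n, a < b → b < π a → a < π b ∧ π b < π a) :
    ∃ i : Fin n, (i : ℕ) + 1 < n ∧ ((π i : ℕ) = (i : ℕ) + 1) := by
  classical
  set A : Finset (Fin n) := Finset.univ.filter (fun a => a < π a) with hA
  have hAne : A.Nonempty := by
    have h0 : (0 : ℕ) < n := by omega
    set z : Fin n := ⟨0, h0⟩ with hz
    have : z < π z := by
      have := hnofix z
      rw [Fin.lt_def]
      have h1 : (π z : ℕ) ≠ (z : ℕ) := fun h => this (Fin.ext (h))
      simp only [hz] at h1 ⊢
      omega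
    exact ⟨z, by simp [hA, this]⟩
  obtain ⟨a, haA, hmin⟩ := A.exists_min_image (fun a => (π a : ℕ) - (a : ℕ)) hAne
  have ha : a < π a := by simp [hA] at haA; exact haA
  have ha' : (a : ℕ) < (π a : ℕ) := ha
  refine ⟨a, ?_, ?_⟩
  · have := (π a).isLt; omega
  by_contra hne
  have h2 : (a : ℕ) + 2 ≤ (π a : ℕ) := by omega
  set c : Fin n := ⟨(a : ℕ) + 1, by have := (π a).isLt; omega⟩ with hc
  have hac : a < c := by rw [Fin.lt_def]; simp [hc]
  have hccpa : c < π a := by rw [Fin.lt_def]; simp [hc]; omega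
  obtain ⟨h3, h4⟩ := hni a c hac hccpa
  -- π c ≠ c, and a < π c < π a
  have h5 : c < π c := by
    rcases lt_trichotomy c (π c) with h | h | h
    · exact h
    · exact absurd h.symm (hnofix c)
    · exfalso
      rw [Fin.lt_def] at h h3
      simp [hc] at h h3
      omega
  have hcA : c ∈ A := by simp [hA, h5]
  have h6 := hmin c hcA
  rw [Fin.lt_def] at h4 h5 hac
  have hcv : (c : ℕ) = (a : ℕ) + 1 := rfl
  omega



private def eEmb (m iv : ℕ) (x : Fin m) : Fin (m + 2) :=
  if (x : ℕ) < iv then ⟨x, by have := x.isLt; omega⟩ else ⟨(x : ℕ) + 2, by have := x.isLt; omega⟩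

private def dEmb (m iv : ℕ) (u : Fin (m + 2)) (hm : 2 ≤ m) : Fin m :=
  if h : (u : ℕ) < iv ∧ iv ≤ m then ⟨u, by omega⟩
  else ⟨(u : ℕ) - 2, by have := u.isLt; omega⟩

private lemma eEmb_val (m iv : ℕ) (x : Fin m) :
    ((eEmb m iv x : Fin (m + 2)) : ℕ) = if (x : ℕ) < iv then (x : ℕ) else (x : ℕ) + 2 := by
  unfold eEmb; split <;> rfl

private lemma dEmb_val (m iv : ℕ) (u : Fin (m + 2)) (hm : 2 ≤ m) :
    ((dEmb m iv u hm : Fin m) : ℕ) =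
      if (u : ℕ) < iv ∧ iv ≤ m then (u : ℕ) else (u : ℕ) - 2 := by
  unfold dEmb; split <;> rfl

private lemma finRotate_val {k : ℕ} (u : Fin (k + 1)) :
    ((finRotate (k + 1) u : Fin (k + 1)) : ℕ) = if (u : ℕ) + 1 = k + 1 then 0 else (u : ℕ) + 1 := by
  rw [finRotate_succ_apply, Fin.val_add_one]
  by_cases h : u = Fin.last k
  · rw [if_pos h, if_pos (by rw [h, Fin.val_last])]
  · rw [if_neg h, if_neg ?_]
    intro hv
    exact h (Fin.ext (by rw [Fin.val_last]; omega))

private lemma finRotate_val' {k : ℕ} (hk : 1 ≤ k) (u : Fin k) :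
    ((finRotate k u : Fin k) : ℕ) = if (u : ℕ) + 1 = k then 0 else (u : ℕ) + 1 := by
  obtain ⟨k', rfl⟩ : ∃ k', k = k' + 1 := ⟨k - 1, by omega⟩
  exact finRotate_val u

private lemma construct {n m : ℕ} (hm : m + 2 = n) (hm2 : 2 ≤ m)
    (π : Equiv.Perm (Fin n)) (hinv : π * π = 1) (hnofix : ∀ k, π k ≠ k)
    (hni : ∀ a b : Fin n, a < b → b < π a → a < π b ∧ π b < π a)
    (i : Fin n) (hi : (i : ℕ) + 1 < n) (harc : ((π i : ℕ) = (i : ℕ) + 1)) :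
    ∃ π' : Equiv.Perm (Fin m), (π' * π' = 1) ∧ (∀ k, π' k ≠ k) ∧
      (∀ a b : Fin m, a < b → b < π' a → a < π' b ∧ π' b < π' a) ∧
      Nat.card (Quotient (scS (π * finRotate n))) =
        Nat.card (Quotient (scS (π' * finRotate m))) + 1 := by
  subst hm
  have hππ : ∀ x, π (π x) = x := fun x => by
    have := congrFun (congrArg (fun g => g.toFun) hinv) x
    simpa using this
  set iv : ℕ := (i : ℕ) with hiv
  set j : Fin (m + 2) := ⟨iv + 1, hi⟩ with hj
  have hjv : (j : ℕ) = iv + 1 := rfl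
  have hπi : π i = j := Fin.ext (by rw [harc])
  have hπj : π j = i := by rw [← hπi, hππ]
  have hij : j ≠ i := fun h => by
    have : (j : ℕ) = iv := congrArg Fin.val h
    omega
  set e : Fin m → Fin (m + 2) := eEmb m iv with he
  set d : Fin (m + 2) → Fin m := fun u => dEmb m iv u hm2 with hd
  have hdval : ∀ u : Fin (m + 2), ((d u : Fin m) : ℕ) =
      if (u : ℕ) < iv ∧ iv ≤ m then (u : ℕ) else (u : ℕ) - 2 := fun u => dEmb_val m iv u hm2
  have hivm : iv ≤ m := by omega
  -- basic val facts
  have hde : ∀ x, d (e x) = x := by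
    intro x
    have hx := x.isLt
    apply Fin.ext
    rw [hdval, he, eEmb_val]
    split_ifs <;> omega
  have hrange : ∀ x : Fin m, e x ≠ i ∧ e x ≠ j := by
    intro x
    have hx := x.isLt
    constructor <;> intro hc <;> have := congrArg Fin.val hc
    · rw [he, eEmb_val] at this; simp only [← hiv] at this; split_ifs at this <;> omega
    · rw [he, eEmb_val] at this; rw [hjv] at this; split_ifs at this <;> omega
  have hed : ∀ u : Fin (m + 2), u ≠ i → u ≠ j → e (d u) = u := by
    intro u hu1 hu2
    have hu := u.isLt
    have hu1' : (u : ℕ) ≠ iv := fun h => hu1 (Fin.ext h)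
    have hu2' : (u : ℕ) ≠ iv + 1 := fun h => hu2 (Fin.ext (by rw [hjv]; exact h))
    apply Fin.ext
    rw [he, eEmb_val, hdval]
    split_ifs <;> omega
  have hcompl : ∀ u : Fin (m + 2), u ≠ i → u ≠ j → π u ≠ i ∧ π u ≠ j := by
    intro u hu1 hu2
    constructor <;> intro hc
    · exact hu2 (by rw [← hππ u, hc, hπi])
    · exact hu1 (by rw [← hππ u, hc, hπj])
  -- the reduced involution
  have hinvol : ∀ x : Fin m, d (π (e (d (π (e x))))) = x := by
    intro x
    obtain ⟨h1, h2⟩ := hcompl (e x) (hrange x).1 (hrange x).2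
    rw [hed _ h1 h2, hππ, hde]
  set π' : Equiv.Perm (Fin m) :=
    ⟨fun x => d (π (e x)), fun x => d (π (e x)), hinvol, hinvol⟩ with hπ'
  have hπ'app : ∀ x, π' x = d (π (e x)) := fun x => rfl
  have hπ'e : ∀ x, e (π' x) = π (e x) := by
    intro x
    obtain ⟨h1, h2⟩ := hcompl (e x) (hrange x).1 (hrange x).2
    rw [hπ'app, hed _ h1 h2]
  have hπ'inv : π' * π' = 1 := by
    apply Equiv.ext
    intro x
    simp only [Equiv.Perm.mul_apply, Equiv.Perm.one_apply]
    rw [hπ'app, hπ'app]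
    exact hinvol x
  have hπ'nofix : ∀ k, π' k ≠ k := by
    intro k hk
    have : π (e k) = e k := by rw [← hπ'e, hk]
    exact hnofix _ this
  have hmono : ∀ x y : Fin m, x < y ↔ e x < e y := by
    intro x y
    have hx := x.isLt; have hy := y.isLt
    rw [Fin.lt_def, Fin.lt_def, he, eEmb_val, eEmb_val]
    split_ifs <;> omega
  have hπ'ni : ∀ a b : Fin m, a < b → b < π' a → a < π' b ∧ π' b < π' a := by
    intro a b hab hb
    have h1 : e a < e b := (hmono a b).1 hab
    have h2 : e b < π (e a) := by rw [← hπ'e]; exact (hmono b (π' a)).1 hb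
    obtain ⟨h3, h4⟩ := hni (e a) (e b) h1 h2
    rw [← hπ'e] at h3 h4
    exact ⟨(hmono a (π' b)).2 h3, (hmono (π' b) (π' a)).2 ((hπ'e a) ▸ h4 : e (π' b) < e (π' a))⟩
  refine ⟨π', hπ'inv, hπ'nofix, hπ'ni, ?_⟩
  set τ : Equiv.Perm (Fin (m + 2)) := π * finRotate (m + 2) with hτ
  set τ' : Equiv.Perm (Fin m) := π' * finRotate m with hτ'
  have hτapp : ∀ u, τ u = π (finRotate (m + 2) u) := fun u => rfl
  have hRn : ∀ u : Fin (m + 2),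
      ((finRotate (m + 2) u : Fin (m + 2)) : ℕ) = if (u : ℕ) + 1 = m + 2 then 0 else (u : ℕ) + 1 :=
    finRotate_val' (by omega)
  have hRm : ∀ x : Fin m,
      ((finRotate m x : Fin m) : ℕ) = if (x : ℕ) + 1 = m then 0 else (x : ℕ) + 1 :=
    finRotate_val' (by omega)
  have hRi : finRotate (m + 2) i = j := by
    apply Fin.ext
    rw [hRn, hjv, if_neg (by omega)]
  have hfix : τ i = i := by rw [hτapp, hRi, hπj]
  have hπinj : ∀ u, π u = j ↔ u = i :=
    fun u => ⟨fun h => π.injective (h.trans hπi.symm), fun h => h ▸ hπi⟩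
  have hRj : finRotate (m + 2) j ≠ i := by
    intro h
    have := congrArg Fin.val h
    rw [hRn, hjv] at this
    split_ifs at this <;> omega
  have hjj : τ j ≠ j := by
    intro h
    rw [hτapp] at h
    exact hRj ((hπinj _).1 h)
  have claim : ∀ x : Fin m, e (finRotate m x) =
      if finRotate (m + 2) (e x) = i then finRotate (m + 2) j else finRotate (m + 2) (e x) := by
    intro x
    have hx := x.isLt
    have hcond : (finRotate (m + 2) (e x) = i) ↔ ((finRotate (m + 2) (e x) : ℕ) = iv) :=
      ⟨fun h => congrArg Fin.val h, fun h => Fin.ext h⟩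
    apply Fin.ext
    by_cases hc : finRotate (m + 2) (e x) = i
    · rw [if_pos hc]
      have hc' : ((finRotate (m + 2) (e x) : Fin (m + 2)) : ℕ) = iv := hcond.1 hc
      rw [hRn] at hc'
      simp only [he, eEmb_val] at hc' ⊢
      rw [hRm, hRn, hjv]
      split_ifs at hc' ⊢ <;> omega
    · rw [if_neg hc]
      have hc' : ¬ (((finRotate (m + 2) (e x) : Fin (m + 2)) : ℕ) = iv) :=
        fun h => hc (hcond.2 h)
      rw [hRn] at hc'
      simp only [he, eEmb_val] at hc' ⊢
      rw [hRm, hRn]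
      simp only [eEmb_val]
      split_ifs at hc' ⊢ <;> omega
  have hstep : ∀ x : Fin m, e (τ' x) = if τ (e x) = j then τ (τ (e x)) else τ (e x) := by
    intro x
    have h1 : e (τ' x) = π (e (finRotate m x)) := by
      rw [show τ' x = π' (finRotate m x) from rfl, hπ'e]
    by_cases hc : finRotate (m + 2) (e x) = i
    · have hcj : τ (e x) = j := by rw [hτapp, hc, hπi]
      rw [if_pos hcj, h1, claim x, if_pos hc, hcj]
      exact (hτapp j).symm
    · have hcj : τ (e x) ≠ j := by
        rw [hτapp]; intro h; exact hc ((hπinj _).1 h)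
      rw [if_neg hcj, h1, claim x, if_neg hc]
      exact (hτapp _).symm
  exact reduction τ τ' i j hij e d hde hed hrange hfix hjj hstep


private lemma key : ∀ (a n : ℕ), n = 2 * a → 1 ≤ a → ∀ π : Equiv.Perm (Fin n), π * π = 1 →
    (∀ k, π k ≠ k) → (∀ x y : Fin n, x < y → y < π x → x < π y ∧ π y < π x) →
    cycleCount (π * finRotate n) = a + 1 := by
  intro a
  induction a with
  | zero => intro n hn ha; omega
  | succ a ih =>
    intro n hn ha π hinv hnofix hni
    have hππ : ∀ x, π (π x) = x := fun x => by
      have := congrFun (congrArg (fun g => g.toFun) hinv) x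
      simpa using this
    by_cases ha0 : a = 0
    · subst ha0
      have hn2 : n = 2 := by omega
      subst hn2
      have hτ1 : π * finRotate 2 = 1 := by
        apply Equiv.ext
        intro x
        simp only [Equiv.Perm.mul_apply, Equiv.Perm.one_apply]
        set y : Fin 2 := finRotate 2 x with hy
        have hyx : (y : ℕ) ≠ (x : ℕ) := by
          have := finRotate_val' (k := 2) (by omega) x
          rw [← hy] at this
          have hx := x.isLt
          rw [this]
          split_ifs <;> omega
        have h1 : (π y : ℕ) ≠ (y : ℕ) := fun h => hnofix y (Fin.ext h)
        have h2 := (π y).isLt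
        have h3 := y.isLt
        have h4 := x.isLt
        exact Fin.ext (by omega)
      rw [hτ1, cycleCount_one]
    · obtain ⟨i, hi, harc⟩ := shortArc (by omega) π hnofix hni
      obtain ⟨π', hinv', hnofix', hni', hcard⟩ :=
        construct (n := n) (m := 2 * a) (by omega) (by omega) π hinv hnofix hni i hi harc
      rw [cycleCount_def, hcard, ← cycleCount_def,
        ih (2 * a) rfl (by omega) π' hinv' hnofix' hni']

/-- A product of α disjoint pairwise non-interlaced transpositions on {1,…,2α}
(encoded as an involution without fixed points on `Fin (2α)`), composed with the
cyclic permutation σ = (1,2,…,2α) (`finRotate`), has exactly α+1 disjoint cycles. -/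
theorem rainbow_arc_cycle_count (α : ℕ) (hα : 1 ≤ α) (π : Equiv.Perm (Fin (2 * α)))
    (hinv : π * π = 1) (hnofix : ∀ k, π k ≠ k)
    (hnoninterlaced : ∀ a b : Fin (2 * α), a < b → b < π a → a < π b ∧ π b < π a) :
    cycleCount (π * finRotate (2 * α)) = α + 1 := by
  exact key α (2 * α) rfl hα π hinv hnofix hnoninterlaced
end

section
/- Let α ≥ 1 and let π be a permutation of {1,...,2α} that is a product of α disjoint transpositions. If some pair of transpositions of π is interlaced (there exist a < b < π(a) with π(b) > π(a) or π(b) < a), then the permutation π∘σ, where σ = (1,2,...,2α), has at most α cycles. -/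
namespace InterlacedAux

open Equiv Equiv.Perm

variable {m : ℕ}

/-- The setoid used in `cycleCount`. -/
def cs (f : Equiv.Perm (Fin m)) : Setoid (Fin m) :=
  ⟨f.SameCycle,
    ⟨fun x => Equiv.Perm.SameCycle.refl f x, fun h => h.symm, fun h h' => h.trans h'⟩⟩

lemma cycleCount_eq (f : Equiv.Perm (Fin m)) :
    cycleCount f = Nat.card (Quotient (cs f)) := rfl

/-- Transitivity for the "merge-aware" relation. -/
private lemma Rtrans (f : Equiv.Perm (Fin m)) (x y : Fin m) {p q r : Fin m}
    (h1 : f.SameCycle p q ∨ (f.SameCycle p x ∧ f.SameCycle y q) ∨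
      (f.SameCycle p y ∧ f.SameCycle x q))
    (h2 : f.SameCycle q r ∨ (f.SameCycle q x ∧ f.SameCycle y r) ∨
      (f.SameCycle q y ∧ f.SameCycle x r)) :
    f.SameCycle p r ∨ (f.SameCycle p x ∧ f.SameCycle y r) ∨
      (f.SameCycle p y ∧ f.SameCycle x r) := by
  rcases h1 with h1 | ⟨h1, h1'⟩ | ⟨h1, h1'⟩ <;>
    rcases h2 with h2 | ⟨h2, h2'⟩ | ⟨h2, h2'⟩
  · exact Or.inl (h1.trans h2)
  · exact Or.inr (Or.inl ⟨h1.trans h2, h2'⟩)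
  · exact Or.inr (Or.inr ⟨h1.trans h2, h2'⟩)
  · exact Or.inr (Or.inl ⟨h1, h1'.trans h2⟩)
  · exact Or.inl (((h1.trans h2.symm).trans h1'.symm).trans h2')
  · exact Or.inl (h1.trans h2')
  · exact Or.inr (Or.inr ⟨h1, h1'.trans h2⟩)
  · exact Or.inl (h1.trans h2')
  · exact Or.inl (((h1.trans h2.symm).trans h1'.symm).trans h2')

lemma sameCycle_swap_mul {f : Equiv.Perm (Fin m)} {x y u v : Fin m}
    (h : (Equiv.swap x y * f).SameCycle u v) :
    f.SameCycle u v ∨ (f.SameCycle u x ∧ f.SameCycle y v) ∨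
      (f.SameCycle u y ∧ f.SameCycle x v) := by
  set g := Equiv.swap x y * f with hg
  have hstep : ∀ w : Fin m,
      f.SameCycle w (g w) ∨ (f.SameCycle w x ∧ f.SameCycle y (g w)) ∨
        (f.SameCycle w y ∧ f.SameCycle x (g w)) := by
    intro w
    have hgw : g w = Equiv.swap x y (f w) := by
      rw [hg, Equiv.Perm.mul_apply]
    rcases eq_or_ne (f w) x with h1 | h1
    · have : g w = y := by rw [hgw, h1, Equiv.swap_apply_left]
      rw [this]
      exact Or.inr (Or.inl ⟨⟨1, by simpa using h1⟩, Equiv.Perm.SameCycle.refl f y⟩)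
    · rcases eq_or_ne (f w) y with h2 | h2
      · have : g w = x := by rw [hgw, h2, Equiv.swap_apply_right]
        rw [this]
        exact Or.inr (Or.inr ⟨⟨1, by simpa using h2⟩, Equiv.Perm.SameCycle.refl f x⟩)
      · have : g w = f w := by rw [hgw, Equiv.swap_apply_of_ne_of_ne h1 h2]
        rw [this]
        exact Or.inl ⟨1, by simp⟩
  have key : ∀ j : ℕ,
      f.SameCycle u ((g ^ j) u) ∨ (f.SameCycle u x ∧ f.SameCycle y ((g ^ j) u)) ∨
        (f.SameCycle u y ∧ f.SameCycle x ((g ^ j) u)) := by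
    intro j
    induction j with
    | zero => simpa using Or.inl (Equiv.Perm.SameCycle.refl f u)
    | succ j ih =>
      have hpow : (g ^ (j + 1)) u = g ((g ^ j) u) := by
        rw [pow_succ', Equiv.Perm.mul_apply]
      rw [hpow]
      exact Rtrans f x y ih (hstep ((g ^ j) u))
  obtain ⟨i, _, hi⟩ := h.exists_pow_eq'
  have := key i
  rwa [hi] at this

private lemma back_x {f : Equiv.Perm (Fin m)} {x y u : Fin m}
    (h : (Equiv.swap x y * f).SameCycle u x) :
    f.SameCycle u x ∨ f.SameCycle u y := by
  rcases sameCycle_swap_mul h with h' | ⟨h', _⟩ | ⟨h', _⟩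
  · exact Or.inl h'
  · exact Or.inl h'
  · exact Or.inr h'

private lemma back_y {f : Equiv.Perm (Fin m)} {x y u : Fin m}
    (h : (Equiv.swap x y * f).SameCycle u y) :
    f.SameCycle u x ∨ f.SameCycle u y := by
  rcases sameCycle_swap_mul h with h' | ⟨h', _⟩ | ⟨h', _⟩
  · exact Or.inr h'
  · exact Or.inl h'
  · exact Or.inr h'

lemma cycleCount_le_swap_mul (f : Equiv.Perm (Fin m)) (x y : Fin m) :
    cycleCount f ≤ cycleCount (Equiv.swap x y * f) + 1 := by
  classical
  set g := Equiv.swap x y * f with hg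
  have hfg : Equiv.swap x y * g = f := by
    rw [hg, Equiv.swap_mul_self_mul]
  -- forward direction : f-relations to g-relations
  have hfwd : ∀ u v : Fin m, f.SameCycle u v → ¬ f.SameCycle u x → ¬ f.SameCycle u y →
      g.SameCycle u v := by
    intro u v huv hux huy
    have huv' : (Equiv.swap x y * g).SameCycle u v := by rwa [hfg]
    rcases sameCycle_swap_mul huv' with h' | ⟨h', _⟩ | ⟨h', _⟩
    · exact h'
    · rcases back_x h' with h'' | h''
      · exact absurd h'' hux
      · exact absurd h'' huy
    · rcases back_y h' with h'' | h''
      · exact absurd h'' hux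
      · exact absurd h'' huy
  -- the map on quotients
  let F : Fin m → Quotient (cs g) := fun u =>
    if f.SameCycle u x then Quotient.mk (cs g) x
    else if f.SameCycle u y then Quotient.mk (cs g) y
    else Quotient.mk (cs g) u
  have wd : ∀ u v : Fin m, f.SameCycle u v → F u = F v := by
    intro u v huv
    by_cases hux : f.SameCycle u x
    · have hvx : f.SameCycle v x := huv.symm.trans hux
      simp only [F, if_pos hux, if_pos hvx]
    · have hvx : ¬ f.SameCycle v x := fun h => hux (huv.trans h)
      by_cases huy : f.SameCycle u y
      · have hvy : f.SameCycle v y := huv.symm.trans huy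
        simp only [F, if_neg hux, if_neg hvx, if_pos huy, if_pos hvy]
      · have hvy : ¬ f.SameCycle v y := fun h => huy (huv.trans h)
        simp only [F, if_neg hux, if_neg hvx, if_neg huy, if_neg hvy]
        exact Quotient.sound (hfwd u v huv hux huy)
  let φ : Quotient (cs f) → Quotient (cs g) :=
    Quotient.lift F (fun u v h => wd u v h)
  -- injectivity away from the class of x
  have hinj : ∀ u v : Fin m,
      ¬ f.SameCycle u x → ¬ f.SameCycle v x → F u = F v → f.SameCycle u v := by
    intro u v hux hvx hFuv
    by_cases huy : f.SameCycle u y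
    · by_cases hvy : f.SameCycle v y
      · exact huy.trans hvy.symm
      · simp only [F, if_neg hux, if_pos huy, if_neg hvx, if_neg hvy] at hFuv
        have : g.SameCycle y v := Quotient.exact hFuv
        rcases back_y this.symm with h'' | h''
        · exact absurd h'' hvx
        · exact absurd h'' hvy
    · by_cases hvy : f.SameCycle v y
      · simp only [F, if_neg hux, if_neg huy, if_neg hvx, if_pos hvy] at hFuv
        have : g.SameCycle u y := Quotient.exact hFuv
        rcases back_y this with h'' | h''
        · exact absurd h'' hux
        · exact absurd h'' huy
      · simp only [F, if_neg hux, if_neg huy, if_neg hvx, if_neg hvy] at hFuv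
        have : g.SameCycle u v := Quotient.exact hFuv
        rcases sameCycle_swap_mul this with h' | ⟨h', _⟩ | ⟨h', _⟩
        · exact h'
        · exact absurd h' hux
        · exact absurd h' huy
  -- counting
  rw [cycleCount_eq, cycleCount_eq]
  have e := Equiv.optionSubtypeNe (Quotient.mk (cs f) x)
  rw [← Nat.card_congr e, Finite.card_option]
  have hψ : Function.Injective
      (fun q : {q : Quotient (cs f) // q ≠ Quotient.mk (cs f) x} => φ q.1) := by
    rintro ⟨q1, h1⟩ ⟨q2, h2⟩ hq
    obtain ⟨u, rfl⟩ := q1.exists_rep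
    obtain ⟨v, rfl⟩ := q2.exists_rep
    have hux : ¬ f.SameCycle u x := fun h => h1 (Quotient.sound h)
    have hvx : ¬ f.SameCycle v x := fun h => h2 (Quotient.sound h)
    simp only [Subtype.mk.injEq]
    exact Quotient.sound (hinj u v hux hvx hq)
  exact Nat.add_le_add_right (Nat.card_le_card_of_injective _ hψ) 1

/-- A fixed-point-free-on-its-support involution whose support has at most `2k`
elements times `g` has at most `k` more cycles than `g`. -/
lemma cycleCount_invol_mul_le (k : ℕ) :
    ∀ f g : Equiv.Perm (Fin m), f * f = 1 → f.support.card ≤ 2 * k →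
      cycleCount (f * g) ≤ k + cycleCount g := by
  induction k with
  | zero =>
    intro f g hf hcard
    have hf1 : f = 1 := by
      rw [← Equiv.Perm.support_eq_empty_iff, ← Finset.card_eq_zero]
      omega
    rw [hf1, one_mul]
    simp
  | succ k ih =>
    intro f g hf hcard
    by_cases h1 : f = 1
    · rw [h1, one_mul]; omega
    · have hffz : ∀ z, f (f z) = z := fun z => by
        rw [← Equiv.Perm.mul_apply, hf, Equiv.Perm.one_apply]
      obtain ⟨x, hx⟩ : ∃ x, f x ≠ x := by
        by_contra hcon
        push_neg at hcon
        exact h1 (Equiv.ext hcon)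
      set y := f x with hy
      have hyx : y ≠ x := hx
      set f' := Equiv.swap x y * f with hf'
      have hswf : Equiv.swap x y * f' = f := by rw [hf', Equiv.swap_mul_self_mul]
      have hf'x : f' x = x := by
        rw [hf', Equiv.Perm.mul_apply, ← hy, Equiv.swap_apply_right]
      have hf'y : f' y = y := by
        have : f y = x := by rw [hy, hffz]
        rw [hf', Equiv.Perm.mul_apply, this, Equiv.swap_apply_left]
      have hf'z : ∀ z, z ≠ x → z ≠ y → f' z = f z ∧ f z ≠ x ∧ f z ≠ y := by
        intro z hzx hzy
        have h1' : f z ≠ x := by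
          intro h
          apply hzy
          rw [← hffz z, h, ← hy]
        have h2' : f z ≠ y := by
          intro h
          apply hzx
          have : f y = x := by rw [hy, hffz]
          rw [← hffz z, h, this]
        exact ⟨by rw [hf', Equiv.Perm.mul_apply, Equiv.swap_apply_of_ne_of_ne h1' h2'],
          h1', h2'⟩
      have hf'inv : f' * f' = 1 := by
        ext z
        rw [Equiv.Perm.mul_apply, Equiv.Perm.one_apply]
        rcases eq_or_ne z x with rfl | hzx
        · rw [hf'x, hf'x]
        rcases eq_or_ne z y with rfl | hzy
        · rw [hf'y, hf'y]
        obtain ⟨e1, h1', h2'⟩ := hf'z z hzx hzy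
        obtain ⟨e2, _, _⟩ := hf'z (f z) h1' h2'
        rw [e1, e2, hffz]
      have hxmem : x ∈ f.support := Equiv.Perm.mem_support.mpr hx
      have hymem : y ∈ f.support := by
        refine Equiv.Perm.mem_support.mpr ?_
        have : f y = x := by rw [hy, hffz]
        rw [this]
        exact hyx.symm
      have hsub : f'.support ⊆ (f.support.erase x).erase y := by
        intro z hz
        have hzsupp := Equiv.Perm.mem_support.mp hz
        have hzx : z ≠ x := by rintro rfl; exact hzsupp hf'x
        have hzy : z ≠ y := by rintro rfl; exact hzsupp hf'y
        obtain ⟨e1, _, _⟩ := hf'z z hzx hzy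
        refine Finset.mem_erase.mpr ⟨hzy, Finset.mem_erase.mpr ⟨hzx, ?_⟩⟩
        refine Equiv.Perm.mem_support.mpr ?_
        rwa [← e1]
      have hcard' : f'.support.card ≤ 2 * k := by
        have h2 := Finset.card_le_card hsub
        rw [Finset.card_erase_of_mem (Finset.mem_erase.mpr ⟨hyx, hymem⟩),
          Finset.card_erase_of_mem hxmem] at h2
        have hge : 2 ≤ f.support.card := by
          have : ({x, y} : Finset (Fin m)) ⊆ f.support := by
            intro z hz
            rcases Finset.mem_insert.mp hz with rfl | hz
            · exact hxmem
            · rw [Finset.mem_singleton.mp hz]; exact hymem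
          have hc2 : ({x, y} : Finset (Fin m)).card = 2 := by
            rw [Finset.card_insert_of_notMem (by simpa using hyx.symm),
              Finset.card_singleton]
          calc 2 = ({x, y} : Finset (Fin m)).card := hc2.symm
            _ ≤ f.support.card := Finset.card_le_card this
        omega
      have step1 : f * g = Equiv.swap x y * (f' * g) := by
        rw [← mul_assoc, hswf]
      have step2 : cycleCount (Equiv.swap x y * (f' * g)) ≤ cycleCount (f' * g) + 1 := by
        have h2 := cycleCount_le_swap_mul (Equiv.swap x y * (f' * g)) x y
        rwa [Equiv.swap_mul_self_mul] at h2
      have step3 := ih f' g hf'inv hcard'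
      rw [step1]
      omega

/-- A single step gives `SameCycle`. -/
lemma sameCycle_of_apply_eq {g : Equiv.Perm (Fin m)} {x v : Fin m} (h : g x = v) :
    g.SameCycle x v := ⟨1, by simpa using h⟩

/-- The key crossing computation: `swap a c * swap b d * finRotate` is a single cycle. -/
lemma cycleCount_crossing {n : ℕ} (a b c d : Fin (n + 1)) (hab : a < b) (hbc : b < c)
    (hcd : c < d) :
    cycleCount (Equiv.swap a c * (Equiv.swap b d * finRotate (n + 1))) = 1 := by
  classical
  set g := Equiv.swap a c * (Equiv.swap b d * finRotate (n + 1)) with hgdef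
  have hg : ∀ x : Fin (n + 1), g x = Equiv.swap a c (Equiv.swap b d (x + 1)) := by
    intro x
    rw [hgdef, Equiv.Perm.mul_apply, Equiv.Perm.mul_apply, finRotate_succ_apply]
  -- value inequalities
  have hAB : (a : ℕ) < b := hab
  have hBC : (b : ℕ) < c := hbc
  have hCD : (c : ℕ) < d := hcd
  have hD : (d : ℕ) < n + 1 := d.isLt
  have hA : (a : ℕ) < n + 1 := a.isLt
  have hB : (b : ℕ) < n + 1 := b.isLt
  have hC : (c : ℕ) < n + 1 := c.isLt
  have hstep : ∀ x : Fin (n + 1), x + 1 ≠ a → x + 1 ≠ b → x + 1 ≠ c → x + 1 ≠ d →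
      g x = x + 1 := by
    intro x h1 h2 h3 h4
    rw [hg, Equiv.swap_apply_of_ne_of_ne h2 h4, Equiv.swap_apply_of_ne_of_ne h1 h3]
  -- chains of consecutive steps
  have chainN : ∀ (k : ℕ) (lo hi : Fin (n + 1)), (lo : ℕ) + k = hi →
      (∀ v : ℕ, (lo : ℕ) < v → v ≤ (hi : ℕ) → v ≠ a ∧ v ≠ b ∧ v ≠ c ∧ v ≠ d) →
      g.SameCycle lo hi := by
    intro k
    induction k with
    | zero =>
      intro lo hi h0 _
      have : lo = hi := Fin.ext (by omega)
      rw [this]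
    | succ k ih =>
      intro lo hi hk hmid
      have hhi : (hi : ℕ) < n + 1 := hi.isLt
      have hlast : lo < Fin.last n := by
        rw [Fin.lt_def]
        simp only [Fin.val_last]
        omega
      have hv1 : ((lo + 1 : Fin (n + 1)) : ℕ) = (lo : ℕ) + 1 :=
        Fin.val_add_one_of_lt hlast
      have hmid1 := hmid ((lo : ℕ) + 1) (by omega) (by omega)
      have hne : ∀ e : Fin (n + 1), (lo : ℕ) + 1 ≠ (e : ℕ) → lo + 1 ≠ e := by
        intro e hv h
        exact hv (by rw [← h, hv1])
      have hstep1 : g lo = lo + 1 :=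
        hstep lo (hne a hmid1.1) (hne b hmid1.2.1) (hne c hmid1.2.2.1) (hne d hmid1.2.2.2)
      refine (sameCycle_of_apply_eq hstep1).trans (ih (lo + 1) hi (by omega) ?_)
      intro v hv hv'
      exact hmid v (by omega) hv'
  -- the exceptional steps
  have hbd : b ≠ d := ne_of_lt (lt_trans hbc hcd)
  have hdb : d ≠ b := hbd.symm
  have hda : d ≠ a := (ne_of_lt (lt_trans (lt_trans hab hbc) hcd)).symm
  have hdc : d ≠ c := (ne_of_lt hcd).symm
  have hba : b ≠ a := (ne_of_lt hab).symm
  have hac : a ≠ c := ne_of_lt (lt_trans hab hbc)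
  have had : a ≠ d := ne_of_lt (lt_trans (lt_trans hab hbc) hcd)
  have hbc' : b ≠ c := ne_of_lt hbc
  -- abbreviations for b-1, a-1, d-1
  have hplus : ∀ x e : Fin (n + 1), (x : ℕ) + 1 = (e : ℕ) → x + 1 = e := by
    intro x e h
    have he := e.isLt
    apply Fin.ext
    rw [Fin.val_add_one_of_lt]
    · exact h
    · rw [Fin.lt_def]
      simp only [Fin.val_last]
      omega
  have hb1 : (b : ℕ) - 1 < n + 1 := by omega
  set eb : Fin (n + 1) := ⟨(b : ℕ) - 1, hb1⟩ with heb
  have hebv : (eb : ℕ) = (b : ℕ) - 1 := rfl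
  have ha1 : (a : ℕ) - 1 < n + 1 := by omega
  set ea : Fin (n + 1) := ⟨(a : ℕ) - 1, ha1⟩ with hea
  have heav : (ea : ℕ) = (a : ℕ) - 1 := rfl
  have hd1 : (d : ℕ) - 1 < n + 1 := by omega
  set ed : Fin (n + 1) := ⟨(d : ℕ) - 1, hd1⟩ with hed
  have hedv : (ed : ℕ) = (d : ℕ) - 1 := rfl
  have h0ne : ∀ e : Fin (n + 1), (0 : ℕ) < (e : ℕ) → (0 : Fin (n + 1)) ≠ e := by
    intro e he h
    rw [← h] at he
    simp at he
  -- step b-1 → d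
  have hstepbd : g eb = d := by
    rw [hg, hplus eb b (by rw [hebv]; omega), Equiv.swap_apply_left,
      Equiv.swap_apply_of_ne_of_ne hda hdc]
  have hAx : ∀ u : Fin (n + 1), (a : ℕ) ≤ (u : ℕ) → (u : ℕ) < (b : ℕ) →
      g.SameCycle a u := by
    intro u h1 h2
    exact chainN ((u : ℕ) - a) a u (by omega) (fun v hv hv' => by omega)
  have hSCad : g.SameCycle a d :=
    (hAx eb (by rw [hebv]; omega) (by rw [hebv]; omega)).trans
      (sameCycle_of_apply_eq hstepbd)
  have hBx : ∀ u : Fin (n + 1), (d : ℕ) ≤ (u : ℕ) → g.SameCycle a u := by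
    intro u h1
    exact hSCad.trans (chainN ((u : ℕ) - d) d u (by omega) (fun v hv hv' => by omega))
  have hlastSC : g.SameCycle a (Fin.last n) := by
    refine hBx (Fin.last n) ?_
    have := Fin.le_last d
    simp only [Fin.val_last]
    omega
  have hglast : g (Fin.last n) = Equiv.swap a c (Equiv.swap b d 0) := by
    rw [hg, Fin.last_add_one]
  have hglast0 : 0 < (a : ℕ) → g (Fin.last n) = 0 := by
    intro ha0
    rw [hglast, Equiv.swap_apply_of_ne_of_ne (h0ne b (by omega)) (h0ne d (by omega)),
      Equiv.swap_apply_of_ne_of_ne (h0ne a ha0) (h0ne c (by omega))]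
  have hSC0 : 0 < (a : ℕ) → g.SameCycle a 0 := fun ha0 =>
    hlastSC.trans (sameCycle_of_apply_eq (hglast0 ha0))
  have hSCc : g.SameCycle a c := by
    rcases Nat.eq_zero_or_pos (a : ℕ) with ha0 | ha0
    · -- a = 0 : last + 1 = 0 = a, so g last = c
      have h0a : (0 : Fin (n + 1)) = a := Fin.ext (by simp only [Fin.val_zero]; omega)
      have hbd0 : Equiv.swap b d (0 : Fin (n + 1)) = 0 :=
        Equiv.swap_apply_of_ne_of_ne (h0ne b (by omega)) (h0ne d (by omega))
      have hac0 : Equiv.swap a c (0 : Fin (n + 1)) = c := by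
        rw [h0a, Equiv.swap_apply_left]
      have hgl : g (Fin.last n) = c := by rw [hglast, hbd0, hac0]
      exact hlastSC.trans (sameCycle_of_apply_eq hgl)
    · -- a > 0 : go around through 0 up to a-1, then jump to c
      have hchain0 : g.SameCycle (0 : Fin (n + 1)) ea := by
        refine chainN ((a : ℕ) - 1) 0 ea ?_ ?_
        · rw [heav]
          simp
        · intro v hv hv'
          rw [heav] at hv'
          simp only [Fin.val_zero] at hv
          omega
      have hstepac : g ea = c := by
        rw [hg, hplus ea a (by rw [heav]; omega),
          Equiv.swap_apply_of_ne_of_ne hba.symm had, Equiv.swap_apply_left]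
      exact ((hSC0 ha0).trans hchain0).trans (sameCycle_of_apply_eq hstepac)
  have hDx : ∀ u : Fin (n + 1), (c : ℕ) ≤ (u : ℕ) → (u : ℕ) < (d : ℕ) →
      g.SameCycle a u := by
    intro u h1 h2
    exact hSCc.trans (chainN ((u : ℕ) - c) c u (by omega) (fun v hv hv' => by omega))
  have hstepdb : g ed = b := by
    rw [hg, hplus ed d (by rw [hedv]; omega), Equiv.swap_apply_right,
      Equiv.swap_apply_of_ne_of_ne hba hbc']
  have hSCb : g.SameCycle a b :=
    (hDx ed (by rw [hedv]; omega) (by rw [hedv]; omega)).trans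
      (sameCycle_of_apply_eq hstepdb)
  have hEx : ∀ u : Fin (n + 1), (b : ℕ) ≤ (u : ℕ) → (u : ℕ) < (c : ℕ) →
      g.SameCycle a u := by
    intro u h1 h2
    exact hSCb.trans (chainN ((u : ℕ) - b) b u (by omega) (fun v hv hv' => by omega))
  have hlow : ∀ u : Fin (n + 1), (u : ℕ) < (a : ℕ) → g.SameCycle a u := by
    intro u hu
    have ha0 : 0 < (a : ℕ) := by omega
    refine (hSC0 ha0).trans (chainN (u : ℕ) 0 u (by simp) ?_)
    intro v hv hv'
    simp only [Fin.val_zero] at hv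
    omega
  have key : ∀ u : Fin (n + 1), g.SameCycle a u := by
    intro u
    rcases lt_or_ge (u : ℕ) (a : ℕ) with h | h
    · exact hlow u h
    rcases lt_or_ge (u : ℕ) (b : ℕ) with h2 | h2
    · exact hAx u h h2
    rcases lt_or_ge (u : ℕ) (c : ℕ) with h3 | h3
    · exact hEx u h2 h3
    rcases lt_or_ge (u : ℕ) (d : ℕ) with h4 | h4
    · exact hDx u h3 h4
    · exact hBx u h4
  rw [cycleCount_eq, Nat.card_eq_one_iff_unique]
  constructor
  · constructor
    intro p q
    refine Quotient.inductionOn₂ p q fun u v => ?_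
    exact Quotient.sound ((key u).symm.trans (key v))
  · exact ⟨Quotient.mk (cs g) a⟩

lemma main_aux (n k : ℕ) (π : Equiv.Perm (Fin n)) (hinv : π * π = 1)
    (a b : Fin n) (hab : a < b) (hbc : b < π a) (hcd : π a < π b)
    (hn : n ≤ 2 * k + 4) :
    cycleCount (π * finRotate n) ≤ k + 1 := by
  rcases n with _ | m
  · exact a.elim0
  have hinv' : ∀ z, π (π z) = z := fun z => by
    rw [← Equiv.Perm.mul_apply, hinv, Equiv.Perm.one_apply]
  set c := π a with hc
  set d := π b with hd
  have hπc : π c = a := by rw [hc, hinv']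
  have hπd : π d = b := by rw [hd, hinv']
  -- distinctness
  have hab' : a ≠ b := ne_of_lt hab
  have hbc' : b ≠ c := ne_of_lt hbc
  have hcd' : c ≠ d := ne_of_lt hcd
  have hac : a ≠ c := ne_of_lt (lt_trans hab hbc)
  have hbd : b ≠ d := ne_of_lt (lt_trans hbc hcd)
  have had : a ≠ d := ne_of_lt (lt_trans (lt_trans hab hbc) hcd)
  set f := π * Equiv.swap b d * Equiv.swap a c with hfdef
  have hval : ∀ z, f z = π (Equiv.swap b d (Equiv.swap a c z)) := by
    intro z
    rw [hfdef, Equiv.Perm.mul_apply, Equiv.Perm.mul_apply]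
  have hfa : f a = a := by
    rw [hval, Equiv.swap_apply_left, Equiv.swap_apply_of_ne_of_ne hbc'.symm hcd'.symm.symm]
    · exact hπc
  have hfb : f b = b := by
    rw [hval, Equiv.swap_apply_of_ne_of_ne hab'.symm hbc', Equiv.swap_apply_left]
    exact hπd
  have hfc : f c = c := by
    rw [hval, Equiv.swap_apply_right, Equiv.swap_apply_of_ne_of_ne hab' had]
  have hfd : f d = d := by
    rw [hval, Equiv.swap_apply_of_ne_of_ne had.symm hcd'.symm, Equiv.swap_apply_right]
  have hoth : ∀ z, z ≠ a → z ≠ b → z ≠ c → z ≠ d → f z = π z := by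
    intro z hza hzb hzc hzd
    rw [hval, Equiv.swap_apply_of_ne_of_ne hza hzc, Equiv.swap_apply_of_ne_of_ne hzb hzd]
  have hπoth : ∀ z, z ≠ a → z ≠ b → z ≠ c → z ≠ d →
      π z ≠ a ∧ π z ≠ b ∧ π z ≠ c ∧ π z ≠ d := by
    intro z hza hzb hzc hzd
    refine ⟨?_, ?_, ?_, ?_⟩ <;> intro h
    · refine hzc ?_
      have h2 := congrArg π h
      rw [hinv'] at h2
      rw [h2, hc]
    · refine hzd ?_
      have h2 := congrArg π h
      rw [hinv'] at h2
      rw [h2, hd]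
    · refine hza ?_
      have h2 := congrArg π h
      rw [hinv'] at h2
      rw [h2]
      exact hπc
    · refine hzb ?_
      have h2 := congrArg π h
      rw [hinv'] at h2
      rw [h2]
      exact hπd
  have hfinv : f * f = 1 := by
    ext z
    rw [Equiv.Perm.mul_apply, Equiv.Perm.one_apply]
    rcases eq_or_ne z a with rfl | hza
    · rw [hfa, hfa]
    rcases eq_or_ne z b with rfl | hzb
    · rw [hfb, hfb]
    rcases eq_or_ne z c with rfl | hzc
    · rw [hfc, hfc]
    rcases eq_or_ne z d with rfl | hzd
    · rw [hfd, hfd]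
    obtain ⟨h1, h2, h3, h4⟩ := hπoth z hza hzb hzc hzd
    rw [hoth z hza hzb hzc hzd, hoth (π z) h1 h2 h3 h4, hinv']
  -- support bound
  have hsub : f.support ⊆ Finset.univ \ {a, b, c, d} := by
    intro z hz
    have hzsupp := Equiv.Perm.mem_support.mp hz
    refine Finset.mem_sdiff.mpr ⟨Finset.mem_univ z, ?_⟩
    intro hmem
    rcases Finset.mem_insert.mp hmem with rfl | hmem
    · exact hzsupp hfa
    rcases Finset.mem_insert.mp hmem with rfl | hmem
    · exact hzsupp hfb
    rcases Finset.mem_insert.mp hmem with rfl | hmem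
    · exact hzsupp hfc
    · rw [Finset.mem_singleton.mp hmem] at hzsupp
      exact hzsupp hfd
  have hcard4 : ({a, b, c, d} : Finset (Fin (m + 1))).card = 4 := by
    rw [Finset.card_insert_of_notMem (by simp [hab', hac, had]),
      Finset.card_insert_of_notMem (by simp [hbc', hbd]),
      Finset.card_insert_of_notMem (by simp [hcd']),
      Finset.card_singleton]
  have hsc : f.support.card ≤ 2 * k := by
    have h2 := Finset.card_le_card hsub
    rw [Finset.card_sdiff_of_subset (Finset.subset_univ _), hcard4, Finset.card_univ,
      Fintype.card_fin] at h2
    omega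
  -- reassemble
  have hfg : f * (Equiv.swap a c * (Equiv.swap b d * finRotate (m + 1))) =
      π * finRotate (m + 1) := by
    rw [hfdef]
    simp only [mul_assoc]
    rw [Equiv.swap_mul_self_mul, Equiv.swap_mul_self_mul]
  calc cycleCount (π * finRotate (m + 1))
      = cycleCount (f * (Equiv.swap a c * (Equiv.swap b d * finRotate (m + 1)))) := by
        rw [hfg]
    _ ≤ k + cycleCount (Equiv.swap a c * (Equiv.swap b d * finRotate (m + 1))) :=
        cycleCount_invol_mul_le k f _ hfinv hsc
    _ = k + 1 := by rw [cycleCount_crossing a b c d hab hbc hcd]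

end InterlacedAux

/-- If a product of α disjoint transpositions on {1,…,2α} (an involution without
fixed points) has some interlaced pair of transpositions, then its composition with
the cyclic permutation σ = (1,2,…,2α) has at most α cycles. -/
theorem interlaced_arc_cycle_count_le (α : ℕ) (hα : 1 ≤ α) (π : Equiv.Perm (Fin (2 * α)))
    (hinv : π * π = 1) (hnofix : ∀ k, π k ≠ k)
    (hinterlaced : ∃ a b : Fin (2 * α), a < b ∧ b < π a ∧ (π a < π b ∨ π b < a)) :
    cycleCount (π * finRotate (2 * α)) ≤ α := by
  obtain ⟨a, b, hab, hb, hor⟩ := hinterlaced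
  have hinv' : ∀ z, π (π z) = z := fun z => by
    rw [← Equiv.Perm.mul_apply, hinv, Equiv.Perm.one_apply]
  rcases hor with h | h
  · -- a < b < π a < π b
    have h4 : 4 ≤ 2 * α := by
      have h1 : (a : ℕ) < b := hab
      have h2 : (b : ℕ) < π a := hb
      have h3 : ((π a : Fin (2 * α)) : ℕ) < π b := h
      have h5 : ((π b : Fin (2 * α)) : ℕ) < 2 * α := (π b).isLt
      omega
    have := InterlacedAux.main_aux (2 * α) (α - 2) π hinv a b hab hb h (by omega)
    omega
  · -- π b < a < b < π a : relabel a' = π b, b' = a, c' = b, d' = π a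
    have hb2 : a < π (π b) := by rw [hinv']; exact hab
    have hb3 : π (π b) < π a := by rw [hinv']; exact hb
    have h4 : 4 ≤ 2 * α := by
      have h1 : ((π b : Fin (2 * α)) : ℕ) < a := h
      have h2 : (a : ℕ) < b := hab
      have h3 : (b : ℕ) < π a := hb
      have h5 : ((π a : Fin (2 * α)) : ℕ) < 2 * α := (π a).isLt
      omega
    have := InterlacedAux.main_aux (2 * α) (α - 2) π hinv (π b) a h hb2 hb3 (by omega)
    omega
end

section
/- Let π^∧ and π^∨ be products of disjoint transpositions on {1,...,2α} such that both map odd numbers to even numbers and even numbers to odd numbers. Define π(k) = π^∧(k) for k odd and π(k) = π^∨(k) for k even. Then π is a permutation of {1,...,2α}, and the number of cycles of the product π^∧∘π^∨ equals twice the number of cycles of π. -/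
/-!
Colour each point by its parity in `ZMod 2`. The meander permutation π switches colours, so
πⁿ can join two points of the same colour only for even n: the cycles of π² are the cycles of
π cut by colour, and since every cycle of π meets both colours this doubles their number.
Because π^∧ and π^∨ are involutions, π^∧π^∨ agrees with π² on one colour class and its inverse
π^∨π^∧ agrees with π² on the other; both preserve colours, so π^∧π^∨ and π² have the same
cycles.
-/

theorem ZMod.eq_add_one_of_ne {a b : ZMod 2} (h : a ≠ b) : a = b + 1 := by
  revert a b; decide

theorem ZMod.eq_zero_or_eq_one (a : ZMod 2) : a = 0 ∨ a = 1 := by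
  revert a; decide

namespace Equiv.Perm

variable {α : Type*}

theorem apply_inv_apply_eq_sub {β : Type*} [AddGroup β] {f : Perm α} {c : α → β} {a : β}
    (hc : ∀ x, c (f x) = c x + a) (x : α) : c (f⁻¹ x) = c x - a := by
  rw [eq_sub_iff_add_eq, ← hc, coe_inv, apply_symm_apply]

theorem apply_zpow_apply_eq_add_zsmul {β : Type*} [AddCommGroup β] {f : Perm α} {c : α → β}
    {a : β} (hc : ∀ x, c (f x) = c x + a) (n : ℤ) (x : α) : c ((f ^ n) x) = c x + n • a := by
  induction n using Int.induction_on with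
  | zero => simp
  | succ n ih =>
    rw [add_comm, zpow_add, zpow_one, mul_apply, hc, ih, add_zsmul, one_zsmul]
    abel
  | pred n ih =>
    rw [sub_eq_neg_add, zpow_add, zpow_neg_one, mul_apply, apply_inv_apply_eq_sub hc, ih,
      add_zsmul]
    abel

section Parity

variable {c : α → ZMod 2} {σ : Perm α}

theorem sameCycle_sq_iff (hσ : ∀ x, c (σ x) = c x + 1) {x y : α} :
    (σ ^ 2).SameCycle x y ↔ σ.SameCycle x y ∧ c x = c y := by
  have hpow (n : ℤ) : (σ ^ 2) ^ n = σ ^ (2 * n) := by rw [zpow_mul, zpow_ofNat]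
  constructor
  · rintro ⟨n, rfl⟩
    refine ⟨⟨2 * n, by rw [hpow]⟩, ?_⟩
    rw [hpow, apply_zpow_apply_eq_add_zsmul hσ, zsmul_one,
      ZMod.intCast_eq_zero_iff_even.2 (even_two_mul n), add_zero]
  · rintro ⟨⟨n, rfl⟩, hc⟩
    rw [apply_zpow_apply_eq_add_zsmul hσ, zsmul_one, left_eq_add,
      ZMod.intCast_eq_zero_iff_even] at hc
    obtain ⟨m, rfl⟩ := hc
    exact ⟨m, by rw [hpow, two_mul]⟩

theorem card_quotient_sameCycle_sq (hσ : ∀ x, c (σ x) = c x + 1) :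
    Nat.card (Quotient (SameCycle.setoid (σ ^ 2))) =
      2 * Nat.card (Quotient (SameCycle.setoid σ)) := by
  let F : Quotient (SameCycle.setoid (σ ^ 2)) → Quotient (SameCycle.setoid σ) × ZMod 2 :=
    Quotient.lift (fun x => (⟦x⟧, c x)) fun x y h =>
      Prod.ext (Quotient.sound ((sameCycle_sq_iff hσ).1 h).1) ((sameCycle_sq_iff hσ).1 h).2
  have hF : F.Bijective := by
    refine ⟨fun p q => ?_, ?_⟩
    · induction p, q using Quotient.inductionOn₂ with | _ x y => ?_
      intro h
      obtain ⟨hxy, hc⟩ := Prod.mk.inj h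
      exact Quotient.sound (a := x) (b := y) ((sameCycle_sq_iff hσ).2 ⟨Quotient.exact hxy, hc⟩)
    · rintro ⟨q, b⟩
      induction q using Quotient.ind with | _ x => ?_
      by_cases hb : b = c x
      · exact ⟨⟦x⟧, by rw [hb]; rfl⟩
      · have hσx : σ.SameCycle (σ x) x := sameCycle_apply_left.2 (.refl σ x)
        exact ⟨⟦σ x⟧, Prod.ext (Quotient.sound hσx) ((hσ x).trans (ZMod.eq_add_one_of_ne hb).symm)⟩
  rw [Nat.card_congr (Equiv.ofBijective F hF), Nat.card_prod, Nat.card_zmod, mul_comm]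

end Parity

theorem zpow_apply_eq_of_eqOn {f g : Perm α} {s : Set α} (hf : ∀ x, f x ∈ s ↔ x ∈ s)
    (hg : ∀ x, g x ∈ s ↔ x ∈ s) (hfg : Set.EqOn f g s) (n : ℤ) {x : α} (hx : x ∈ s) :
    (f ^ n) x = (g ^ n) x := by
  have h : f.subtypePerm hf = g.subtypePerm hg := ext fun y => Subtype.ext (hfg y.2)
  simpa [subtypePerm_zpow] using congrArg (fun σ : Perm s => ((σ ^ n) ⟨x, hx⟩ : α)) h

theorem sameCycle_iff_of_eqOn {f g : Perm α} {s : Set α} (hf : ∀ x, f x ∈ s ↔ x ∈ s)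
    (hg : ∀ x, g x ∈ s ↔ x ∈ s) (hfg : Set.EqOn f g s) {x y : α} (hx : x ∈ s) :
    f.SameCycle x y ↔ g.SameCycle x y :=
  exists_congr fun n => by rw [zpow_apply_eq_of_eqOn hf hg hfg n hx]

theorem sameCycle_iff_of_eqOn_of_inv_eqOn_compl {f g : Perm α} {s : Set α}
    (hf : ∀ x, f x ∈ s ↔ x ∈ s) (hg : ∀ x, g x ∈ s ↔ x ∈ s) (h₁ : Set.EqOn f g s)
    (h₂ : Set.EqOn ⇑(f⁻¹) g sᶜ) {x y : α} : f.SameCycle x y ↔ g.SameCycle x y := by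
  by_cases hx : x ∈ s
  · exact sameCycle_iff_of_eqOn hf hg h₁ hx
  · rw [← sameCycle_inv]
    refine sameCycle_iff_of_eqOn (s := sᶜ) (fun z => ?_) (fun z => (hg z).not) h₂ hx
    rw [Set.mem_compl_iff, Set.mem_compl_iff, ← hf, coe_inv, apply_symm_apply]

def interleave (c : α → ZMod 2) (σ τ : Perm α) (hσ : ∀ x, c (σ x) = c x + 1)
    (hτ : ∀ x, c (τ x) = c x + 1) : Perm α where
  toFun x := if c x = 0 then σ x else τ x
  invFun x := if c x = 0 then τ⁻¹ x else σ⁻¹ x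
  left_inv x := by
    rcases ZMod.eq_zero_or_eq_one (c x) with hx | hx <;>
      simp [hx, hσ, hτ, CharTwo.add_self_eq_zero]
  right_inv x := by
    have hσ' := apply_inv_apply_eq_sub hσ
    have hτ' := apply_inv_apply_eq_sub hτ
    rw [coe_inv] at hσ' hτ'
    rcases ZMod.eq_zero_or_eq_one (c x) with hx | hx <;> simp [hx, hσ', hτ']

section Interleave

variable {c : α → ZMod 2} {σ τ : Perm α} (hσ : ∀ x, c (σ x) = c x + 1)
  (hτ : ∀ x, c (τ x) = c x + 1)

theorem interleave_apply_of_eq_zero {x : α} (hx : c x = 0) : interleave c σ τ hσ hτ x = σ x :=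
  if_pos hx

theorem interleave_apply_of_eq_one {x : α} (hx : c x = 1) : interleave c σ τ hσ hτ x = τ x :=
  if_neg (by simp [hx])

theorem apply_interleave_apply (x : α) : c (interleave c σ τ hσ hτ x) = c x + 1 := by
  rcases ZMod.eq_zero_or_eq_one (c x) with hx | hx
  · rw [interleave_apply_of_eq_zero hσ hτ hx, hσ]
  · rw [interleave_apply_of_eq_one hσ hτ hx, hτ]

/-- `σ * τ` agrees with the square of the interleaving on colour `1`, and its inverse `τ * σ`
agrees with it on colour `0`. -/
theorem sameCycle_mul_iff_sameCycle_interleave_sq (hσ₂ : σ * σ = 1) (hτ₂ : τ * τ = 1)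
    {x y : α} : (σ * τ).SameCycle x y ↔ (interleave c σ τ hσ hτ ^ 2).SameCycle x y := by
  set π := interleave c σ τ hσ hτ
  have hπ : ∀ x, c (π x) = c x + 1 := apply_interleave_apply hσ hτ
  have mul_mem_iff {f g : Perm α} (hf : ∀ x, c (f x) = c x + 1) (hg : ∀ x, c (g x) = c x + 1)
      (x : α) : (f * g) x ∈ {x | c x = 1} ↔ x ∈ {x | c x = 1} := by
    simp [hf, hg, add_assoc, CharTwo.add_self_eq_zero]
  refine sameCycle_iff_of_eqOn_of_inv_eqOn_compl (mul_mem_iff hσ hτ) (sq π ▸ mul_mem_iff hπ hπ)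
    (fun x (hx : c x = 1) => ?_) (fun x (hx : c x ≠ 1) => ?_)
  · have hτx : c (τ x) = 0 := by rw [hτ, hx]; rfl
    rw [sq, mul_apply, mul_apply, interleave_apply_of_eq_one hσ hτ hx,
      interleave_apply_of_eq_zero hσ hτ hτx]
  · have hx₀ : c x = 0 := (ZMod.eq_zero_or_eq_one (c x)).resolve_right hx
    have hσx : c (σ x) = 1 := by rw [hσ, hx₀, zero_add]
    rw [mul_inv_rev, inv_eq_of_mul_eq_one_right hσ₂, inv_eq_of_mul_eq_one_right hτ₂, sq,
      mul_apply, mul_apply, interleave_apply_of_eq_zero hσ hτ hx₀,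
      interleave_apply_of_eq_one hσ hτ hσx]

end Interleave

end Equiv.Perm

theorem meander_permutation_cycles_general (α : ℕ) (πa πb : Equiv.Perm (Fin (2 * α)))
    (hainv : πa * πa = 1) (hbinv : πb * πb = 1)
    (hapar : ∀ k : Fin (2 * α), (πa k).val % 2 ≠ k.val % 2)
    (hbpar : ∀ k : Fin (2 * α), (πb k).val % 2 ≠ k.val % 2) :
    ∃ π : Equiv.Perm (Fin (2 * α)),
      (∀ k : Fin (2 * α), k.val % 2 = 0 → π k = πa k) ∧
      (∀ k : Fin (2 * α), k.val % 2 = 1 → π k = πb k) ∧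
      cycleCount (πa * πb) = 2 * cycleCount π := by
  let c : Fin (2 * α) → ZMod 2 := fun k => k.val
  have shift {σ : Equiv.Perm (Fin (2 * α))} (h : ∀ k : Fin (2 * α), (σ k).val % 2 ≠ k.val % 2)
      (k : Fin (2 * α)) : c (σ k) = c k + 1 :=
    ZMod.eq_add_one_of_ne ((ZMod.natCast_eq_natCast_iff' _ _ 2).not.2 (h k))
  have ha := shift hapar
  have hb := shift hbpar
  set π := Equiv.Perm.interleave c πa πb ha hb
  refine ⟨π, fun k hk => ?_, fun k hk => ?_, ?_⟩
  · exact Equiv.Perm.interleave_apply_of_eq_zero ha hb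
      (ZMod.natCast_eq_zero_iff_even.2 (Nat.even_iff.2 hk))
  · exact Equiv.Perm.interleave_apply_of_eq_one ha hb
      (ZMod.natCast_eq_one_iff_odd.2 (Nat.odd_iff.2 hk))
  calc cycleCount (πa * πb) = cycleCount (π ^ 2) :=
        Nat.card_congr (Quotient.congr (.refl _) fun _ _ =>
          Equiv.Perm.sameCycle_mul_iff_sameCycle_interleave_sq ha hb hainv hbinv)
    _ = 2 * cycleCount π :=
        Equiv.Perm.card_quotient_sameCycle_sq (Equiv.Perm.apply_interleave_apply ha hb)

/-- Let π^∧ and π^∨ be products of disjoint transpositions on {1,…,2α}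
(involutions without fixed points) mapping odd numbers to even numbers and vice
versa.  Here points are encoded by `Fin (2α)`, point `k` representing the number
`k+1`, so "odd" means `k.val % 2 = 0`.  Then the combination (upper partner on odd
points, lower partner on even points) is a permutation π, and the number of cycles
of π^∧ ∘ π^∨ is twice the number of cycles of π. -/
theorem meander_permutation_cycles (α : ℕ) (πa πb : Equiv.Perm (Fin (2 * α)))
    (hainv : πa * πa = 1) (hbinv : πb * πb = 1)
    (hafix : ∀ k, πa k ≠ k) (hbfix : ∀ k, πb k ≠ k)
    (hapar : ∀ k : Fin (2 * α), (πa k).val % 2 ≠ k.val % 2)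
    (hbpar : ∀ k : Fin (2 * α), (πb k).val % 2 ≠ k.val % 2) :
    ∃ π : Equiv.Perm (Fin (2 * α)),
      (∀ k : Fin (2 * α), k.val % 2 = 0 → π k = πa k) ∧
      (∀ k : Fin (2 * α), k.val % 2 = 1 → π k = πb k) ∧
      cycleCount (πa * πb) = 2 * cycleCount π :=
  meander_permutation_cycles_general α πa πb hainv hbinv hapar hbpar
end

section
/- Let RM(α₁,...,αₙ) be a bi-rainbow meander with α = α₁ + ... + αₙ, and let Z(α₁,...,αₙ) denote its number of connected components (Jordan curves). Then Z(α₁,...,αₙ) is congruent modulo 2 to half the number of odd entries in the list (α₁,...,αₙ,α). -/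
/-!
Number the odd points `2 i + 1` by `i : Fin α`. Leaving an odd point along its upper arc and
returning along the lower arc lands on another odd point; this defines `σ = ρ ∘ β` on `Fin α`,
where `β` reverses each of the consecutive blocks of sizes `α₁, …, αₙ` and `ρ` reverses all
of `Fin α`. The components of the meander are the cycles of `σ`. Reversing `m` points has
sign `(-1) ^ ⌊m/2⌋` and `sign σ = (-1) ^ (α - #cycles)`, so
`Z ≡ α + ⌊α/2⌋ + ∑ ⌊αᵢ/2⌋ (mod 2)`; with `α = 2 ∑ ⌊αᵢ/2⌋ + #{i | αᵢ odd}` this is the claim.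
-/

/-- Upper-arc partner of point `k ∈ {1,…,2·sum}` in a meander whose upper arcs
form consecutive rainbow families of the given sizes (1-indexed points). -/
def upperPartner : List ℕ → ℕ → ℕ
  | [], k => k
  | a :: rest, k => if k ≤ 2 * a then 2 * a + 1 - k else 2 * a + upperPartner rest (k - 2 * a)

/-- One step along the bi-rainbow meander: upper or lower partner. -/
def meanderRel (l : List ℕ) (x y : ℕ) : Prop :=
  y = upperPartner l x ∨ y = 2 * l.sum + 1 - x

/-- Connectivity relation on the points `{1,…,2α}` of the bi-rainbow meander `RM l`. -/
def meanderSetoid (l : List ℕ) : Setoid {k : ℕ // 1 ≤ k ∧ k ≤ 2 * l.sum} :=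
  ⟨fun a b => Relation.EqvGen (fun a b => meanderRel l a.1 b.1) a b,
    Relation.EqvGen.is_equivalence _⟩

/-- Number of connected components (Jordan curves) of the bi-rainbow meander `RM l`. -/
noncomputable def Z (l : List ℕ) : ℕ := Nat.card (Quotient (meanderSetoid l))

open Equiv Equiv.Perm

theorem Int.units_neg_one_pow_eq_neg_one_pow_iff {m n : ℕ} :
    (-1 : ℤˣ) ^ m = (-1) ^ n ↔ m % 2 = n % 2 := by
  rw [Int.units_pow_eq_pow_mod_two, Int.units_pow_eq_pow_mod_two (-1) n]
  rcases Nat.mod_two_eq_zero_or_one m with hm | hm <;>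
    rcases Nat.mod_two_eq_zero_or_one n with hn | hn <;> simp [hm, hn]

theorem List.sum_eq_two_mul_sum_div_two_add_countP (l : List ℕ) :
    l.sum = 2 * (l.map (· / 2)).sum + l.countP (· % 2 = 1) := by
  induction l with
  | nil => rfl
  | cons a l ih =>
    simp only [List.sum_cons, List.map_cons, List.countP_cons, ih, decide_eq_true_eq]
    split_ifs <;> omega

theorem Fin.card_fixedPoints_revPerm (n : ℕ) :
    Fintype.card (Function.fixedPoints (Fin.revPerm : Perm (Fin n))) = n % 2 := by
  have hfix (x : Fin n) : Function.IsFixedPt Fin.revPerm x ↔ 2 * (x : ℕ) + 1 = n := by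
    simp only [Function.IsFixedPt, Fin.revPerm_apply, Fin.ext_iff, Fin.val_rev]
    omega
  rcases Nat.even_or_odd' n with ⟨m, rfl | rfl⟩
  · rw [show 2 * m % 2 = 0 by omega, Fintype.card_eq_zero_iff]
    exact ⟨fun ⟨x, hx⟩ => by have := (hfix x).1 hx; omega⟩
  · rw [show (2 * m + 1) % 2 = 1 by omega, Fintype.card_eq_one_iff]
    refine ⟨⟨⟨m, by omega⟩, (hfix _).2 rfl⟩, fun ⟨x, hx⟩ => Subtype.ext <| Fin.ext ?_⟩
    have := (hfix x).1 hx
    show (x : ℕ) = m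
    omega

theorem Fin.sign_revPerm (n : ℕ) : sign (Fin.revPerm : Perm (Fin n)) = (-1) ^ (n / 2) := by
  rw [sign_of_pow_two_eq_one (by ext; simp [sq]), Fin.card_fixedPoints_revPerm,
    Fintype.card_fin, Int.units_neg_one_pow_eq_neg_one_pow_iff]
  omega

namespace Equiv.Perm

theorem SameCycle.rel_of_rel_apply {α β : Type*} {σ : Perm β} {s : Setoid α} {g : β → α}
    (hg : ∀ b, s (g (σ b)) (g b)) {a b : β} (h : σ.SameCycle a b) : s (g a) (g b) := by
  obtain ⟨n, rfl⟩ := h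
  induction n using Int.induction_on with
  | zero => exact s.refl _
  | succ n ih =>
    refine s.trans ih (s.symm ?_)
    rw [add_comm, zpow_one_add, Perm.mul_apply]
    exact hg _
  | pred n ih =>
    refine s.trans ih ?_
    have := hg ((σ ^ (-(n : ℤ) - 1)) a)
    rwa [← Perm.mul_apply, ← zpow_one_add, show 1 + (-(n : ℤ) - 1) = -n by ring] at this

variable {α : Type*} [Fintype α] [DecidableEq α] (σ : Perm α)

def fixedPointOrCycleFactor (x : α) : Function.fixedPoints σ ⊕ σ.cycleFactorsFinset :=
  if h : σ x = x then .inl ⟨x, h⟩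
  else .inr ⟨σ.cycleOf x, cycleOf_mem_cycleFactorsFinset_iff.2 (mem_support.2 h)⟩

variable {σ} in
theorem fixedPointOrCycleFactor_eq_iff {x y : α} :
    σ.fixedPointOrCycleFactor x = σ.fixedPointOrCycleFactor y ↔ σ.SameCycle x y := by
  unfold fixedPointOrCycleFactor
  by_cases hx : σ x = x <;> by_cases hy : σ y = y <;>
    simp only [hx, hy, dite_true, dite_false, reduceCtorEq, false_iff, Sum.inl.injEq,
      Sum.inr.injEq, Subtype.ext_iff]
  · exact ⟨fun h => h ▸ SameCycle.rfl, fun h => h.eq_of_left hx⟩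
  · exact fun h => hy (h.apply_eq_self_iff.1 hx)
  · exact fun h => hx (h.apply_eq_self_iff.2 hy)
  · exact (sameCycle_iff_cycleOf_eq_of_mem_support (mem_support.2 hx) (mem_support.2 hy)).symm

noncomputable def quotientSameCycleEquiv :
    Quotient (SameCycle.setoid σ) ≃ Function.fixedPoints σ ⊕ σ.cycleFactorsFinset := by
  refine .ofBijective (Quotient.lift σ.fixedPointOrCycleFactor
    fun _ _ => fixedPointOrCycleFactor_eq_iff.2) ⟨fun p q => ?_, ?_⟩
  · exact Quotient.inductionOn₂ p q fun _ _ h =>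
      Quotient.sound (fixedPointOrCycleFactor_eq_iff.1 h)
  rintro (⟨x, hx⟩ | ⟨c, hc⟩)
  · exact ⟨⟦x⟧, by simp [fixedPointOrCycleFactor, hx.eq]⟩
  · obtain ⟨x, hx⟩ := (mem_cycleFactorsFinset_iff.1 hc).1.nonempty_support
    have hxσ : σ x ≠ x := mem_support.1 (mem_cycleFactorsFinset_support_le hc hx)
    exact ⟨⟦x⟧, by simp [fixedPointOrCycleFactor, hxσ, cycle_is_cycleOf hx hc]⟩

theorem card_quotient_sameCycle :
    Nat.card (Quotient (SameCycle.setoid σ)) =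
      Fintype.card (Function.fixedPoints σ) + σ.cycleType.card := by
  rw [Nat.card_congr σ.quotientSameCycleEquiv, Nat.card_sum, Nat.card_eq_fintype_card,
    Nat.card_eq_fintype_card, Fintype.card_coe, cycleType_def, Multiset.card_map]
  rfl

theorem sign_eq_neg_one_pow_card_add_card_quotient_sameCycle :
    sign σ = (-1) ^ (Fintype.card α + Nat.card (Quotient (SameCycle.setoid σ))) := by
  rw [sign_of_cycleType, card_quotient_sameCycle, card_fixedPoints,
    Int.units_neg_one_pow_eq_neg_one_pow_iff]
  have := σ.sum_cycleType_le
  omega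

end Equiv.Perm

def blockRevPerm : (l : List ℕ) → Perm (Fin l.sum)
  | [] => 1
  | a :: l => finSumFinEquiv.permCongr ((Fin.revPerm : Perm (Fin a)).sumCongr (blockRevPerm l))

theorem blockRevPerm_symm (l : List ℕ) : (blockRevPerm l).symm = blockRevPerm l := by
  induction l with
  | nil => rfl
  | cons a l ih =>
    change finSumFinEquiv.permCongr (Fin.revPerm.sumCongr (blockRevPerm l)).symm = _
    rw [Perm.sumCongr_symm, Fin.revPerm_symm, ih]
    rfl

theorem blockRevPerm_blockRevPerm (l : List ℕ) (i : Fin l.sum) :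
    blockRevPerm l (blockRevPerm l i) = i := by
  simpa only [blockRevPerm_symm] using (blockRevPerm l).symm_apply_apply i

theorem sign_blockRevPerm (l : List ℕ) :
    sign (blockRevPerm l) = (-1) ^ (l.map (· / 2)).sum := by
  induction l with
  | nil => rfl
  | cons a l ih =>
    change sign (finSumFinEquiv.permCongr (Fin.revPerm.sumCongr (blockRevPerm l))) = _
    rw [sign_permCongr, sign_sumCongr, Fin.sign_revPerm, ih, List.map_cons,
      List.sum_cons, pow_add]

theorem upperPartner_two_mul_add (l : List ℕ) (i : Fin l.sum) {r : ℕ} (hr₁ : 1 ≤ r)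
    (hr₂ : r ≤ 2) : upperPartner l (2 * i + r) = 2 * blockRevPerm l i + 3 - r := by
  induction l with
  | nil => exact i.elim0
  | cons a l ih =>
    change upperPartner (a :: l) (2 * (i : Fin (a + l.sum)) + r) =
      2 * (finSumFinEquiv.permCongr (Fin.revPerm.sumCongr (blockRevPerm l)) i : Fin (a + l.sum))
        + 3 - r
    obtain ⟨j | j, rfl⟩ := (finSumFinEquiv (m := a) (n := l.sum)).surjective i
    · rw [upperPartner,
        if_pos (by simp only [finSumFinEquiv_apply_left, Fin.val_castAdd]; omega)]
      simp only [permCongr_apply, finSumFinEquiv_symm_apply_castAdd, Perm.sumCongr_apply,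
        Sum.map_inl, finSumFinEquiv_apply_left, Fin.val_castAdd, Fin.revPerm_apply, Fin.val_rev]
      omega
    · rw [upperPartner,
        if_neg (by simp only [finSumFinEquiv_apply_right, Fin.val_natAdd]; omega)]
      simp only [permCongr_apply, finSumFinEquiv_symm_apply_natAdd, Perm.sumCongr_apply,
        Sum.map_inr, finSumFinEquiv_apply_right, Fin.val_natAdd]
      rw [show 2 * (a + j) + r - 2 * a = 2 * j + r by omega, ih]
      omega

def meanderPerm (l : List ℕ) : Perm (Fin l.sum) := Fin.revPerm * blockRevPerm l

abbrev MeanderPoint (l : List ℕ) : Type := {k : ℕ // 1 ≤ k ∧ k ≤ 2 * l.sum}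

section Components

variable {l : List ℕ}

/-- The index of the odd endpoint of the lower arc through `x`. -/
def lowerArcIndex (x : MeanderPoint l) : Fin l.sum :=
  let i : Fin l.sum := ⟨(x.1 - 1) / 2, by omega⟩
  if x.1 % 2 = 1 then i else i.rev

theorem lowerArcIndex_of_eq_two_mul_add_one {x : MeanderPoint l} (i : Fin l.sum)
    (hx : x.1 = 2 * i + 1) : lowerArcIndex x = i := by
  simp only [lowerArcIndex, hx, if_pos (show (2 * (i : ℕ) + 1) % 2 = 1 by omega)]
  ext; simp

theorem lowerArcIndex_of_eq_two_mul_add_two {x : MeanderPoint l} (i : Fin l.sum)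
    (hx : x.1 = 2 * i + 2) : lowerArcIndex x = i.rev := by
  simp only [lowerArcIndex, hx, if_neg (show ¬ (2 * (i : ℕ) + 2) % 2 = 1 by omega)]
  congr 1
  ext
  simp only [Nat.add_one_sub_one]
  omega

theorem exists_eq_two_mul_add (x : MeanderPoint l) :
    ∃ i : Fin l.sum, x.1 = 2 * i + 1 ∨ x.1 = 2 * i + 2 :=
  ⟨⟨(x.1 - 1) / 2, by omega⟩, by simp only; omega⟩

theorem sameCycle_lowerArcIndex_of_meanderRel {x y : MeanderPoint l}
    (h : meanderRel l x y) : (meanderPerm l).SameCycle (lowerArcIndex x) (lowerArcIndex y) := by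
  obtain ⟨i, hx | hx⟩ := exists_eq_two_mul_add x <;> rcases h with hy | hy <;> rw [hx] at hy
  · rw [upperPartner_two_mul_add l i le_rfl one_le_two] at hy
    rw [lowerArcIndex_of_eq_two_mul_add_one i hx,
      lowerArcIndex_of_eq_two_mul_add_two (blockRevPerm l i) (by omega)]
    exact sameCycle_apply_right.2 SameCycle.rfl
  · rw [lowerArcIndex_of_eq_two_mul_add_one i hx,
      lowerArcIndex_of_eq_two_mul_add_two i.rev (by simp only [Fin.val_rev]; omega), Fin.rev_rev]
  · rw [upperPartner_two_mul_add l i one_le_two le_rfl] at hy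
    rw [lowerArcIndex_of_eq_two_mul_add_two i hx,
      lowerArcIndex_of_eq_two_mul_add_one (blockRevPerm l i) (by omega)]
    have hσ : meanderPerm l (blockRevPerm l i) = i.rev := by
      rw [meanderPerm, Perm.mul_apply, blockRevPerm_blockRevPerm, Fin.revPerm_apply]
    rw [← hσ]
    exact sameCycle_apply_left.2 SameCycle.rfl
  · rw [lowerArcIndex_of_eq_two_mul_add_two i hx,
      lowerArcIndex_of_eq_two_mul_add_one i.rev (by simp only [Fin.val_rev]; omega)]

theorem sameCycle_lowerArcIndex {x y : MeanderPoint l} (h : meanderSetoid l x y) :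
    (meanderPerm l).SameCycle (lowerArcIndex x) (lowerArcIndex y) :=
  Setoid.eqvGen_le (s := Setoid.comap lowerArcIndex (SameCycle.setoid (meanderPerm l)))
    (fun _ _ => sameCycle_lowerArcIndex_of_meanderRel) h

def oddPoint (i : Fin l.sum) : MeanderPoint l :=
  ⟨2 * i + 1, by omega⟩

theorem lowerArcIndex_oddPoint (i : Fin l.sum) : lowerArcIndex (oddPoint i) = i :=
  lowerArcIndex_of_eq_two_mul_add_one i rfl

theorem meanderSetoid_oddPoint_lowerArcIndex (x : MeanderPoint l) :
    meanderSetoid l (oddPoint (lowerArcIndex x)) x := by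
  obtain ⟨i, hx | hx⟩ := exists_eq_two_mul_add x
  · rw [lowerArcIndex_of_eq_two_mul_add_one i hx, show oddPoint i = x from Subtype.ext hx.symm]
  · rw [lowerArcIndex_of_eq_two_mul_add_two i hx]
    refine Relation.EqvGen.rel _ _ (Or.inr ?_)
    simp only [oddPoint, Fin.val_rev]
    omega

theorem meanderSetoid_oddPoint_meanderPerm (i : Fin l.sum) :
    meanderSetoid l (oddPoint (meanderPerm l i)) (oddPoint i) := by
  have hup := upperPartner_two_mul_add l i le_rfl one_le_two
  let y : MeanderPoint l := ⟨2 * blockRevPerm l i + 2, by omega⟩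
  have hupper : meanderRel l (oddPoint i) y := Or.inl (by simp only [oddPoint, y, hup]; omega)
  have hlower : meanderRel l y (oddPoint (meanderPerm l i)) := Or.inr <| by
    simp only [oddPoint, y, meanderPerm, Perm.mul_apply, Fin.revPerm_apply, Fin.val_rev]
    omega
  exact .symm _ _ (.trans _ _ _ (.rel _ _ hupper) (.rel _ _ hlower))

def meanderComponentsEquiv :
    Quotient (meanderSetoid l) ≃ Quotient (SameCycle.setoid (meanderPerm l)) where
  toFun := Quotient.map lowerArcIndex fun _ _ => sameCycle_lowerArcIndex
  invFun := Quotient.map oddPoint fun _ _ =>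
    SameCycle.rel_of_rel_apply meanderSetoid_oddPoint_meanderPerm
  left_inv := Quotient.ind fun x => Quotient.sound (meanderSetoid_oddPoint_lowerArcIndex x)
  right_inv := Quotient.ind fun i => congrArg _ (lowerArcIndex_oddPoint i)

end Components

theorem sign_meanderPerm (l : List ℕ) :
    sign (meanderPerm l) = (-1) ^ (l.sum / 2 + (l.map (· / 2)).sum) := by
  rw [meanderPerm, map_mul, Fin.sign_revPerm, sign_blockRevPerm, pow_add]

theorem Z_parity_general (l : List ℕ) :
    Z l % 2 = ((l.sum :: l).countP (fun x => x % 2 = 1) / 2) % 2 := by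
  have hZ : Z l = Nat.card (Quotient (SameCycle.setoid (meanderPerm l))) :=
    Nat.card_congr meanderComponentsEquiv
  have hsign := (meanderPerm l).sign_eq_neg_one_pow_card_add_card_quotient_sameCycle
  rw [sign_meanderPerm, Fintype.card_fin, ← hZ,
    Int.units_neg_one_pow_eq_neg_one_pow_iff] at hsign
  have hsum := l.sum_eq_two_mul_sum_div_two_add_countP
  simp only [List.countP_cons, decide_eq_true_eq]
  split_ifs <;> omega

/-- Parity of the number of connected components of a bi-rainbow meander:
`Z(α₁,…,αₙ)` is congruent mod 2 to half the number of odd entries in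
`(α₁,…,αₙ, α)`, where `α = α₁+⋯+αₙ`. -/
theorem Z_parity (l : List ℕ) (hpos : ∀ x ∈ l, 0 < x) (hne : l ≠ []) :
    Z l % 2 = ((l.sum :: l).countP (fun x => x % 2 = 1) / 2) % 2 :=
  Z_parity_general l
end

section
/- If the bi-rainbow meander RM(α₁,...,αₙ) is connected, i.e., Z(α₁,...,αₙ) = 1, then exactly one or exactly two of the entries α₁,...,αₙ are odd. -/
namespace MeanderAux

/-- Blockwise reflection on `{1,…,l.sum}`. -/
def lowerBeta : List ℕ → ℕ → ℕ
  | [], k => k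
  | a :: rest, k => if k ≤ a then a + 1 - k else a + lowerBeta rest (k - a)

lemma lowerBeta_spec (l : List ℕ) :
    ∀ k, 1 ≤ k → k ≤ l.sum →
      1 ≤ lowerBeta l k ∧ lowerBeta l k ≤ l.sum ∧ lowerBeta l (lowerBeta l k) = k := by
  induction l with
  | nil => intro k h1 h2; simp only [List.sum_nil] at h2; omega
  | cons a rest ih =>
    intro k h1 h2
    simp only [List.sum_cons] at h2 ⊢
    by_cases h : k ≤ a
    · rw [lowerBeta, if_pos h, lowerBeta, if_pos (by omega : a + 1 - k ≤ a)]
      omega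
    · obtain ⟨r1, r2, r3⟩ := ih (k - a) (by omega) (by omega)
      rw [lowerBeta, if_neg h, lowerBeta, if_neg (by omega : ¬ (a + lowerBeta rest (k - a) ≤ a)),
        (by omega : a + lowerBeta rest (k - a) - a = lowerBeta rest (k - a)), r3]
      omega

lemma upperPartner_proj (l : List ℕ) :
    ∀ k, 1 ≤ k → k ≤ 2 * l.sum →
      (upperPartner l k + 1) / 2 = lowerBeta l ((k + 1) / 2) := by
  induction l with
  | nil => intro k h1 h2; simp only [List.sum_nil] at h2; omega
  | cons a rest ih =>
    intro k h1 h2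
    simp only [List.sum_cons] at h2
    by_cases h : k ≤ 2 * a
    · rw [upperPartner, if_pos h, lowerBeta, if_pos (by omega : (k + 1) / 2 ≤ a)]
      omega
    · have hrec := ih (k - 2 * a) (by omega) (by omega)
      rw [upperPartner, if_neg h, lowerBeta, if_neg (by omega : ¬ ((k + 1) / 2 ≤ a)),
        (by omega : (k + 1) / 2 - a = (k - 2 * a + 1) / 2), ← hrec]
      omega

lemma upperPartner_mod4 (l : List ℕ) (hev : ∀ x ∈ l, x % 2 = 0) :
    ∀ k, 1 ≤ k → k ≤ 2 * l.sum → (upperPartner l k + k) % 4 = 1 := by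
  induction l with
  | nil => intro k h1 h2; simp only [List.sum_nil] at h2; omega
  | cons a rest ih =>
    intro k h1 h2
    have ha : a % 2 = 0 := hev a (by simp)
    simp only [List.sum_cons] at h2
    by_cases h : k ≤ 2 * a
    · rw [upperPartner, if_pos h]; omega
    · have hrec := ih (fun x hx => hev x (by simp [hx])) (k - 2 * a) (by omega) (by omega)
      rw [upperPartner, if_neg h]
      omega

lemma sum_even (l : List ℕ) (hev : ∀ x ∈ l, x % 2 = 0) : l.sum % 2 = 0 := by
  induction l with
  | nil => simp
  | cons a rest ih =>
    have h1 := hev a (by simp)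
    have h2 := ih (fun x hx => hev x (by simp [hx]))
    simp only [List.sum_cons]
    omega

lemma exists_fixed_finset (l : List ℕ) :
    ∃ S : Finset ℕ, S.card = l.countP (fun x => x % 2 = 1) ∧
      ∀ x ∈ S, 1 ≤ x ∧ x ≤ l.sum ∧ lowerBeta l x = x := by
  induction l with
  | nil => exact ⟨∅, by simp, by simp⟩
  | cons a rest ih =>
    obtain ⟨S, hcard, hmem⟩ := ih
    by_cases ha : a % 2 = 1
    · have hnm : (a + 1) / 2 ∉ S.image (· + a) := by
        intro hmem'
        simp only [Finset.mem_image] at hmem'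
        obtain ⟨x, hx, he⟩ := hmem'
        have := (hmem x hx).1
        omega
      refine ⟨insert ((a + 1) / 2) (S.image (· + a)), ?_, ?_⟩
      · rw [Finset.card_insert_of_notMem hnm,
          Finset.card_image_of_injective _ (add_left_injective a), hcard, List.countP_cons]
        simp [ha]
      · intro x hx
        simp only [Finset.mem_insert, Finset.mem_image] at hx
        rcases hx with h | ⟨y, hy, rfl⟩
        · subst h
          refine ⟨by omega, by simp only [List.sum_cons]; omega, ?_⟩
          rw [lowerBeta, if_pos (by omega : (a + 1) / 2 ≤ a)]
          omega
        · obtain ⟨hy1, hy2, hy3⟩ := hmem y hy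
          refine ⟨by omega, by simp only [List.sum_cons]; omega, ?_⟩
          rw [lowerBeta, if_neg (by omega : ¬ (y + a ≤ a)),
            (by omega : y + a - a = y), hy3]
          omega
    · refine ⟨S.image (· + a), ?_, ?_⟩
      · rw [Finset.card_image_of_injective _ (add_left_injective a), hcard, List.countP_cons]
        simp [ha]
      · intro x hx
        simp only [Finset.mem_image] at hx
        obtain ⟨y, hy, rfl⟩ := hx
        obtain ⟨hy1, hy2, hy3⟩ := hmem y hy
        refine ⟨by omega, by simp only [List.sum_cons]; omega, ?_⟩
        rw [lowerBeta, if_neg (by omega : ¬ (y + a ≤ a)),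
          (by omega : y + a - a = y), hy3]
        omega

/-- `ρ ∘ β` where `ρ j = sum + 1 - j` is the lower reflection. -/
def TT (l : List ℕ) (x : ℕ) : ℕ := l.sum + 1 - lowerBeta l x

/-- `β ∘ ρ`. -/
def TT' (l : List ℕ) (x : ℕ) : ℕ := lowerBeta l (l.sum + 1 - x)

lemma TT_def (l : List ℕ) (x : ℕ) : TT l x = l.sum + 1 - lowerBeta l x := rfl

lemma TT'_def (l : List ℕ) (x : ℕ) : TT' l x = lowerBeta l (l.sum + 1 - x) := rfl

lemma beta_comm (l : List ℕ) : ∀ (t : ℕ) (x : ℕ),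
    lowerBeta l ((TT l)^[t] x) = (TT' l)^[t] (lowerBeta l x) := by
  intro t
  induction t with
  | zero => intro x; simp
  | succ u ih =>
    intro x
    rw [Function.iterate_succ_apply', Function.iterate_succ_apply', ← ih]
    rfl

lemma rho_comm (l : List ℕ) : ∀ (t : ℕ) (x : ℕ),
    l.sum + 1 - (TT' l)^[t] x = (TT l)^[t] (l.sum + 1 - x) := by
  intro t
  induction t with
  | zero => intro x; simp
  | succ u ih =>
    intro x
    rw [Function.iterate_succ_apply', Function.iterate_succ_apply', ← ih]
    rfl

lemma TT_range (l : List ℕ) {x : ℕ} (h1 : 1 ≤ x) (h2 : x ≤ l.sum) :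
    1 ≤ TT l x ∧ TT l x ≤ l.sum := by
  obtain ⟨r1, r2, _⟩ := lowerBeta_spec l x h1 h2
  rw [TT_def]; omega

lemma TT'_range (l : List ℕ) {x : ℕ} (h1 : 1 ≤ x) (h2 : x ≤ l.sum) :
    1 ≤ TT' l x ∧ TT' l x ≤ l.sum := by
  obtain ⟨r1, r2, _⟩ := lowerBeta_spec l (l.sum + 1 - x) (by omega) (by omega)
  rw [TT'_def]; omega

lemma iterTT_range (l : List ℕ) {x : ℕ} (h1 : 1 ≤ x) (h2 : x ≤ l.sum) (t : ℕ) :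
    1 ≤ (TT l)^[t] x ∧ (TT l)^[t] x ≤ l.sum := by
  induction t with
  | zero => simpa using ⟨h1, h2⟩
  | succ u ih =>
    rw [Function.iterate_succ_apply']
    exact TT_range l ih.1 ih.2

lemma iterTT'_range (l : List ℕ) {x : ℕ} (h1 : 1 ≤ x) (h2 : x ≤ l.sum) (t : ℕ) :
    1 ≤ (TT' l)^[t] x ∧ (TT' l)^[t] x ≤ l.sum := by
  induction t with
  | zero => simpa using ⟨h1, h2⟩
  | succ u ih =>
    rw [Function.iterate_succ_apply']
    exact TT'_range l ih.1 ih.2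

lemma TT_TT' (l : List ℕ) {x : ℕ} (h1 : 1 ≤ x) (h2 : x ≤ l.sum) :
    TT l (TT' l x) = x := by
  obtain ⟨r1, r2, r3⟩ := lowerBeta_spec l (l.sum + 1 - x) (by omega) (by omega)
  rw [TT_def, TT'_def, r3]
  omega

lemma iter_cancel (l : List ℕ) : ∀ (t : ℕ) {x : ℕ}, 1 ≤ x → x ≤ l.sum →
    (TT l)^[t] ((TT' l)^[t] x) = x := by
  intro t
  induction t with
  | zero => intro x h1 h2; simp
  | succ u ih =>
    intro x h1 h2
    rw [Function.iterate_succ_apply' (TT' l), Function.iterate_succ_apply (TT l),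
      TT_TT' l (iterTT'_range l h1 h2 u).1 (iterTT'_range l h1 h2 u).2, ih h1 h2]

/-- Orbit membership for the `⟨β, ρ⟩`-orbit of `a`. -/
def inO (l : List ℕ) (a x : ℕ) : Prop :=
  ∃ t : ℕ, x = (TT l)^[t] a ∨ x = (TT' l)^[t] a

section Orbit

variable (l : List ℕ) {a : ℕ}

lemma O_beta (ha1 : 1 ≤ a) (ha2 : a ≤ l.sum) (hfix : lowerBeta l a = a)
    {x : ℕ} (hx : inO l a x) : inO l a (lowerBeta l x) := by
  obtain ⟨t, ht | ht⟩ := hx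
  · subst ht
    exact ⟨t, Or.inr (by rw [beta_comm, hfix])⟩
  · subst ht
    cases t with
    | zero => exact ⟨0, Or.inl (by simpa using hfix)⟩
    | succ u =>
      refine ⟨u + 1, Or.inl ?_⟩
      have hr := iterTT'_range l ha1 ha2 u
      have hspec := lowerBeta_spec l (l.sum + 1 - (TT' l)^[u] a) (by omega) (by omega)
      rw [Function.iterate_succ_apply' (TT' l), TT'_def, hspec.2.2, rho_comm,
        (by rw [TT_def, hfix] : l.sum + 1 - a = TT l a), ← Function.iterate_succ_apply]

lemma O_rho (ha1 : 1 ≤ a) (ha2 : a ≤ l.sum) (hfix : lowerBeta l a = a)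
    {x : ℕ} (hx : inO l a x) : inO l a (l.sum + 1 - x) := by
  obtain ⟨t, ht | ht⟩ := hx
  · subst ht
    cases t with
    | zero =>
      refine ⟨1, Or.inl ?_⟩
      simp only [Function.iterate_zero_apply, Function.iterate_one]
      rw [TT_def, hfix]
    | succ u =>
      refine ⟨u, Or.inr ?_⟩
      have hr := iterTT_range l ha1 ha2 u
      have hw := lowerBeta_spec l ((TT l)^[u] a) hr.1 hr.2
      have hbc : lowerBeta l ((TT l)^[u] a) = (TT' l)^[u] a := by
        rw [beta_comm, hfix]
      rw [Function.iterate_succ_apply' (TT l), TT_def]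
      omega
  · subst ht
    refine ⟨t + 1, Or.inl ?_⟩
    rw [rho_comm, (by rw [TT_def, hfix] : l.sum + 1 - a = TT l a),
      ← Function.iterate_succ_apply]

lemma O_step (ha1 : 1 ≤ a) (ha2 : a ≤ l.sum) (hfix : lowerBeta l a = a)
    {x y : ℕ} (hx1 : 1 ≤ x) (hx2 : x ≤ l.sum) (hy1 : 1 ≤ y) (hy2 : y ≤ l.sum)
    (h : y = lowerBeta l x ∨ y = l.sum + 1 - x) : inO l a x ↔ inO l a y := by
  constructor
  · intro hox
    rcases h with rfl | rfl
    · exact O_beta l ha1 ha2 hfix hox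
    · exact O_rho l ha1 ha2 hfix hox
  · intro hoy
    rcases h with he | he
    · have hxe : x = lowerBeta l y := by
        rw [he, (lowerBeta_spec l x hx1 hx2).2.2]
      rw [hxe]
      exact O_beta l ha1 ha2 hfix hoy
    · have hxe : x = l.sum + 1 - y := by omega
      rw [hxe]
      exact O_rho l ha1 ha2 hfix hoy

end Orbit

/-- The relation on `{1,…,l.sum}` induced by projecting the meander relation. -/
def projRel (l : List ℕ) (x y : ℕ) : Prop :=
  (1 ≤ x ∧ x ≤ l.sum) ∧ (1 ≤ y ∧ y ≤ l.sum) ∧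
    (y = lowerBeta l x ∨ y = l.sum + 1 - x)

lemma project (l : List ℕ) (x y : {k : ℕ // 1 ≤ k ∧ k ≤ 2 * l.sum})
    (h : Relation.EqvGen (fun a b => meanderRel l a.1 b.1) x y) :
    Relation.EqvGen (projRel l) ((x.1 + 1) / 2) ((y.1 + 1) / 2) := by
  induction h with
  | rel x y h =>
    apply Relation.EqvGen.rel
    have h' : y.1 = upperPartner l x.1 ∨ y.1 = 2 * l.sum + 1 - x.1 := h
    have hx := x.2
    have hy := y.2
    refine ⟨⟨by omega, by omega⟩, ⟨by omega, by omega⟩, ?_⟩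
    rcases h' with he | he
    · left
      rw [he, upperPartner_proj l x.1 hx.1 hx.2]
    · right
      omega
  | refl x => exact Relation.EqvGen.refl _
  | symm x y _ ih => exact Relation.EqvGen.symm _ _ ih
  | trans x y z _ _ ih1 ih2 => exact Relation.EqvGen.trans _ _ _ ih1 ih2

lemma O_eqvGen (l : List ℕ) {a : ℕ} (ha1 : 1 ≤ a) (ha2 : a ≤ l.sum)
    (hfix : lowerBeta l a = a) {x y : ℕ} (h : Relation.EqvGen (projRel l) x y) :
    inO l a x ↔ inO l a y := by
  induction h with
  | rel x y h => exact O_step l ha1 ha2 hfix h.1.1 h.1.2 h.2.1.1 h.2.1.2 h.2.2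
  | refl x => exact Iff.rfl
  | symm x y _ ih => exact ih.symm
  | trans x y z _ _ ih1 ih2 => exact ih1.trans ih2

lemma iter_mul_fix (l : List ℕ) {a p : ℕ} (hp : (TT l)^[p] a = a) :
    ∀ q : ℕ, (TT l)^[q * p] a = a := by
  intro q
  induction q with
  | zero => simp
  | succ u ih =>
    rw [Nat.succ_mul, Function.iterate_add_apply, hp, ih]

/-- In a connected meander, `lowerBeta` cannot have three distinct fixed points. -/
lemma two_fixed (l : List ℕ)
    (hconn : ∀ x y : {k : ℕ // 1 ≤ k ∧ k ≤ 2 * l.sum},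
      Relation.EqvGen (fun a b => meanderRel l a.1 b.1) x y)
    (f1 f2 f3 : ℕ)
    (h1 : 1 ≤ f1 ∧ f1 ≤ l.sum ∧ lowerBeta l f1 = f1)
    (h2 : 1 ≤ f2 ∧ f2 ≤ l.sum ∧ lowerBeta l f2 = f2)
    (h3 : 1 ≤ f3 ∧ f3 ≤ l.sum ∧ lowerBeta l f3 = f3)
    (h12 : f1 ≠ f2) (h13 : f1 ≠ f3) (h23 : f2 ≠ f3) : False := by
  obtain ⟨ha1, ha2, hafix⟩ := h1
  have key : ∀ b : ℕ, 1 ≤ b → b ≤ l.sum → lowerBeta l b = b →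
      ∃ t : ℕ, b = (TT l)^[t] f1 ∧ (TT l)^[2 * t] f1 = f1 := by
    intro b hb1 hb2 hbfix
    have hreach : inO l f1 b := by
      have hx : 1 ≤ 2 * f1 - 1 ∧ 2 * f1 - 1 ≤ 2 * l.sum := by omega
      have hy : 1 ≤ 2 * b - 1 ∧ 2 * b - 1 ≤ 2 * l.sum := by omega
      have hE := hconn ⟨2 * f1 - 1, hx⟩ ⟨2 * b - 1, hy⟩
      have hP : Relation.EqvGen (projRel l) ((2 * f1 - 1 + 1) / 2) ((2 * b - 1 + 1) / 2) :=
        project l _ _ hE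
      rw [(by omega : (2 * f1 - 1 + 1) / 2 = f1), (by omega : (2 * b - 1 + 1) / 2 = b)] at hP
      exact (O_eqvGen l ha1 ha2 hafix hP).mp ⟨0, Or.inl rfl⟩
    obtain ⟨t, ht⟩ : ∃ t, b = (TT l)^[t] f1 := by
      obtain ⟨t, ht | ht⟩ := hreach
      · exact ⟨t, ht⟩
      · refine ⟨t, ?_⟩
        have hb' : b = lowerBeta l ((TT l)^[t] f1) := by
          rw [beta_comm, hafix]; exact ht
        have hr := iterTT_range l ha1 ha2 t
        have hspec := (lowerBeta_spec l ((TT l)^[t] f1) hr.1 hr.2).2.2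
        calc b = lowerBeta l b := hbfix.symm
          _ = lowerBeta l (lowerBeta l ((TT l)^[t] f1)) := by rw [← hb']
          _ = (TT l)^[t] f1 := hspec
    have hb2' : (TT' l)^[t] f1 = b := by
      rw [← hafix, ← beta_comm, ← ht]
      exact hbfix
    refine ⟨t, ht, ?_⟩
    calc (TT l)^[2 * t] f1 = (TT l)^[t] ((TT l)^[t] f1) := by
          rw [two_mul, Function.iterate_add_apply]
      _ = (TT l)^[t] ((TT' l)^[t] f1) := by rw [← ht, hb2']
      _ = f1 := iter_cancel l t ha1 ha2
  obtain ⟨t2, ht2, hper2⟩ := key f2 h2.1 h2.2.1 h2.2.2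
  obtain ⟨t3, ht3, hper3⟩ := key f3 h3.1 h3.2.1 h3.2.2
  have ht2pos : 0 < t2 := by
    rcases Nat.eq_zero_or_pos t2 with h0 | h
    · rw [h0] at ht2
      simp only [Function.iterate_zero_apply] at ht2
      exact absurd ht2.symm h12
    · exact h
  have ht3pos : 0 < t3 := by
    rcases Nat.eq_zero_or_pos t3 with h0 | h
    · rw [h0] at ht3
      simp only [Function.iterate_zero_apply] at ht3
      exact absurd ht3.symm h13
    · exact h
  have hEx : ∃ t, 0 < t ∧ (TT l)^[t] f1 = f1 := ⟨2 * t2, by omega, hper2⟩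
  have hpspec := Nat.find_spec hEx
  set p := Nat.find hEx with hpdef
  have hdiv : ∀ t, (TT l)^[t] f1 = f1 → p ∣ t := by
    intro t ht
    have hmod : (TT l)^[t % p] f1 = f1 := by
      have hsplit : t % p + p * (t / p) = t := Nat.mod_add_div t p
      have hh : (TT l)^[t % p + p * (t / p)] f1 = f1 := by rw [hsplit]; exact ht
      rwa [Function.iterate_add_apply, (by rw [Nat.mul_comm] : p * (t / p) = t / p * p),
        iter_mul_fix l hpspec.2 (t / p)] at hh
    rcases Nat.eq_zero_or_pos (t % p) with h0 | hposm
    · exact Nat.dvd_of_mod_eq_zero h0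
    · exact absurd (⟨hposm, hmod⟩ : 0 < t % p ∧ (TT l)^[t % p] f1 = f1)
        (Nat.find_min hEx (Nat.mod_lt t hpspec.1))
  have reduce : ∀ (t b : ℕ), b = (TT l)^[t] f1 → b = (TT l)^[t % p] f1 := by
    intro t b hb
    calc b = (TT l)^[t] f1 := hb
      _ = (TT l)^[t % p + p * (t / p)] f1 := by rw [Nat.mod_add_div]
      _ = (TT l)^[t % p] f1 := by
          rw [Function.iterate_add_apply, (by rw [Nat.mul_comm] : p * (t / p) = t / p * p),
            iter_mul_fix l hpspec.2 (t / p)]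
  have half : ∀ (t b : ℕ), 0 < t → b = (TT l)^[t] f1 → b ≠ f1 →
      (TT l)^[2 * t] f1 = f1 → 2 * (t % p) = p := by
    intro t b htpos hb hbne hper
    have hd2 : p ∣ 2 * t := hdiv _ hper
    have hnd : ¬ p ∣ t := by
      rintro ⟨q, hq⟩
      have hfixt : (TT l)^[t] f1 = f1 := by
        rw [hq, Nat.mul_comm p q]
        exact iter_mul_fix l hpspec.2 q
      exact hbne (hb.trans hfixt)
    have hvpos : 0 < t % p := by
      rcases Nat.eq_zero_or_pos (t % p) with h0 | h
      · exact absurd (Nat.dvd_of_mod_eq_zero h0) hnd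
      · exact h
    have hvlt : t % p < p := Nat.mod_lt t hpspec.1
    obtain ⟨k, hk⟩ := hd2
    have hqv : t % p + p * (t / p) = t := Nat.mod_add_div t p
    have e : p * k = 2 * (p * (t / p)) + 2 * (t % p) := by linarith
    rcases lt_trichotomy k (2 * (t / p) + 1) with hlt | heq | hgt
    · have hle : p * k ≤ p * (2 * (t / p)) := Nat.mul_le_mul (le_refl p) (by omega)
      have hr : p * (2 * (t / p)) = 2 * (p * (t / p)) := by ring
      linarith
    · have hr : p * k = 2 * (p * (t / p)) + p := by rw [heq]; ring
      linarith
    · have hle : p * (2 * (t / p) + 2) ≤ p * k := Nat.mul_le_mul (le_refl p) (by omega)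
      have hr : p * (2 * (t / p) + 2) = 2 * (p * (t / p)) + 2 * p := by ring
      linarith
  have hv2 : 2 * (t2 % p) = p := half t2 f2 ht2pos ht2 (fun h => h12 h.symm) hper2
  have hv3 : 2 * (t3 % p) = p := half t3 f3 ht3pos ht3 (fun h => h13 h.symm) hper3
  have hf2v : f2 = (TT l)^[t2 % p] f1 := reduce t2 f2 ht2
  have hf3v : f3 = (TT l)^[t3 % p] f1 := reduce t3 f3 ht3
  have hvv : t2 % p = t3 % p := by omega
  exact h23 (by rw [hf2v, hf3v, hvv])

end MeanderAux

/-- A connected bi-rainbow meander has exactly one or exactly two odd families. -/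
theorem connected_odd_families (l : List ℕ) (hpos : ∀ x ∈ l, 0 < x) (hne : l ≠ [])
    (hconn : Z l = 1) :
    l.countP (fun x => x % 2 = 1) = 1 ∨ l.countP (fun x => x % 2 = 1) = 2 := by
  have hsum : 1 ≤ l.sum := by
    cases l with
    | nil => exact absurd rfl hne
    | cons a rest =>
      have := hpos a (by simp)
      simp only [List.sum_cons]
      omega
  have hequiv : ∀ x y : {k : ℕ // 1 ≤ k ∧ k ≤ 2 * l.sum},
      Relation.EqvGen (fun a b => meanderRel l a.1 b.1) x y := by
    intro x y
    have hsub : Subsingleton (Quotient (meanderSetoid l)) :=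
      (Nat.card_eq_one_iff_unique.mp hconn).1
    exact Quotient.exact (Subsingleton.elim (Quotient.mk (meanderSetoid l) x)
      (Quotient.mk (meanderSetoid l) y))
  by_contra hcon
  push_neg at hcon
  obtain ⟨hc1, hc2⟩ := hcon
  rcases Nat.eq_zero_or_pos (l.countP (fun x => x % 2 = 1)) with hm0 | hmpos
  · -- all families even: the invariant k % 4 ∈ {0,1} separates points 1 and 2
    have hev : ∀ x ∈ l, x % 2 = 0 := by
      intro x hx
      have hx' := List.countP_eq_zero.mp hm0 x hx
      simp only [decide_eq_true_eq] at hx'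
      omega
    have hs2 : l.sum % 2 = 0 := MeanderAux.sum_even l hev
    have key : ∀ x y : {k : ℕ // 1 ≤ k ∧ k ≤ 2 * l.sum},
        Relation.EqvGen (fun a b => meanderRel l a.1 b.1) x y →
        ((x.1 % 4 = 0 ∨ x.1 % 4 = 1) ↔ (y.1 % 4 = 0 ∨ y.1 % 4 = 1)) := by
      intro x y h
      induction h with
      | rel x y h =>
        have h' : y.1 = upperPartner l x.1 ∨ y.1 = 2 * l.sum + 1 - x.1 := h
        have hx := x.2
        rcases h' with he | he
        · have hm4 := MeanderAux.upperPartner_mod4 l hev x.1 hx.1 hx.2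
          omega
        · omega
      | refl x => exact Iff.rfl
      | symm x y _ ih => exact ih.symm
      | trans x y z _ _ ih1 ih2 => exact ih1.trans ih2
    have h12 := key ⟨1, by omega⟩ ⟨2, by omega⟩ (hequiv _ _)
    have h12' : (1 % 4 = 0 ∨ 1 % 4 = 1) ↔ (2 % 4 = 0 ∨ 2 % 4 = 1) := h12
    omega
  · have hm3 : 3 ≤ l.countP (fun x => x % 2 = 1) := by omega
    obtain ⟨S, hcard, hmem⟩ := MeanderAux.exists_fixed_finset l
    have hS1 : S.Nonempty := Finset.card_pos.mp (by omega)
    obtain ⟨f1, hf1⟩ := hS1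
    have hS2 : (S.erase f1).Nonempty := Finset.card_pos.mp (by
      rw [Finset.card_erase_of_mem hf1]; omega)
    obtain ⟨f2, hf2⟩ := hS2
    have hS3 : ((S.erase f1).erase f2).Nonempty := Finset.card_pos.mp (by
      rw [Finset.card_erase_of_mem hf2, Finset.card_erase_of_mem hf1]; omega)
    obtain ⟨f3, hf3⟩ := hS3
    have hf2S : f2 ∈ S := Finset.mem_of_mem_erase hf2
    have hf3S : f3 ∈ S := Finset.mem_of_mem_erase (Finset.mem_of_mem_erase hf3)
    have h12 : f1 ≠ f2 := fun h => (Finset.mem_erase.mp hf2).1 h.symm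
    have h23 : f2 ≠ f3 := fun h => (Finset.mem_erase.mp hf3).1 h.symm
    have h13 : f1 ≠ f3 := fun h =>
      (Finset.mem_erase.mp (Finset.mem_of_mem_erase hf3)).1 h.symm
    exact MeanderAux.two_fixed l hequiv f1 f2 f3 (hmem f1 hf1) (hmem f2 hf2S)
      (hmem f3 hf3S) h12 h13 h23
end

section
/- For all positive integers α₁, α₂, the number of connected components of the bi-rainbow meander RM(α₁, α₂) equals gcd(α₁, α₂). -/
/-!
Identify the points `1, …, 2(a+b)` with `ZMod (2(a+b))`. Upper arcs of either family then become
the reflection `x ↦ 2a+1-x` and lower arcs the reflection `x ↦ 1-x`; their composite is the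
translation by `2a`. Hence the components are the orbits of `u ↦ 1-u` on the quotient of
`ZMod (2(a+b))` by `⟨2a⟩`, a group of order `gcd(2(a+b), 2a) = 2 gcd(a,b)`. Since `1` is odd this
reflection has no fixed point, so there are `gcd(a,b)` orbits, each of size two.
-/

open Function Relation

namespace Function.Involutive

variable {X : Type*} {σ : X → X}

def orbitSetoid (hσ : Involutive σ) : Setoid X where
  r x y := x = y ∨ x = σ y
  iseqv :=
    { refl _ := .inl rfl
      symm := by rintro x y (rfl | rfl) <;> simp [hσ _]
      trans := by rintro x y z (rfl | rfl) (rfl | rfl) <;> simp [hσ _] }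

theorem card_quotient_orbitSetoid_mul_two [Finite X] (hσ : Involutive σ)
    (hfree : ∀ x, σ x ≠ x) : Nat.card (Quotient hσ.orbitSetoid) * 2 = Nat.card X := by
  classical
  have : Fintype X := Fintype.ofFinite X
  have hfiber (q : Quotient hσ.orbitSetoid) : Nat.card {x // ⟦x⟧ = q} = 2 := by
    obtain ⟨x, rfl⟩ := Quotient.mk_surjective q
    have hset : {y | (⟦y⟧ : Quotient hσ.orbitSetoid) = ⟦x⟧} = {x, σ x} := by
      ext y
      exact Quotient.eq
    change Nat.card ({y | (⟦y⟧ : Quotient hσ.orbitSetoid) = ⟦x⟧} : Set X) = 2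
    rw [hset, Nat.card_coe_set_eq, Set.ncard_pair (hfree x).symm]
  rw [← Nat.card_congr (Equiv.sigmaFiberEquiv (Quotient.mk hσ.orbitSetoid)), Nat.card_sigma]
  simp only [hfiber, Finset.sum_const, Finset.card_univ, smul_eq_mul, Nat.card_eq_fintype_card]

end Function.Involutive

theorem Equiv.eqvGen_onFun_iff {α β : Type*} (e : α ≃ β) (r : β → β → Prop) {x y : α} :
    EqvGen (r on e) x y ↔ EqvGen r (e x) (e y) := by
  have pull (u v : β) (h : EqvGen r u v) : EqvGen (r on e) (e.symm u) (e.symm v) := by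
    induction h with
    | rel u v h => exact .rel _ _ (by simpa [onFun] using h)
    | refl => exact .refl _
    | symm _ _ _ ih => exact .symm _ _ ih
    | trans _ _ _ _ _ ih₁ ih₂ => exact .trans _ _ _ ih₁ ih₂
  refine ⟨fun h => ?_, fun h => by simpa using pull _ _ h⟩
  induction h with
  | rel _ _ h => exact .rel _ _ h
  | refl => exact .refl _
  | symm _ _ _ ih => exact .symm _ _ ih
  | trans _ _ _ _ _ ih₁ ih₂ => exact .trans _ _ _ ih₁ ih₂

section TwoReflections

variable {G : Type*} [AddCommGroup G] (c d : G)

def twoReflections (x y : G) : Prop := y = c - x ∨ y = d - x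

def twoReflectionsClass (x : G) :
    Quotient (const_sub_involutive (c : G ⧸ AddSubgroup.zmultiples (c - d))).orbitSetoid :=
  ⟦x⟧

variable {c d}

theorem eqvGen_twoReflections_add_zsmul (x : G) (k : ℤ) :
    EqvGen (twoReflections c d) x (x + k • (c - d)) := by
  have step (z : G) : EqvGen (twoReflections c d) z (z + (c - d)) :=
    .trans _ (d - z) _ (.rel _ _ (.inr rfl)) (.rel _ _ (.inl (by abel)))
  induction k using Int.induction_on with
  | zero => simpa using .refl x
  | succ i ih =>
    rw [add_zsmul, one_zsmul, ← add_assoc]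
    exact .trans _ _ _ ih (step _)
  | pred i ih =>
    have h := step (x + (-(i : ℤ) - 1) • (c - d))
    rw [add_assoc, ← add_one_zsmul, sub_add_cancel] at h
    exact .trans _ _ _ ih (.symm _ _ h)

theorem eqvGen_twoReflections_of_mk_eq {x y : G}
    (h : (x : G ⧸ AddSubgroup.zmultiples (c - d)) = y) : EqvGen (twoReflections c d) x y := by
  obtain ⟨k, hk⟩ := AddSubgroup.mem_zmultiples_iff.mp (QuotientAddGroup.eq.mp h)
  rw [show y = x + k • (c - d) by rw [hk]; abel]
  exact eqvGen_twoReflections_add_zsmul x k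

theorem eqvGen_twoReflections_iff {x y : G} :
    EqvGen (twoReflections c d) x y ↔ twoReflectionsClass c d x = twoReflectionsClass c d y := by
  constructor
  · intro h
    refine (Setoid.ker (twoReflectionsClass c d)).iseqv.eqvGen_iff.mp (EqvGen.mono ?_ _ _ h)
    have hcd : (c : G ⧸ AddSubgroup.zmultiples (c - d)) = d :=
      QuotientAddGroup.eq_iff_sub_mem.mpr (AddSubgroup.mem_zmultiples _)
    rintro x y (rfl | rfl)
    · exact Quotient.sound (.inr (by simp))
    · exact Quotient.sound (.inr (by simp [hcd]))
  · intro h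
    rcases Quotient.exact h with h | h
    · exact eqvGen_twoReflections_of_mk_eq h
    · exact .trans _ (c - y) _ (eqvGen_twoReflections_of_mk_eq (by simpa using h))
        (.symm _ _ (.rel _ _ (.inl (by abel))))

theorem card_quotient_eqvGen_twoReflections_mul_two [Finite G]
    (hfree : ∀ x : G, 2 • x - c ∉ AddSubgroup.zmultiples (c - d)) :
    Nat.card (Quotient (EqvGen.setoid (twoReflections c d))) * 2 =
      Nat.card (G ⧸ AddSubgroup.zmultiples (c - d)) := by
  have hsurj : Surjective (twoReflectionsClass c d) :=
    Quotient.mk_surjective.comp QuotientAddGroup.mk_surjective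
  have hker : EqvGen.setoid (twoReflections c d) = Setoid.ker (twoReflectionsClass c d) :=
    Setoid.ext fun _ _ => eqvGen_twoReflections_iff
  rw [hker, Nat.card_congr (Setoid.quotientKerEquivOfSurjective _ hsurj)]
  refine Involutive.card_quotient_orbitSetoid_mul_two _ fun u hu => ?_
  induction u using QuotientAddGroup.induction_on with | H x => ?_
  refine hfree x ((QuotientAddGroup.eq_zero_iff _).mp ?_)
  rw [QuotientAddGroup.mk_sub, QuotientAddGroup.mk_nsmul, two_nsmul]
  nth_rewrite 1 [← hu]
  abel

end TwoReflections

namespace ZMod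

theorem card_quotient_zmultiples_natCast {n : ℕ} [NeZero n] (x : ℕ) :
    Nat.card (ZMod n ⧸ AddSubgroup.zmultiples (x : ZMod n)) = n.gcd x := by
  have hn : 0 < n := Nat.pos_of_neZero n
  have h := AddSubgroup.card_eq_card_quotient_mul_card_addSubgroup
    (AddSubgroup.zmultiples (x : ZMod n))
  rw [Nat.card_zmultiples, ZMod.addOrderOf_coe x hn.ne', Nat.card_zmod] at h
  have hpos : 0 < n / n.gcd x := Nat.div_pos (Nat.gcd_le_left _ hn) (Nat.gcd_pos_of_pos_left _ hn)
  refine Nat.eq_of_mul_eq_mul_right hpos ?_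
  rw [← h, Nat.mul_div_cancel' (Nat.gcd_dvd_left n x)]

theorem two_nsmul_sub_odd_notMem_zmultiples_even {n : ℕ} (a : ℕ) (x : ZMod (2 * n)) :
    2 • x - (2 * a + 1) ∉ AddSubgroup.zmultiples ((2 * a + 1 : ZMod (2 * n)) - 1) := by
  rintro ⟨k, hk⟩
  simp only [zsmul_eq_mul, nsmul_eq_mul] at hk
  have := congrArg (ZMod.castHom (dvd_mul_right 2 n) (ZMod 2)) hk
  simp only [map_sub, map_add, map_mul, map_intCast, map_natCast, map_ofNat, map_one] at this
  simp [show (2 : ZMod 2) = 0 from rfl] at this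

def iccEquiv (m : ℕ) [NeZero m] : {k : ℕ // 1 ≤ k ∧ k ≤ m} ≃ ZMod m where
  toFun k := k.1
  invFun x := ⟨(x - 1).val + 1, by omega, ZMod.val_lt _⟩
  left_inv := by
    rintro ⟨k, hk1, hkm⟩
    have hcast : (k : ZMod m) - 1 = ((k - 1 : ℕ) : ZMod m) := by
      rw [Nat.cast_sub hk1, Nat.cast_one]
    ext
    simp only [hcast, ZMod.val_natCast, Nat.mod_eq_of_lt (by omega : k - 1 < m)]
    omega
  right_inv x := by simp

theorem natCast_injOn_Icc (m : ℕ) : Set.InjOn (Nat.cast : ℕ → ZMod m) (Set.Icc 1 m) := by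
  intro j hj k hk h
  have : NeZero m := ⟨Nat.one_le_iff_ne_zero.mp (hj.1.trans hj.2)⟩
  exact congrArg Subtype.val ((iccEquiv m).injective (a₁ := ⟨j, hj⟩) (a₂ := ⟨k, hk⟩) h)

theorem natCast_self_add_one_sub {m k : ℕ} (hk : k ≤ m) : ((m + 1 - k : ℕ) : ZMod m) = 1 - k := by
  rw [Nat.cast_sub (by omega), Nat.cast_add, ZMod.natCast_self, zero_add, Nat.cast_one]

end ZMod

section BiRainbow

variable {a b : ℕ}

theorem upperPartner_pair {k : ℕ} (hk : k ≤ 2 * (a + b)) :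
    upperPartner [a, b] k = if k ≤ 2 * a then 2 * a + 1 - k else 4 * a + 2 * b + 1 - k := by
  simp only [upperPartner]
  split_ifs <;> omega

theorem upperPartner_pair_mem {k : ℕ} (hk : k ∈ Set.Icc 1 (2 * (a + b))) :
    upperPartner [a, b] k ∈ Set.Icc 1 (2 * (a + b)) := by
  rw [Set.mem_Icc] at hk ⊢
  rw [upperPartner_pair hk.2]
  split_ifs <;> omega

theorem natCast_upperPartner_pair {k : ℕ} (hk : k ≤ 2 * (a + b)) :
    (upperPartner [a, b] k : ZMod (2 * (a + b))) = 2 * a + 1 - k := by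
  have h0 := ZMod.natCast_self (2 * (a + b))
  rw [upperPartner_pair hk]
  split_ifs
  · rw [Nat.cast_sub (by omega)]
    push_cast
    ring
  · rw [Nat.cast_sub (by omega)]
    push_cast at h0 ⊢
    linear_combination h0

theorem meanderRel_pair_iff {x y : ℕ} (hx : x ∈ Set.Icc 1 (2 * (a + b)))
    (hy : y ∈ Set.Icc 1 (2 * (a + b))) :
    meanderRel [a, b] x y ↔ twoReflections (2 * a + 1 : ZMod (2 * (a + b))) 1 x y := by
  have hsum : [a, b].sum = a + b := by simp
  have hlower : 2 * (a + b) + 1 - x ∈ Set.Icc 1 (2 * (a + b)) := by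
    rw [Set.mem_Icc] at hx ⊢
    omega
  rw [meanderRel, twoReflections, hsum, ← natCast_upperPartner_pair hx.2,
    ← ZMod.natCast_self_add_one_sub hx.2, (ZMod.natCast_injOn_Icc _).eq_iff hy (upperPartner_pair_mem hx),
    (ZMod.natCast_injOn_Icc _).eq_iff hy hlower]

theorem meanderSetoid_pair_iff [NeZero (2 * (a + b))] (p q : {k // 1 ≤ k ∧ k ≤ 2 * (a + b)}) :
    meanderSetoid [a, b] p q ↔
      EqvGen.setoid (twoReflections (2 * a + 1 : ZMod (2 * (a + b))) 1)
        (ZMod.iccEquiv _ p) (ZMod.iccEquiv _ q) := by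
  have hrel : (fun p q : {k // 1 ≤ k ∧ k ≤ 2 * (a + b)} => meanderRel [a, b] p.1 q.1) =
      (twoReflections (2 * a + 1 : ZMod (2 * (a + b))) 1 on ZMod.iccEquiv _) :=
    funext₂ fun p q => propext (meanderRel_pair_iff p.2 q.2)
  exact (iff_of_eq (congrArg (fun r => EqvGen r p q) hrel)).trans (Equiv.eqvGen_onFun_iff _ _)

end BiRainbow

theorem Z_two_general (a b : ℕ) (ha : 0 < a) : Z [a, b] = Nat.gcd a b := by
  have : NeZero (2 * (a + b)) := ⟨by omega⟩
  have hZ : Z [a, b] = Nat.card (Quotient (EqvGen.setoid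
      (twoReflections (2 * a + 1 : ZMod (2 * (a + b))) 1))) :=
    Nat.card_congr (Quotient.congr (ZMod.iccEquiv (2 * (a + b))) (meanderSetoid_pair_iff (a := a) (b := b)))
  have hcount := card_quotient_eqvGen_twoReflections_mul_two
    (ZMod.two_nsmul_sub_odd_notMem_zmultiples_even (n := a + b) a)
  have hgcd : (2 * (a + b)).gcd (2 * a) = 2 * a.gcd b := by
    rw [Nat.gcd_mul_left, Nat.gcd_comm, Nat.gcd_self_add_right]
  rw [show (2 * a + 1 : ZMod (2 * (a + b))) - 1 = ((2 * a : ℕ) : ZMod (2 * (a + b))) by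
      push_cast; ring, ZMod.card_quotient_zmultiples_natCast, hgcd] at hcount
  omega

/-- The number of connected components of the bi-rainbow meander RM(α₁,α₂) is
the greatest common divisor of α₁ and α₂. -/
theorem Z_two (a b : ℕ) (ha : 0 < a) (hb : 0 < b) : Z [a, b] = Nat.gcd a b :=
  Z_two_general a b ha
end

section
/- For all positive integers α₁, α₂, α₃, the number of connected components of the bi-rainbow meander RM(α₁, α₂, α₃) equals gcd(α₁+α₂, α₂+α₃). -/
namespace ZThreeAux

lemma sum3 (a b c : ℕ) : ([a, b, c] : List ℕ).sum = a + b + c := by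
  simp [List.sum_cons]; ring

/-- invariant -/
def nu (a g x : ℕ) : ZMod g :=
  if x % 2 = 1 then ((x - 1) / 2 : ℕ) else (a : ZMod g) - ((x / 2 : ℕ) : ZMod g)

/-- the rotation -/
def rot (q m t : ℕ) : ℕ := if t + q ≤ m then t + q else t + q - m

/-- connectivity on ℕ points -/
def conn (a b c x y : ℕ) : Prop :=
  ∃ (hx : 1 ≤ x ∧ x ≤ 2 * ([a, b, c] : List ℕ).sum)
    (hy : 1 ≤ y ∧ y ≤ 2 * ([a, b, c] : List ℕ).sum),
    Relation.EqvGen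
      (fun s t : {k : ℕ // 1 ≤ k ∧ k ≤ 2 * ([a, b, c] : List ℕ).sum} =>
        meanderRel [a, b, c] s.1 t.1) ⟨x, hx⟩ ⟨y, hy⟩

lemma bnd {a b c x : ℕ} (h1 : 1 ≤ x) (h2 : x ≤ 2 * (a + b + c)) :
    1 ≤ x ∧ x ≤ 2 * ([a, b, c] : List ℕ).sum := by
  rw [sum3]; exact ⟨h1, h2⟩

lemma conn_refl {a b c x : ℕ} (h1 : 1 ≤ x) (h2 : x ≤ 2 * (a + b + c)) : conn a b c x x :=
  ⟨bnd h1 h2, bnd h1 h2, Relation.EqvGen.refl _⟩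

lemma conn_symm {a b c x y : ℕ} (h : conn a b c x y) : conn a b c y x := by
  obtain ⟨hx, hy, h⟩ := h
  exact ⟨hy, hx, Relation.EqvGen.symm _ _ h⟩

lemma conn_trans {a b c x y z : ℕ} (h : conn a b c x y) (h' : conn a b c y z) :
    conn a b c x z := by
  obtain ⟨hx, hy, h⟩ := h
  obtain ⟨hy', hz, h'⟩ := h'
  exact ⟨hx, hz, Relation.EqvGen.trans _ _ _ h h'⟩

lemma conn_step {a b c x y : ℕ} (hx1 : 1 ≤ x) (hx2 : x ≤ 2 * (a + b + c))
    (hy1 : 1 ≤ y) (hy2 : y ≤ 2 * (a + b + c)) (h : meanderRel [a, b, c] x y) :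
    conn a b c x y :=
  ⟨bnd hx1 hx2, bnd hy1 hy2, Relation.EqvGen.rel _ _ h⟩

lemma upper1 {a x : ℕ} (b c : ℕ) (h : x ≤ 2 * a) :
    upperPartner [a, b, c] x = 2 * a + 1 - x := by
  simp [upperPartner, h]

lemma upper2 {a b x : ℕ} (c : ℕ) (h1 : 2 * a < x) (h2 : x ≤ 2 * a + 2 * b) :
    upperPartner [a, b, c] x = 4 * a + 2 * b + 1 - x := by
  simp only [upperPartner]
  split_ifs <;> omega

lemma upper3 {a b c x : ℕ} (h1 : 2 * a + 2 * b < x) (h2 : x ≤ 2 * (a + b + c)) :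
    upperPartner [a, b, c] x = 4 * a + 4 * b + 2 * c + 1 - x := by
  simp only [upperPartner]
  split_ifs <;> omega



section Rot

variable {a b c : ℕ}

/-- one rotation step, staying in range, is a meander double-step -/
lemma conn_rot (ha : 0 < a) (hb : 0 < b) (hc : 0 < c) {x : ℕ}
    (hx1 : 1 ≤ x) (hx2 : x ≤ 2 * (a + b + c))
    (h : rot (2 * (b + c)) (2 * (a + b) + 2 * (b + c)) x ≤ 2 * (a + b + c)) :
    conn a b c x (rot (2 * (b + c)) (2 * (a + b) + 2 * (b + c)) x) := by
  unfold rot at h ⊢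
  split_ifs at h ⊢ with h1
  · -- x + q ≤ m and x + q ≤ N, so x ≤ 2a
    have hxa : x ≤ 2 * a := by omega
    have s1 : meanderRel [a, b, c] x (2 * a + 1 - x) := Or.inl (upper1 b c hxa).symm
    have s2 : meanderRel [a, b, c] (2 * a + 1 - x) (x + 2 * (b + c)) := by
      right; rw [sum3]; omega
    exact conn_trans (conn_step hx1 hx2 (by omega) (by omega) s1)
      (conn_step (by omega) (by omega) (by omega) (by omega) s2)
  · -- x + q > m, so x > 2(a+b)
    have hxp : 2 * (a + b) < x := by omega
    have s1 : meanderRel [a, b, c] x (4 * a + 4 * b + 2 * c + 1 - x) :=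
      Or.inl (upper3 (by omega) hx2).symm
    have s2 : meanderRel [a, b, c] (4 * a + 4 * b + 2 * c + 1 - x)
        (x + 2 * (b + c) - (2 * (a + b) + 2 * (b + c))) := by
      right; rw [sum3]; omega
    exact conn_trans (conn_step hx1 hx2 (by omega) (by omega) s1)
      (conn_step (by omega) (by omega) (by omega) (by omega) s2)

/-- if one rotation step leaves the range, two steps form a meander double-step -/
lemma conn_rot2 (ha : 0 < a) (hb : 0 < b) (hc : 0 < c) {x : ℕ}
    (hx1 : 1 ≤ x) (hx2 : x ≤ 2 * (a + b + c))
    (h : ¬ rot (2 * (b + c)) (2 * (a + b) + 2 * (b + c)) x ≤ 2 * (a + b + c)) :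
    conn a b c x
      (rot (2 * (b + c)) (2 * (a + b) + 2 * (b + c))
        (rot (2 * (b + c)) (2 * (a + b) + 2 * (b + c)) x)) := by
  have hmid : 2 * a < x ∧ x ≤ 2 * a + 2 * b := by
    unfold rot at h; split_ifs at h <;> omega
  have hval : rot (2 * (b + c)) (2 * (a + b) + 2 * (b + c))
      (rot (2 * (b + c)) (2 * (a + b) + 2 * (b + c)) x) = x + 2 * c - 2 * a := by
    unfold rot at h ⊢; split_ifs at h ⊢ <;> omega
  rw [hval]
  have s1 : meanderRel [a, b, c] x (4 * a + 2 * b + 1 - x) :=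
    Or.inl (upper2 c hmid.1 hmid.2).symm
  have s2 : meanderRel [a, b, c] (4 * a + 2 * b + 1 - x) (x + 2 * c - 2 * a) := by
    right; rw [sum3]; omega
  exact conn_trans (conn_step hx1 hx2 (by omega) (by omega) s1)
    (conn_step (by omega) (by omega) (by omega) (by omega) s2)

/-- iterates of the rotation stay in `[1,m]` and track `t + j*q` mod `m` -/
lemma rot_iter {q m : ℕ} (hq1 : 1 ≤ q) (hqm : q ≤ m) :
    ∀ (j t : ℕ), 1 ≤ t → t ≤ m →
      1 ≤ (rot q m)^[j] t ∧ (rot q m)^[j] t ≤ m ∧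
        ∃ k, (rot q m)^[j] t + m * k = t + j * q := by
  intro j
  induction j with
  | zero =>
    intro t h1 h2
    simp only [Function.iterate_zero, id]
    exact ⟨h1, h2, 0, by omega⟩
  | succ n ih =>
    intro t h1 h2
    obtain ⟨u1, u2, k, hk⟩ := ih t h1 h2
    set u := (rot q m)^[n] t with hu
    rw [Function.iterate_succ_apply', ← hu]
    have hs : (n + 1) * q = n * q + q := by ring
    rw [hs]
    unfold rot
    split_ifs with hcase
    · refine ⟨by omega, by omega, k, ?_⟩
      have h2' : (n + 1) * q = n * q + q := by ring
      omega
    · refine ⟨by omega, by omega, k + 1, ?_⟩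
      have h1' : m * (k + 1) = m * k + m := by ring
      have h2' : (n + 1) * q = n * q + q := by ring
      omega

end Rot

section Iter

variable {a b c : ℕ}

/-- reachability along the rotation implies meander connectivity -/
lemma conn_iter (ha : 0 < a) (hb : 0 < b) (hc : 0 < c) :
    ∀ j x, 1 ≤ x → x ≤ 2 * (a + b + c) →
      (rot (2 * (b + c)) (2 * (a + b) + 2 * (b + c)))^[j] x ≤ 2 * (a + b + c) →
      conn a b c x ((rot (2 * (b + c)) (2 * (a + b) + 2 * (b + c)))^[j] x) := by
  intro j
  induction j using Nat.strong_induction_on with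
  | _ j IH =>
    match j with
    | 0 => intro x hx1 hx2 _; simpa using conn_refl hx1 hx2
    | 1 =>
      intro x hx1 hx2 hj
      rw [Function.iterate_one] at hj ⊢
      exact conn_rot ha hb hc hx1 hx2 hj
    | (jj+2) =>
      intro x hx1 hx2 hj
      set q := 2 * (b + c) with hq
      set m := 2 * (a + b) + 2 * (b + c) with hm
      obtain ⟨w1, w2, -⟩ := rot_iter (q := q) (m := m) (by omega) (by omega) jj x
        (by omega) (by omega)
      obtain ⟨u1, u2, -⟩ := rot_iter (q := q) (m := m) (by omega) (by omega) (jj+1) x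
        (by omega) (by omega)
      by_cases hun : (rot q m)^[jj+1] x ≤ 2 * (a + b + c)
      · have c1 := IH (jj + 1) (by omega) x hx1 hx2 hun
        have hj' : rot q m ((rot q m)^[jj+1] x) ≤ 2 * (a + b + c) := by
          rw [← Function.iterate_succ_apply' (rot q m) (jj+1) x]; exact hj
        have c2 := conn_rot ha hb hc (a := a) (b := b) (c := c)
          (x := (rot q m)^[jj+1] x) (by omega) hun hj'
        rw [Function.iterate_succ_apply' (rot q m) (jj+1) x]
        exact conn_trans c1 c2
      · -- the (jj+1)-st point is outside; then the jj-th point is inside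
        set w := (rot q m)^[jj] x with hwdef
        have hiter : (rot q m)^[jj+1] x = rot q m w :=
          Function.iterate_succ_apply' (rot q m) jj x
        have hwN : w ≤ 2 * (a + b + c) := by
          by_contra hcon
          -- then the jj-th point is in (N, m], so its image is ≤ q ≤ N
          have : rot q m w ≤ 2 * (a + b + c) := by
            unfold rot; split_ifs <;> omega
          rw [← hiter] at this; omega
        have c1 := IH jj (by omega) x hx1 hx2 hwN
        have c2 := conn_rot2 ha hb hc (a := a) (b := b) (c := c)
          (x := w) (by omega) hwN (by rw [← hiter]; exact hun)
        have hiter2 : (rot q m)^[jj+2] x = rot q m (rot q m w) := by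
          rw [Function.iterate_succ_apply' (rot q m) (jj+1) x, hiter]
        rw [hiter2]
        exact conn_trans c1 c2

end Iter

section Reach

variable {a b c : ℕ}

lemma gcd_qm (a b c : ℕ) :
    Nat.gcd (2 * (b + c)) (2 * (a + b) + 2 * (b + c)) = 2 * Nat.gcd (a + b) (b + c) := by
  have h1 : 2 * (a + b) + 2 * (b + c) = 2 * ((a + b) + (b + c)) := by ring
  rw [h1, Nat.gcd_mul_left]
  rw [show (a + b) + (b + c) = (a + b) + (b + c) from rfl]
  rw [Nat.gcd_comm (b + c) (a + b + (b + c)), Nat.gcd_comm (a+b) (b+c)]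
  congr 1
  have := Nat.gcd_add_self_right (b + c) (a + b)
  rw [Nat.gcd_comm] at this
  rw [this, Nat.gcd_comm]

lemma eq_of_modeq_interval {m u v : ℕ} (h : u ≡ v [MOD m])
    (h1 : 1 ≤ u) (h2 : u ≤ m) (h3 : 1 ≤ v) (h4 : v ≤ m) : u = v := by
  unfold Nat.ModEq at h
  rcases Nat.lt_or_ge u m with hu | hu
  · rcases Nat.lt_or_ge v m with hv | hv
    · rwa [Nat.mod_eq_of_lt hu, Nat.mod_eq_of_lt hv] at h
    · have hv0 : v % m = 0 := by
        have hv' : v = m := by omega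
        rw [hv', Nat.mod_self]
      rw [Nat.mod_eq_of_lt hu, hv0] at h; omega
  · have hu0 : u % m = 0 := by
      have hu' : u = m := by omega
      rw [hu', Nat.mod_self]
    rw [hu0] at h
    rcases Nat.lt_or_ge v m with hv | hv
    · rw [Nat.mod_eq_of_lt hv] at h; omega
    · omega

lemma exists_rot_iter (ha : 0 < a) (hb : 0 < b) (hc : 0 < c) {x y : ℕ}
    (hx1 : 1 ≤ x) (hx2 : x ≤ 2 * (a + b + c))
    (hy1 : 1 ≤ y) (hy2 : y ≤ 2 * (a + b + c))
    (hxy : x ≡ y [MOD 2 * Nat.gcd (a + b) (b + c)]) :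
    ∃ j, (rot (2 * (b + c)) (2 * (a + b) + 2 * (b + c)))^[j] x = y := by
  set q : ℕ := 2 * (b + c) with hqdef
  set m : ℕ := 2 * (a + b) + 2 * (b + c) with hmdef
  set g : ℕ := Nat.gcd (a + b) (b + c) with hgdef
  have hm0 : (0:ℤ) < (m:ℤ) := by positivity
  -- Bezout
  have hbez : ((2 * g : ℕ) : ℤ) = (q:ℤ) * Int.gcdA q m + (m:ℤ) * Int.gcdB q m := by
    have := Int.gcd_eq_gcd_ab (q:ℤ) (m:ℤ)
    rw [Int.gcd_natCast_natCast, gcd_qm a b c] at this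
    exact_mod_cast this
  set A : ℤ := Int.gcdA q m with hA
  set B : ℤ := Int.gcdB q m with hB
  obtain ⟨t, ht⟩ : ((2 * g : ℕ) : ℤ) ∣ (y:ℤ) - (x:ℤ) := hxy.dvd
  set j : ℕ := ((A * t) % (m:ℤ)).toNat with hjdef
  have hjz : (j:ℤ) = A * t - (m:ℤ) * ((A * t) / (m:ℤ)) := by
    rw [hjdef, Int.toNat_of_nonneg (Int.emod_nonneg _ (by omega))]
    exact Int.emod_def (A * t) (m:ℤ)
  obtain ⟨u1, u2, k, hk⟩ := rot_iter (q := q) (m := m) (by omega) (by omega) j x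
    (by omega) (by omega)
  set R : ℕ := (rot q m)^[j] x with hRdef
  have hkZ : (R:ℤ) + (m:ℤ) * k = (x:ℤ) + (j:ℤ) * q := by exact_mod_cast hk
  have hw : (R:ℤ) - (y:ℤ) = (m:ℤ) * (-(q:ℤ) * ((A * t) / (m:ℤ)) - B * t - k) := by
    push_cast at hbez ht hkZ ⊢
    linear_combination hkZ + (q:ℤ) * hjz - t * hbez - ht
  refine ⟨j, ?_⟩
  have hR1 : 1 ≤ R := u1
  have hR2 : R ≤ m := u2
  set W : ℤ := -(q:ℤ) * ((A * t) / (m:ℤ)) - B * t - k with hW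
  have hW0 : W = 0 := by
    by_contra h0
    rcases lt_or_gt_of_ne h0 with h1 | h1
    · have hle : (m:ℤ) * W ≤ -(m:ℤ) := by nlinarith
      rw [← hw] at hle; omega
    · have hge : (m:ℤ) ≤ (m:ℤ) * W := by nlinarith
      rw [← hw] at hge; omega
  rw [hW0, mul_zero] at hw
  omega

lemma conn_modeq (ha : 0 < a) (hb : 0 < b) (hc : 0 < c) {x y : ℕ}
    (hx1 : 1 ≤ x) (hx2 : x ≤ 2 * (a + b + c))
    (hy1 : 1 ≤ y) (hy2 : y ≤ 2 * (a + b + c))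
    (hxy : x ≡ y [MOD 2 * Nat.gcd (a + b) (b + c)]) : conn a b c x y := by
  obtain ⟨j, hj⟩ := exists_rot_iter ha hb hc hx1 hx2 hy1 hy2 hxy
  have := conn_iter ha hb hc j x hx1 hx2 (by rw [hj]; exact hy2)
  rwa [hj] at this

end Reach

section Nu

variable {a b c : ℕ}

lemma nu_reflect_odd {a g x y k : ℕ} (hx2 : x % 2 = 1) (hy1 : 1 ≤ y)
    (h : x + y = 2 * a + 1 + 2 * (g * k)) : nu a g x = nu a g y := by
  have hy2 : ¬ (y % 2 = 1) := by omega
  have key : (x - 1) / 2 + y / 2 = a + g * k := by omega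
  rw [nu, nu, if_pos hx2, if_neg hy2]
  have hcast : (((x - 1) / 2 : ℕ) : ZMod g) + ((y / 2 : ℕ) : ZMod g) = (a : ZMod g) := by
    have h2 := congrArg (Nat.cast : ℕ → ZMod g) key
    push_cast at h2
    rw [ZMod.natCast_self] at h2
    rw [h2]; ring
  exact eq_sub_of_add_eq hcast

lemma nu_reflect {a g x y k : ℕ} (hx1 : 1 ≤ x) (hy1 : 1 ≤ y)
    (h : x + y = 2 * a + 1 + 2 * (g * k)) : nu a g x = nu a g y := by
  rcases Nat.even_or_odd x with hx | hx
  · have hx' : x % 2 = 0 := Nat.even_iff.mp hx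
    have hy2 : y % 2 = 1 := by omega
    exact (nu_reflect_odd (k := k) hy2 hx1 (by omega)).symm
  · have hx' : x % 2 = 1 := Nat.odd_iff.mp hx
    exact nu_reflect_odd hx' hy1 h

lemma nu_step {x y : ℕ} (hx1 : 1 ≤ x) (hx2 : x ≤ 2 * (a + b + c))
    (h : meanderRel [a, b, c] x y) :
    nu a (Nat.gcd (a + b) (b + c)) x = nu a (Nat.gcd (a + b) (b + c)) y := by
  set g : ℕ := Nat.gcd (a + b) (b + c) with hgdef
  obtain ⟨k1, hk1⟩ : g ∣ a + b := Nat.gcd_dvd_left _ _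
  obtain ⟨k2, hk2⟩ : g ∣ b + c := Nat.gcd_dvd_right _ _
  rcases h with h | h
  · by_cases h1 : x ≤ 2 * a
    · rw [upper1 b c h1] at h
      exact nu_reflect hx1 (by omega) (k := 0) (by omega)
    · by_cases h2 : x ≤ 2 * a + 2 * b
      · rw [upper2 c (by omega) h2] at h
        exact nu_reflect hx1 (by omega) (k := k1) (by omega)
      · rw [upper3 (by omega) hx2] at h
        refine nu_reflect hx1 (by omega) (k := k1 + k2) ?_
        have e1 : g * (k1 + k2) = g * k1 + g * k2 := by ring
        omega
  · rw [sum3] at h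
    exact nu_reflect hx1 (by omega) (k := k2) (by omega)

lemma nu_eqvgen {u v : {k : ℕ // 1 ≤ k ∧ k ≤ 2 * ([a, b, c] : List ℕ).sum}}
    (h : Relation.EqvGen
      (fun s t : {k : ℕ // 1 ≤ k ∧ k ≤ 2 * ([a, b, c] : List ℕ).sum} =>
        meanderRel [a, b, c] s.1 t.1) u v) :
    nu a (Nat.gcd (a + b) (b + c)) u.1 = nu a (Nat.gcd (a + b) (b + c)) v.1 := by
  induction h with
  | rel s t hst =>
    have hs := s.2
    have hsum := sum3 a b c
    exact nu_step hs.1 (by omega) hst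
  | refl s => rfl
  | symm s t _ ih => exact ih.symm
  | trans s t u _ _ ih1 ih2 => exact ih1.trans ih2

end Nu

section Complete

variable {a b c : ℕ}

lemma conn_nu_same (ha : 0 < a) (hb : 0 < b) (hc : 0 < c) {x y : ℕ}
    (hx1 : 1 ≤ x) (hx2 : x ≤ 2 * (a + b + c))
    (hy1 : 1 ≤ y) (hy2 : y ≤ 2 * (a + b + c))
    (hpar : x % 2 = y % 2)
    (h : nu a (Nat.gcd (a + b) (b + c)) x = nu a (Nat.gcd (a + b) (b + c)) y) :
    conn a b c x y := by
  set g : ℕ := Nat.gcd (a + b) (b + c) with hgdef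
  by_cases hodd : x % 2 = 1
  · have hyodd : y % 2 = 1 := by omega
    rw [nu, nu, if_pos hodd, if_pos hyodd] at h
    have h2 := (ZMod.natCast_eq_natCast_iff _ _ _).mp h
    have h3 := h2.mul_left' (c := 2)
    have h4 := h3.add_right 1
    have e1 : 2 * ((x - 1) / 2) + 1 = x := by omega
    have e2 : 2 * ((y - 1) / 2) + 1 = y := by omega
    rw [e1, e2] at h4
    exact conn_modeq ha hb hc hx1 hx2 hy1 hy2 h4
  · have hyev : ¬ (y % 2 = 1) := by omega
    rw [nu, nu, if_neg hodd, if_neg hyev] at h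
    have h1 : ((x / 2 : ℕ) : ZMod g) = ((y / 2 : ℕ) : ZMod g) := sub_right_injective h
    have h2 := (ZMod.natCast_eq_natCast_iff _ _ _).mp h1
    have h3 := h2.mul_left' (c := 2)
    have e1 : 2 * (x / 2) = x := by omega
    have e2 : 2 * (y / 2) = y := by omega
    rw [e1, e2] at h3
    exact conn_modeq ha hb hc hx1 hx2 hy1 hy2 h3

lemma conn_of_nu_eq (ha : 0 < a) (hb : 0 < b) (hc : 0 < c) {x y : ℕ}
    (hx1 : 1 ≤ x) (hx2 : x ≤ 2 * (a + b + c))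
    (hy1 : 1 ≤ y) (hy2 : y ≤ 2 * (a + b + c))
    (h : nu a (Nat.gcd (a + b) (b + c)) x = nu a (Nat.gcd (a + b) (b + c)) y) :
    conn a b c x y := by
  by_cases hpar : x % 2 = y % 2
  · exact conn_nu_same ha hb hc hx1 hx2 hy1 hy2 hpar h
  · by_cases hodd : x % 2 = 1
    · -- x odd, y even: replace y by its lower partner
      set y' : ℕ := 2 * (a + b + c) + 1 - y with hy'def
      have hstep : meanderRel [a, b, c] y y' := Or.inr (by rw [sum3])
      have cy : conn a b c y y' := conn_step hy1 hy2 (by omega) (by omega) hstep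
      have hnu : nu a (Nat.gcd (a + b) (b + c)) y = nu a (Nat.gcd (a + b) (b + c)) y' :=
        nu_step hy1 hy2 hstep
      have cxy' : conn a b c x y' :=
        conn_nu_same ha hb hc hx1 hx2 (by omega) (by omega) (by omega) (h.trans hnu)
      exact conn_trans cxy' (conn_symm cy)
    · -- x even, y odd: replace x by its lower partner
      set x' : ℕ := 2 * (a + b + c) + 1 - x with hx'def
      have hstep : meanderRel [a, b, c] x x' := Or.inr (by rw [sum3])
      have cx : conn a b c x x' := conn_step hx1 hx2 (by omega) (by omega) hstep
      have hnu : nu a (Nat.gcd (a + b) (b + c)) x = nu a (Nat.gcd (a + b) (b + c)) x' :=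
        nu_step hx1 hx2 hstep
      have cx'y : conn a b c x' y :=
        conn_nu_same ha hb hc (by omega) (by omega) hy1 hy2 (by omega) (hnu.symm.trans h)
      exact conn_trans cx cx'y

lemma nu_rep {g : ℕ} [NeZero g] (a : ℕ) (t : ZMod g) : nu a g (2 * t.val + 1) = t := by
  have h2 : (2 * t.val + 1) % 2 = 1 := by omega
  rw [nu, if_pos h2]
  have e1 : (2 * t.val + 1 - 1) / 2 = t.val := by omega
  rw [e1, ZMod.natCast_val, ZMod.cast_id]

end Complete

end ZThreeAux

open ZThreeAux

/-- The number of connected components of the bi-rainbow meander RM(α₁,α₂,α₃) is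
gcd(α₁+α₂, α₂+α₃). -/
theorem Z_three (a b c : ℕ) (ha : 0 < a) (hb : 0 < b) (hc : 0 < c) :
    Z [a, b, c] = Nat.gcd (a + b) (b + c) := by
  classical
  set g : ℕ := Nat.gcd (a + b) (b + c) with hgdef
  have hgab : g ∣ a + b := Nat.gcd_dvd_left _ _
  have hgpos : 0 < g := Nat.gcd_pos_of_pos_left _ (by omega)
  have hgle : g ≤ a + b := Nat.le_of_dvd (by omega) hgab
  haveI : NeZero g := ⟨by omega⟩
  have hsum := sum3 a b c
  let e : Quotient (meanderSetoid [a, b, c]) ≃ ZMod g :=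
    { toFun := Quotient.lift (fun p => nu a g p.1) (fun p q h => nu_eqvgen h)
      invFun := fun t =>
        Quotient.mk (meanderSetoid [a, b, c]) ⟨2 * t.val + 1, by
          have := ZMod.val_lt t
          constructor <;> omega⟩
      left_inv := by
        intro qq
        refine Quotient.inductionOn qq (fun p => ?_)
        apply Quotient.sound
        have hp := p.2
        have hx : 1 ≤ 2 * (nu a g p.1).val + 1 := by omega
        have hx2 : 2 * (nu a g p.1).val + 1 ≤ 2 * (a + b + c) := by
          have := ZMod.val_lt (nu a g p.1); omega
        have hnu : nu a g (2 * (nu a g p.1).val + 1) = nu a g p.1 := nu_rep a _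
        obtain ⟨h1, h2, hgen⟩ := conn_of_nu_eq ha hb hc hx hx2 hp.1 (by omega) hnu
        exact hgen
      right_inv := by
        intro t
        simp only [Quotient.lift_mk]
        exact nu_rep a t }
  rw [Z, Nat.card_congr e, Nat.card_zmod]
end

section
/- Scaling lemma: for any bi-rainbow meander RM(α₁,...,αₙ) and any positive integer λ, the number of connected components scales linearly: Z(λα₁,...,λαₙ) = λ·Z(α₁,...,αₙ). -/


def cpZ (lam k : ℕ) : ℕ := min ((k-1) % (2*lam)) (2*lam - 1 - (k-1) % (2*lam))
def psZ (lam k : ℕ) : ℕ := 2 * ((k-1) / (2*lam)) + (if (k-1) % (2*lam) < lam then 1 else 2)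
def psiZ (lam c p : ℕ) : ℕ :=
  2*lam*((p-1)/2) + (if (p-1) % 2 = 0 then c + 1 else 2*lam - c)

lemma cpZ_eq (lam m r : ℕ) (hr : r < 2*lam) :
    cpZ lam (2*lam*m + r + 1) = min r (2*lam - 1 - r) := by
  have h1 : 2*lam*m + r + 1 - 1 = 2*lam*m + r := by omega
  unfold cpZ
  rw [h1, Nat.mul_add_mod, Nat.mod_eq_of_lt hr]

lemma psZ_eq (lam m r : ℕ) (hr : r < 2*lam) :
    psZ lam (2*lam*m + r + 1) = 2*m + (if r < lam then 1 else 2) := by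
  have h1 : 2*lam*m + r + 1 - 1 = 2*lam*m + r := by omega
  unfold psZ
  rw [h1, Nat.mul_add_mod, Nat.mod_eq_of_lt hr, Nat.mul_add_div (by omega),
    Nat.div_eq_of_lt hr]
  omega

lemma existsDecomp (lam k : ℕ) (hlam : 0 < lam) (hk : 1 ≤ k) :
    ∃ m r, r < 2*lam ∧ k = 2*lam*m + r + 1 := by
  refine ⟨(k-1)/(2*lam), (k-1) % (2*lam), Nat.mod_lt _ (by omega), ?_⟩
  have := Nat.div_add_mod (k-1) (2*lam)
  omega

lemma mul_split (P a m : ℕ) (h : m < a) : P * a = P * (a - 1 - m) + P * m + P := by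
  have ha : a - 1 - m + m + 1 = a := by omega
  calc P * a = P * (a - 1 - m + m + 1) := by rw [ha]
    _ = P * (a-1-m) + P*m + P := by ring

lemma lt_of_le' (lam a m r : ℕ) (hr : r < 2*lam) (h : 2*lam*m + r + 1 ≤ 2*(lam*a)) :
    m < a := by
  have h2 : 2*(lam*a) = 2*lam*a := by ring
  by_contra h'
  push_neg at h'
  have := Nat.mul_le_mul_left (2*lam) h'
  omega

lemma flipZ (lam a k : ℕ) (hlam : 0 < lam) (h1 : 1 ≤ k) (h2 : k ≤ 2*(lam*a)) :
    cpZ lam (2*(lam*a)+1-k) = cpZ lam k ∧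
      psZ lam (2*(lam*a)+1-k) = 2*a+1 - psZ lam k := by
  obtain ⟨m, r, hr, hk⟩ := existsDecomp lam k hlam h1
  have hm : m < a := lt_of_le' lam a m r hr (hk ▸ h2)
  have key := mul_split (2*lam) a m hm
  have h2a : 2*(lam*a) = 2*lam*a := by ring
  have hj : 2*(lam*a)+1-k = 2*lam*(a-1-m) + (2*lam-1-r) + 1 := by omega
  rw [hj, hk, cpZ_eq _ _ _ (by omega), cpZ_eq _ _ _ hr,
    psZ_eq _ _ _ (by omega), psZ_eq _ _ _ hr]
  constructor
  · omega
  · split_ifs <;> omega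

lemma cpZ_shift (lam a j : ℕ) (hj : 1 ≤ j) : cpZ lam (2*(lam*a) + j) = cpZ lam j := by
  have h1 : 2*(lam*a) + j - 1 = 2*lam*a + (j-1) := by
    have : 2*(lam*a) = 2*lam*a := by ring
    omega
  unfold cpZ
  rw [h1, Nat.mul_add_mod]

lemma psZ_shift (lam a j : ℕ) (hlam : 0 < lam) (hj : 1 ≤ j) :
    psZ lam (2*(lam*a) + j) = 2*a + psZ lam j := by
  have h1 : 2*(lam*a) + j - 1 = 2*lam*a + (j-1) := by
    have : 2*(lam*a) = 2*lam*a := by ring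
    omega
  unfold psZ
  rw [h1, Nat.mul_add_mod, Nat.mul_add_div (by omega)]
  omega

lemma psZ_le_iff (lam a k : ℕ) (hlam : 0 < lam) (h1 : 1 ≤ k) :
    psZ lam k ≤ 2*a ↔ k ≤ 2*(lam*a) := by
  obtain ⟨m, r, hr, hk⟩ := existsDecomp lam k hlam h1
  subst hk
  rw [psZ_eq _ _ _ hr]
  constructor
  · intro hle
    have hm : m < a := by split_ifs at hle <;> omega
    have key := mul_split (2*lam) a m hm
    have h2a : 2*(lam*a) = 2*lam*a := by ring
    omega
  · intro hle
    have hm : m < a := lt_of_le' lam a m r hr hle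
    have key := mul_split (2*lam) a m hm
    have h2a : 2*(lam*a) = 2*lam*a := by ring
    split_ifs <;> omega

lemma cpZ_lt (lam k : ℕ) (hlam : 0 < lam) (h1 : 1 ≤ k) : cpZ lam k < lam := by
  obtain ⟨m, r, hr, hk⟩ := existsDecomp lam k hlam h1
  subst hk
  rw [cpZ_eq _ _ _ hr]
  omega

lemma psZ_bounds (lam s k : ℕ) (hlam : 0 < lam) (h1 : 1 ≤ k) (h2 : k ≤ 2*(lam*s)) :
    1 ≤ psZ lam k ∧ psZ lam k ≤ 2*s := by
  refine ⟨?_, (psZ_le_iff lam s k hlam h1).2 h2⟩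
  obtain ⟨m, r, hr, hk⟩ := existsDecomp lam k hlam h1
  subst hk
  rw [psZ_eq _ _ _ hr]
  split_ifs <;> omega

lemma psiZ_odd (lam c m : ℕ) : psiZ lam c (2*m+1) = 2*lam*m + c + 1 := by
  unfold psiZ
  have hmod : (2*m+1-1) % 2 = 0 := by omega
  have hdiv : (2*m+1-1) / 2 = m := by omega
  rw [hmod, hdiv, if_pos rfl]
  omega

lemma psiZ_even (lam c m : ℕ) : psiZ lam c (2*m+2) = 2*lam*m + (2*lam - c) := by
  unfold psiZ
  have hmod : (2*m+2-1) % 2 = 1 := by omega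
  have hdiv : (2*m+2-1) / 2 = m := by omega
  rw [hmod, hdiv, if_neg (by omega)]

lemma cpZ_psZ_psiZ (lam c p : ℕ) (hlam : 0 < lam) (hc : c < lam) (hp : 1 ≤ p) :
    cpZ lam (psiZ lam c p) = c ∧ psZ lam (psiZ lam c p) = p ∧ 1 ≤ psiZ lam c p := by
  obtain ⟨m, hm⟩ : ∃ m, p = 2*m+1 ∨ p = 2*m+2 := ⟨(p-1)/2, by omega⟩
  rcases hm with h | h <;> subst h
  · rw [psiZ_odd, cpZ_eq _ _ _ (by omega), psZ_eq _ _ _ (by omega)]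
    refine ⟨by omega, ?_, by omega⟩
    rw [if_pos hc]
  · have he : 2*lam*m + (2*lam - c) = 2*lam*m + (2*lam-1-c) + 1 := by omega
    rw [psiZ_even, he, cpZ_eq _ _ _ (by omega), psZ_eq _ _ _ (by omega)]
    refine ⟨by omega, ?_, by omega⟩
    rw [if_neg (by omega)]

lemma psiZ_le (lam c p α : ℕ) (hlam : 0 < lam) (hc : c < lam) (hp1 : 1 ≤ p)
    (hp2 : p ≤ 2*α) : psiZ lam c p ≤ 2*(lam*α) := by
  obtain ⟨m, hm⟩ : ∃ m, p = 2*m+1 ∨ p = 2*m+2 := ⟨(p-1)/2, by omega⟩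
  have h2a : 2*(lam*α) = 2*lam*α := by ring
  rcases hm with h | h <;> subst h
  · have hmα : m < α := by omega
    have key := mul_split (2*lam) α m hmα
    rw [psiZ_odd]; omega
  · have hmα : m < α := by omega
    have key := mul_split (2*lam) α m hmα
    rw [psiZ_even]; omega

lemma psiZ_cpZ_psZ (lam k : ℕ) (hlam : 0 < lam) (h1 : 1 ≤ k) :
    psiZ lam (cpZ lam k) (psZ lam k) = k := by
  obtain ⟨m, r, hr, hk⟩ := existsDecomp lam k hlam h1
  subst hk
  rw [cpZ_eq _ _ _ hr, psZ_eq _ _ _ hr]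
  by_cases h : r < lam
  · rw [if_pos h, psiZ_odd]; omega
  · rw [if_neg h, show 2*m+2 = 2*m+2 from rfl, psiZ_even]; omega

lemma sumMapZ (lam : ℕ) (l : List ℕ) : (l.map (fun x => lam*x)).sum = lam * l.sum := by
  induction l with
  | nil => simp
  | cons a t ih => simp [ih, Nat.mul_add]

lemma upperPartner_bounds (l : List ℕ) (k : ℕ) (h1 : 1 ≤ k) (h2 : k ≤ 2*l.sum) :
    1 ≤ upperPartner l k ∧ upperPartner l k ≤ 2*l.sum := by
  induction l generalizing k with
  | nil => simp at h2; omega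
  | cons a t ih =>
    simp only [upperPartner, List.sum_cons] at *
    by_cases h : k ≤ 2*a
    · rw [if_pos h]; omega
    · rw [if_neg h]
      have := ih (k - 2*a) (by omega) (by omega)
      omega

lemma scale_upper (lam : ℕ) (hlam : 0 < lam) (l : List ℕ) :
    ∀ k, 1 ≤ k → k ≤ 2*(lam*l.sum) →
    cpZ lam (upperPartner (l.map (fun x => lam*x)) k) = cpZ lam k ∧
    psZ lam (upperPartner (l.map (fun x => lam*x)) k) = upperPartner l (psZ lam k) := by
  induction l with
  | nil =>
    intro k h1 h2
    simp only [List.sum_nil, Nat.mul_zero] at h2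
    omega
  | cons a rest ih =>
    intro k h1 h2
    simp only [List.sum_cons] at h2
    simp only [List.map_cons, List.sum_cons, upperPartner]
    have hsplit : 2*(lam*(a+rest.sum)) = 2*(lam*a) + 2*(lam*rest.sum) := by ring
    by_cases h : k ≤ 2*(lam*a)
    · obtain ⟨hc, hp⟩ := flipZ lam a k hlam h1 h
      have hple : psZ lam k ≤ 2*a := (psZ_le_iff lam a k hlam h1).2 h
      rw [if_pos h, if_pos hple]
      exact ⟨hc, hp⟩
    · have hk' : 1 ≤ k - 2*(lam*a) := by omega
      have hk2 : k - 2*(lam*a) ≤ 2*(lam*rest.sum) := by omega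
      obtain ⟨hc, hp⟩ := ih (k - 2*(lam*a)) hk' hk2
      have he : 2*(lam*a) + (k - 2*(lam*a)) = k := by omega
      have hub := upperPartner_bounds (rest.map (fun x => lam*x)) (k - 2*(lam*a)) hk'
        (by rw [sumMapZ]; omega)
      have hple : ¬ psZ lam k ≤ 2*a := fun hcon => h ((psZ_le_iff lam a k hlam h1).1 hcon)
      have h3 : cpZ lam k = cpZ lam (k - 2*(lam*a)) := by
        conv_lhs => rw [← he]
        rw [cpZ_shift lam a _ hk']
      have h4 : psZ lam k = 2*a + psZ lam (k - 2*(lam*a)) := by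
        conv_lhs => rw [← he]
        rw [psZ_shift lam a _ hlam hk']
      rw [if_neg h, if_neg hple]
      constructor
      · rw [cpZ_shift lam a _ hub.1, hc, h3]
      · rw [psZ_shift lam a _ hlam hub.1, hp, h4, Nat.add_sub_cancel_left]

lemma relIffZ (lam : ℕ) (hlam : 0 < lam) (l : List ℕ) (x y : ℕ)
    (hx1 : 1 ≤ x) (hx2 : x ≤ 2*(lam*l.sum)) (hy1 : 1 ≤ y) (hy2 : y ≤ 2*(lam*l.sum)) :
    meanderRel (l.map (fun x => lam*x)) x y ↔
      (cpZ lam y = cpZ lam x ∧ meanderRel l (psZ lam x) (psZ lam y)) := by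
  have hsum : 2 * (l.map (fun x => lam*x)).sum = 2*(lam*l.sum) := by rw [sumMapZ]
  constructor
  · rintro (h | h)
    · obtain ⟨hc, hp⟩ := scale_upper lam hlam l x hx1 hx2
      refine ⟨h ▸ hc, Or.inl ?_⟩
      rw [h, hp]
    · rw [hsum] at h
      obtain ⟨hc, hp⟩ := flipZ lam l.sum x hlam hx1 hx2
      refine ⟨h ▸ hc, Or.inr ?_⟩
      rw [h, hp]
  · rintro ⟨hc, h | h⟩
    · -- y = upperPartner of x in scaled meander
      left
      set u := upperPartner (l.map (fun x => lam*x)) x with hu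
      have hub := upperPartner_bounds (l.map (fun x => lam*x)) x hx1 (by omega)
      rw [← hsum] at hx2
      obtain ⟨hcu, hpu⟩ := scale_upper lam hlam l x hx1 (by omega)
      have e1 : psiZ lam (cpZ lam y) (psZ lam y) = y := psiZ_cpZ_psZ lam y hlam hy1
      have e2 : psiZ lam (cpZ lam u) (psZ lam u) = u := psiZ_cpZ_psZ lam u hlam hub.1
      rw [← e1, ← e2, hc, hcu, hpu, ← h]
    · right
      rw [hsum]
      set w := 2*(lam*l.sum) + 1 - x with hw
      obtain ⟨hcw, hpw⟩ := flipZ lam l.sum x hlam hx1 hx2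
      have hw1 : 1 ≤ w := by omega
      have e1 : psiZ lam (cpZ lam y) (psZ lam y) = y := psiZ_cpZ_psZ lam y hlam hy1
      have e2 : psiZ lam (cpZ lam w) (psZ lam w) = w := psiZ_cpZ_psZ lam w hlam hw1
      rw [← e1, ← e2, hc, hcw, hpw, ← h]

noncomputable def FZ (lam : ℕ) (hlam : 0 < lam) (l : List ℕ)
    (x : {k : ℕ // 1 ≤ k ∧ k ≤ 2 * (l.map (fun x => lam*x)).sum}) :
    Fin lam × {k : ℕ // 1 ≤ k ∧ k ≤ 2 * l.sum} :=
  have hx2 : x.1 ≤ 2*(lam*l.sum) := by have := x.2.2; have hs := sumMapZ lam l; omega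
  (⟨cpZ lam x.1, cpZ_lt lam x.1 hlam x.2.1⟩,
   ⟨psZ lam x.1, psZ_bounds lam l.sum x.1 hlam x.2.1 hx2⟩)

noncomputable def GZ (lam : ℕ) (l : List ℕ)
    (y : Fin lam × {k : ℕ // 1 ≤ k ∧ k ≤ 2 * l.sum}) :
    {k : ℕ // 1 ≤ k ∧ k ≤ 2 * (l.map (fun x => lam*x)).sum} :=
  have hlam : 0 < lam := Nat.lt_of_le_of_lt (Nat.zero_le _) y.1.2
  ⟨psiZ lam y.1.1 y.2.1,
    (cpZ_psZ_psiZ lam y.1.1 y.2.1 hlam y.1.2 y.2.2.1).2.2,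
    by rw [sumMapZ]; exact psiZ_le lam y.1.1 y.2.1 l.sum hlam y.1.2 y.2.2.1 y.2.2.2⟩

lemma GFZ (lam : ℕ) (hlam : 0 < lam) (l : List ℕ)
    (x : {k : ℕ // 1 ≤ k ∧ k ≤ 2 * (l.map (fun x => lam*x)).sum}) :
    GZ lam l (FZ lam hlam l x) = x :=
  Subtype.ext (psiZ_cpZ_psZ lam x.1 hlam x.2.1)

lemma FGZ (lam : ℕ) (hlam : 0 < lam) (l : List ℕ)
    (y : Fin lam × {k : ℕ // 1 ≤ k ∧ k ≤ 2 * l.sum}) :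
    FZ lam hlam l (GZ lam l y) = y := by
  obtain ⟨hc, hp, _⟩ := cpZ_psZ_psiZ lam y.1.1 y.2.1 hlam y.1.2 y.2.2.1
  exact Prod.ext (Fin.ext hc) (Subtype.ext hp)

lemma forwardZ (lam : ℕ) (hlam : 0 < lam) (l : List ℕ)
    (a b : {k : ℕ // 1 ≤ k ∧ k ≤ 2 * (l.map (fun x => lam*x)).sum})
    (h : Relation.EqvGen (fun a b : {k : ℕ // 1 ≤ k ∧ k ≤ 2 * (l.map (fun x => lam*x)).sum} =>
        meanderRel (l.map (fun x => lam*x)) a.1 b.1) a b) :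
    (FZ lam hlam l a).1 = (FZ lam hlam l b).1 ∧
      Relation.EqvGen (fun a b : {k : ℕ // 1 ≤ k ∧ k ≤ 2 * l.sum} => meanderRel l a.1 b.1)
        (FZ lam hlam l a).2 (FZ lam hlam l b).2 := by
  induction h with
  | rel x y hxy =>
    have hx2 : x.1 ≤ 2*(lam*l.sum) := by have := x.2.2; have hs := sumMapZ lam l; omega
    have hy2 : y.1 ≤ 2*(lam*l.sum) := by have := y.2.2; have hs := sumMapZ lam l; omega
    obtain ⟨hc, hr⟩ := (relIffZ lam hlam l x.1 y.1 x.2.1 hx2 y.2.1 hy2).1 hxy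
    exact ⟨Fin.ext hc.symm, Relation.EqvGen.rel _ _ hr⟩
  | refl x => exact ⟨rfl, Relation.EqvGen.refl _⟩
  | symm x y _ ih => exact ⟨ih.1.symm, Relation.EqvGen.symm _ _ ih.2⟩
  | trans x y z _ _ ih1 ih2 => exact ⟨ih1.1.trans ih2.1, Relation.EqvGen.trans _ _ _ ih1.2 ih2.2⟩

lemma backwardZ (lam : ℕ) (hlam : 0 < lam) (l : List ℕ) (c : Fin lam)
    (p q : {k : ℕ // 1 ≤ k ∧ k ≤ 2 * l.sum})
    (h : Relation.EqvGen (fun a b : {k : ℕ // 1 ≤ k ∧ k ≤ 2 * l.sum} => meanderRel l a.1 b.1) p q) :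
    Relation.EqvGen (fun a b : {k : ℕ // 1 ≤ k ∧ k ≤ 2 * (l.map (fun x => lam*x)).sum} =>
        meanderRel (l.map (fun x => lam*x)) a.1 b.1) (GZ lam l (c, p)) (GZ lam l (c, q)) := by
  induction h with
  | rel x y hxy =>
    apply Relation.EqvGen.rel
    have hgx := FGZ lam hlam l (c, x)
    have hgy := FGZ lam hlam l (c, y)
    obtain ⟨hcx, hpx, hx1⟩ := cpZ_psZ_psiZ lam c.1 x.1 hlam c.2 x.2.1
    obtain ⟨hcy, hpy, hy1⟩ := cpZ_psZ_psiZ lam c.1 y.1 hlam c.2 y.2.1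
    have hx2 : (GZ lam l (c, x)).1 ≤ 2*(lam*l.sum) := by
      have := (GZ lam l (c, x)).2.2; have hs := sumMapZ lam l; omega
    have hy2 : (GZ lam l (c, y)).1 ≤ 2*(lam*l.sum) := by
      have := (GZ lam l (c, y)).2.2; have hs := sumMapZ lam l; omega
    refine (relIffZ lam hlam l _ _ (GZ lam l (c, x)).2.1 hx2 (GZ lam l (c, y)).2.1 hy2).2 ?_
    constructor
    · show cpZ lam (psiZ lam c.1 y.1) = cpZ lam (psiZ lam c.1 x.1)
      rw [hcx, hcy]
    · show meanderRel l (psZ lam (psiZ lam c.1 x.1)) (psZ lam (psiZ lam c.1 y.1))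
      rw [hpx, hpy]; exact hxy
  | refl x => exact Relation.EqvGen.refl _
  | symm x y _ ih => exact Relation.EqvGen.symm _ _ ih
  | trans x y z _ _ ih1 ih2 => exact Relation.EqvGen.trans _ _ _ ih1 ih2

noncomputable def quotEquivZ (lam : ℕ) (hlam : 0 < lam) (l : List ℕ) :
    Quotient (meanderSetoid (l.map (fun x => lam*x))) ≃
      Fin lam × Quotient (meanderSetoid l) where
  toFun := Quotient.lift
    (fun x => ((FZ lam hlam l x).1, Quotient.mk (meanderSetoid l) (FZ lam hlam l x).2))
    (by
      intro a b h
      obtain ⟨h1, h2⟩ := forwardZ lam hlam l a b h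
      exact Prod.ext h1 (Quotient.sound h2))
  invFun := fun y => Quotient.lift
    (fun p => Quotient.mk (meanderSetoid (l.map (fun x => lam*x))) (GZ lam l (y.1, p)))
    (fun p q h => Quotient.sound (backwardZ lam hlam l y.1 p q h)) y.2
  left_inv := by
    intro x
    induction x using Quotient.inductionOn with
    | h x =>
      show Quotient.mk _ (GZ lam l ((FZ lam hlam l x).1, (FZ lam hlam l x).2)) = _
      rw [show ((FZ lam hlam l x).1, (FZ lam hlam l x).2) = FZ lam hlam l x from rfl,
        GFZ lam hlam l x]
  right_inv := by
    rintro ⟨c, q⟩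
    induction q using Quotient.inductionOn with
    | h p =>
      show ((FZ lam hlam l (GZ lam l (c, p))).1,
        Quotient.mk _ (FZ lam hlam l (GZ lam l (c, p))).2) = (c, Quotient.mk _ p)
      rw [FGZ lam hlam l (c, p)]

/-- Scaling lemma: the number of connected components of a bi-rainbow meander
scales linearly, Z(λα₁,…,λαₙ) = λ·Z(α₁,…,αₙ). -/
theorem Z_scaling (l : List ℕ) (hpos : ∀ x ∈ l, 0 < x) (lam : ℕ) (hlam : 0 < lam) :
    Z (l.map (fun x => lam * x)) = lam * Z l := by
  have e := quotEquivZ lam hlam l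
  unfold Z
  rw [Nat.card_congr e, Nat.card_prod, Nat.card_eq_fintype_card, Fintype.card_fin]
end

section
/- Outer nose retraction, doubling case: for positive integers with αₙ = 2α₁ and n ≥ 2, Z(α₁, α₂, ..., α_{n-1}, αₙ) = Z(α₂, ..., α_{n-1}, α₁). -/
lemma uP_append_small : ∀ (mid tail : List ℕ) (j : ℕ), 1 ≤ j → j ≤ 2 * mid.sum →
    upperPartner (mid ++ tail) j = upperPartner mid j
  | [], _, j, h1, h2 => by simp at h2; omega
  | m :: rest, tail, j, h1, h2 => by
    have h2' : j ≤ 2 * (m + rest.sum) := by simpa using h2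
    simp only [List.cons_append, upperPartner, List.append_eq]
    by_cases h : j ≤ 2 * m
    · simp [h]
    · rw [if_neg h, if_neg h, uP_append_small rest tail (j - 2*m) (by omega) (by omega)]

lemma uP_bounds : ∀ (mid : List ℕ) (j : ℕ), 1 ≤ j → j ≤ 2 * mid.sum →
    1 ≤ upperPartner mid j ∧ upperPartner mid j ≤ 2 * mid.sum
  | [], j, h1, h2 => by simp at h2; omega
  | m :: rest, j, h1, h2 => by
    have h2' : j ≤ 2 * (m + rest.sum) := by simpa using h2
    simp only [upperPartner, List.sum_cons]
    by_cases h : j ≤ 2 * m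
    · rw [if_pos h]; omega
    · rw [if_neg h]
      have := uP_bounds rest (j - 2*m) (by omega) (by omega)
      omega

lemma uP_append_big : ∀ (mid tail : List ℕ) (j : ℕ), 2 * mid.sum < j →
    upperPartner (mid ++ tail) j = 2 * mid.sum + upperPartner tail (j - 2 * mid.sum)
  | [], tail, j, h => by simp
  | m :: rest, tail, j, h => by
    have h' : 2 * (m + rest.sum) < j := by simpa using h
    simp only [List.cons_append, upperPartner, List.sum_cons, List.append_eq]
    rw [if_neg (by omega), uP_append_big rest tail (j - 2*m) (by omega)]
    have e : j - 2*m - 2*rest.sum = j - 2*(m + rest.sum) := by omega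
    rw [e]
    omega

lemma sum_big (a : ℕ) (mid : List ℕ) : (a :: mid ++ [2 * a]).sum = 3*a + mid.sum := by
  simp only [List.cons_append, List.sum_cons, List.sum_append, List.sum_nil]
  omega

lemma sum_small (a : ℕ) (mid : List ℕ) : (mid ++ [a]).sum = mid.sum + a := by
  simp only [List.sum_append, List.sum_cons, List.sum_nil]
  omega

lemma bigU_first (a : ℕ) (mid : List ℕ) (k : ℕ) (h2 : k ≤ 2*a) :
    upperPartner (a :: mid ++ [2 * a]) k = 2*a + 1 - k := by
  simp only [List.cons_append, upperPartner]
  rw [if_pos h2]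

lemma bigU_mid (a : ℕ) (mid : List ℕ) (j : ℕ) (h1 : 1 ≤ j) (h2 : j ≤ 2*mid.sum) :
    upperPartner (a :: mid ++ [2 * a]) (2*a + j) = 2*a + upperPartner mid j := by
  simp only [List.cons_append, upperPartner, List.append_eq]
  rw [if_neg (by omega)]
  have e : 2*a + j - 2*a = j := by omega
  rw [e, uP_append_small mid [2*a] j h1 h2]

lemma bigU_last (a : ℕ) (mid : List ℕ) (i : ℕ) (h1 : 1 ≤ i) (h2 : i ≤ 4*a) :
    upperPartner (a :: mid ++ [2 * a]) (2*a + 2*mid.sum + i) = 2*a + 2*mid.sum + (4*a + 1 - i) := by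
  simp only [List.cons_append, upperPartner, List.append_eq]
  rw [if_neg (by omega)]
  have e : 2*a + 2*mid.sum + i - 2*a = 2*mid.sum + i := by omega
  rw [e, uP_append_big mid [2*a] (2*mid.sum + i) (by omega)]
  have e2 : 2*mid.sum + i - 2*mid.sum = i := by omega
  rw [e2]
  simp only [upperPartner]
  rw [if_pos (by omega)]
  omega

lemma smallU_mid (a : ℕ) (mid : List ℕ) (j : ℕ) (h1 : 1 ≤ j) (h2 : j ≤ 2*mid.sum) :
    upperPartner (mid ++ [a]) j = upperPartner mid j :=
  uP_append_small mid [a] j h1 h2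

lemma smallU_last (a : ℕ) (mid : List ℕ) (t : ℕ) (h1 : 1 ≤ t) (h2 : t ≤ 2*a) :
    upperPartner (mid ++ [a]) (2*mid.sum + t) = 2*mid.sum + (2*a + 1 - t) := by
  rw [uP_append_big mid [a] (2*mid.sum + t) (by omega)]
  have e : 2*mid.sum + t - 2*mid.sum = t := by omega
  rw [e]
  simp only [upperPartner]
  rw [if_pos h2]

abbrev BigPt (a : ℕ) (mid : List ℕ) := {k : ℕ // 1 ≤ k ∧ k ≤ 2 * (a :: mid ++ [2 * a]).sum}
abbrev SmallPt (a : ℕ) (mid : List ℕ) := {k : ℕ // 1 ≤ k ∧ k ≤ 2 * (mid ++ [a]).sum}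

def psi (a S k : ℕ) : ℕ :=
  if k ≤ 2*a then 2*S + 2*a + 1 - k else if k ≤ 4*a + 2*S then k - 2*a else k - 4*a

def toSmall (a : ℕ) (mid : List ℕ) (x : BigPt a mid) : SmallPt a mid :=
  ⟨psi a mid.sum x.1, by
    have hx := x.2
    have h6 := sum_big a mid
    have h4 := sum_small a mid
    refine ⟨?_, ?_⟩ <;> (simp only [psi]; split_ifs <;> omega)⟩

def toBig (a : ℕ) (mid : List ℕ) (u : SmallPt a mid) : BigPt a mid :=
  ⟨2*a + u.1, by
    have hu := u.2
    have h6 := sum_big a mid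
    have h4 := sum_small a mid
    omega⟩

abbrev ER (a : ℕ) (mid : List ℕ) : BigPt a mid → BigPt a mid → Prop :=
  Relation.EqvGen (fun p q => meanderRel (a :: mid ++ [2 * a]) p.1 q.1)

abbrev ES (a : ℕ) (mid : List ℕ) : SmallPt a mid → SmallPt a mid → Prop :=
  Relation.EqvGen (fun p q => meanderRel (mid ++ [a]) p.1 q.1)

lemma ereflB (a : ℕ) (mid : List ℕ) {v w : BigPt a mid} (h : v.1 = w.1) : ER a mid v w := by
  obtain rfl := Subtype.ext h
  exact Relation.EqvGen.refl _

lemma ereflS (a : ℕ) (mid : List ℕ) {v w : SmallPt a mid} (h : v.1 = w.1) : ES a mid v w := by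
  obtain rfl := Subtype.ext h
  exact Relation.EqvGen.refl _

lemma RL (a : ℕ) (mid : List ℕ) (i : ℕ) (h1 : 1 ≤ i) (h2 : i ≤ 2*a) :
    ER a mid ⟨2*a + 2*mid.sum + i, by have := sum_big a mid; omega⟩
             ⟨4*a + 2*mid.sum + i, by have := sum_big a mid; omega⟩ := by
  have h6 := sum_big a mid
  refine Relation.EqvGen.trans _ ⟨6*a + 2*mid.sum + 1 - i, by omega⟩ _
    (Relation.EqvGen.rel _ _ ?_) ?_
  · exact Or.inl (by
      show (6*a + 2*mid.sum + 1 - i : ℕ) = upperPartner (a :: mid ++ [2 * a]) (2*a + 2*mid.sum + i)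
      rw [bigU_last a mid i h1 (by omega)]; omega)
  refine Relation.EqvGen.trans _ ⟨i, by omega⟩ _ (Relation.EqvGen.rel _ _ ?_) ?_
  · exact Or.inr (by
      show (i : ℕ) = 2 * (a :: mid ++ [2 * a]).sum + 1 - (6*a + 2*mid.sum + 1 - i)
      omega)
  refine Relation.EqvGen.trans _ ⟨2*a + 1 - i, by omega⟩ _
    (Relation.EqvGen.rel _ _ ?_) (Relation.EqvGen.rel _ _ ?_)
  · exact Or.inl (by
      show (2*a + 1 - i : ℕ) = upperPartner (a :: mid ++ [2 * a]) i
      rw [bigU_first a mid i (by omega)])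
  · exact Or.inr (by
      show (4*a + 2*mid.sum + i : ℕ) = 2 * (a :: mid ++ [2 * a]).sum + 1 - (2*a + 1 - i)
      omega)

lemma psiStep (a : ℕ) (mid : List ℕ) (x y : BigPt a mid)
    (h : meanderRel (a :: mid ++ [2 * a]) x.1 y.1) :
    (toSmall a mid x).1 = (toSmall a mid y).1 ∨
      meanderRel (mid ++ [a]) (toSmall a mid x).1 (toSmall a mid y).1 := by
  obtain ⟨k, hk1, hk2⟩ := x
  obtain ⟨m, hm1, hm2⟩ := y
  have h6 := sum_big a mid
  have h4 := sum_small a mid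
  rw [h6] at hk2 hm2
  simp only [toSmall]
  rcases h with hu | hl
  · -- upper step
    simp only at hu
    rcases le_or_gt k (2*a) with h1 | h1
    · rw [bigU_first a mid k h1] at hu
      right; left
      have e1 : psi a mid.sum k = 2*mid.sum + (2*a + 1 - k) := by
        simp only [psi]; split_ifs <;> omega
      have e2 : psi a mid.sum m = 2*mid.sum + (2*a + 1 - (2*a + 1 - k)) := by
        simp only [psi]; split_ifs <;> omega
      rw [e1, e2, smallU_last a mid (2*a + 1 - k) (by omega) (by omega)]
    · rcases le_or_gt k (2*a + 2*mid.sum) with h2 | h2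
      · -- middle
        rw [show k = 2*a + (k - 2*a) by omega, bigU_mid a mid (k - 2*a) (by omega) (by omega)] at hu
        have hb := uP_bounds mid (k - 2*a) (by omega) (by omega)
        right; left
        have e1 : psi a mid.sum k = k - 2*a := by simp only [psi]; split_ifs <;> omega
        have e2 : psi a mid.sum m = upperPartner mid (k - 2*a) := by
          simp only [psi]; split_ifs <;> omega
        rw [e1, e2, smallU_mid a mid (k - 2*a) (by omega) (by omega)]
      · -- last family
        rw [show k = 2*a + 2*mid.sum + (k - 2*a - 2*mid.sum) by omega,
          bigU_last a mid (k - 2*a - 2*mid.sum) (by omega) (by omega)] at hu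
        right; left
        rcases le_or_gt k (4*a + 2*mid.sum) with h3 | h3
        · -- left half
          have e1 : psi a mid.sum (2*a + 2*mid.sum + (k - 2*a - 2*mid.sum))
              = 2*mid.sum + (k - 2*a - 2*mid.sum) := by
            simp only [psi]; split_ifs <;> omega
          have e2 : psi a mid.sum m = 2*mid.sum + (2*a + 1 - (k - 2*a - 2*mid.sum)) := by
            simp only [psi]; split_ifs <;> omega
          rw [show k = 2*a + 2*mid.sum + (k - 2*a - 2*mid.sum) by omega, e1, e2,
            smallU_last a mid (k - 2*a - 2*mid.sum) (by omega) (by omega)]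
        · -- right half
          have e1 : psi a mid.sum k = 2*mid.sum + (k - 4*a - 2*mid.sum) := by
            simp only [psi]; split_ifs <;> omega
          have e2 : psi a mid.sum m = 2*mid.sum + (2*a + 1 - (k - 4*a - 2*mid.sum)) := by
            simp only [psi]; split_ifs <;> omega
          rw [e1, e2, smallU_last a mid (k - 4*a - 2*mid.sum) (by omega) (by omega)]
  · -- lower step
    simp only at hl
    rw [h6] at hl
    rcases le_or_gt k (2*a) with h1 | h1
    · left; simp only [psi]; split_ifs <;> omega
    · rcases le_or_gt k (4*a + 2*mid.sum) with h2 | h2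
      · right; right
        rw [h4]
        simp only [psi]; split_ifs <;> omega
      · left; simp only [psi]; split_ifs <;> omega

lemma phiStep (a : ℕ) (mid : List ℕ) (u v : SmallPt a mid)
    (h : meanderRel (mid ++ [a]) u.1 v.1) :
    ER a mid (toBig a mid u) (toBig a mid v) := by
  obtain ⟨p, hp1, hp2⟩ := u
  obtain ⟨q, hq1, hq2⟩ := v
  have h6 := sum_big a mid
  have h4 := sum_small a mid
  rw [h4] at hp2 hq2
  rcases h with hu | hl
  · simp only at hu
    rcases le_or_gt p (2*mid.sum) with h1 | h1
    · rw [smallU_mid a mid p hp1 h1] at hu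
      refine Relation.EqvGen.rel _ _ (Or.inl ?_)
      show 2*a + q = upperPartner (a :: mid ++ [2 * a]) (2*a + p)
      rw [bigU_mid a mid p hp1 h1, hu]
    · rw [show p = 2*mid.sum + (p - 2*mid.sum) by omega,
        smallU_last a mid (p - 2*mid.sum) (by omega) (by omega)] at hu
      refine Relation.EqvGen.trans _ ⟨4*a + 2*mid.sum + (2*a + 1 - (p - 2*mid.sum)), by omega⟩ _
        (Relation.EqvGen.rel _ _ (Or.inl ?_)) ?_
      · show (4*a + 2*mid.sum + (2*a + 1 - (p - 2*mid.sum)) : ℕ)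
            = upperPartner (a :: mid ++ [2 * a]) (2*a + p)
        rw [show 2*a + p = 2*a + 2*mid.sum + (p - 2*mid.sum) by omega,
          bigU_last a mid (p - 2*mid.sum) (by omega) (by omega)]
        omega
      · refine Relation.EqvGen.trans _ ⟨2*a + 2*mid.sum + (2*a + 1 - (p - 2*mid.sum)), by omega⟩ _
          (Relation.EqvGen.symm _ _ (RL a mid (2*a + 1 - (p - 2*mid.sum)) (by omega) (by omega)))
          (ereflB a mid ?_)
        show (2*a + 2*mid.sum + (2*a + 1 - (p - 2*mid.sum)) : ℕ) = 2*a + q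
        omega
  · simp only at hl
    rw [h4] at hl
    refine Relation.EqvGen.rel _ _ (Or.inr ?_)
    show 2*a + q = 2 * (a :: mid ++ [2 * a]).sum + 1 - (2*a + p)
    omega

lemma retract (a : ℕ) (mid : List ℕ) (x : BigPt a mid) :
    ER a mid x (toBig a mid (toSmall a mid x)) := by
  obtain ⟨k, hk1, hk2⟩ := x
  have h6 := sum_big a mid
  have h4 := sum_small a mid
  rw [h6] at hk2
  rcases le_or_gt k (2*a) with h1 | h1
  · refine Relation.EqvGen.trans _ ⟨4*a + 2*mid.sum + (2*a + 1 - k), by omega⟩ _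
      (Relation.EqvGen.rel _ _ (Or.inr ?_)) ?_
    · show (4*a + 2*mid.sum + (2*a + 1 - k) : ℕ) = 2 * (a :: mid ++ [2 * a]).sum + 1 - k
      omega
    · refine Relation.EqvGen.trans _ ⟨2*a + 2*mid.sum + (2*a + 1 - k), by omega⟩ _
        (Relation.EqvGen.symm _ _ (RL a mid (2*a + 1 - k) (by omega) (by omega)))
        (ereflB a mid ?_)
      show (2*a + 2*mid.sum + (2*a + 1 - k) : ℕ) = 2*a + psi a mid.sum k
      simp only [psi]; split_ifs <;> omega
  · rcases le_or_gt k (4*a + 2*mid.sum) with h2 | h2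
    · refine ereflB a mid ?_
      show k = 2*a + psi a mid.sum k
      simp only [psi]; split_ifs <;> omega
    · refine Relation.EqvGen.trans _ ⟨4*a + 2*mid.sum + (k - 4*a - 2*mid.sum), by omega⟩ _
        (ereflB a mid (show (k:ℕ) = 4*a + 2*mid.sum + (k - 4*a - 2*mid.sum) by omega)) ?_
      refine Relation.EqvGen.trans _ ⟨2*a + 2*mid.sum + (k - 4*a - 2*mid.sum), by omega⟩ _
        (Relation.EqvGen.symm _ _ (RL a mid (k - 4*a - 2*mid.sum) (by omega) (by omega)))
        (ereflB a mid ?_)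
      show (2*a + 2*mid.sum + (k - 4*a - 2*mid.sum) : ℕ) = 2*a + psi a mid.sum k
      simp only [psi]; split_ifs <;> omega

/-- Outer nose retraction, doubling case: if αₙ = 2α₁, then
Z(α₁,α₂,…,α_{n-1},αₙ) = Z(α₂,…,α_{n-1},α₁). -/
theorem outer_retraction_double (a : ℕ) (ha : 0 < a) (mid : List ℕ)
    (hpos : ∀ x ∈ mid, 0 < x) :
    Z (a :: mid ++ [2 * a]) = Z (mid ++ [a]) := by
  have hF : ∀ x y : BigPt a mid, (meanderSetoid (a :: mid ++ [2 * a])).r x y →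
      (meanderSetoid (mid ++ [a])).r (toSmall a mid x) (toSmall a mid y) := by
    intro x y h
    replace h : ER a mid x y := h
    induction h with
    | rel p q hpq =>
        rcases psiStep a mid p q hpq with he | hr
        · exact ereflS a mid he
        · exact Relation.EqvGen.rel _ _ hr
    | refl p => exact Relation.EqvGen.refl _
    | symm p q _ ih => exact Relation.EqvGen.symm _ _ ih
    | trans p q r _ _ ih1 ih2 => exact Relation.EqvGen.trans _ _ _ ih1 ih2
  have hG : ∀ u v : SmallPt a mid, (meanderSetoid (mid ++ [a])).r u v →
      (meanderSetoid (a :: mid ++ [2 * a])).r (toBig a mid u) (toBig a mid v) := by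
    intro u v h
    replace h : ES a mid u v := h
    induction h with
    | rel p q hpq => exact phiStep a mid p q hpq
    | refl p => exact Relation.EqvGen.refl _
    | symm p q _ ih => exact Relation.EqvGen.symm _ _ ih
    | trans p q r _ _ ih1 ih2 => exact Relation.EqvGen.trans _ _ _ ih1 ih2
  have e : Quotient (meanderSetoid (a :: mid ++ [2 * a])) ≃ Quotient (meanderSetoid (mid ++ [a])) := by
    refine
      { toFun := Quotient.map (toSmall a mid) hF
        invFun := Quotient.map (toBig a mid) hG
        left_inv := ?_
        right_inv := ?_ }
    · refine fun q => Quotient.inductionOn q (fun x => ?_)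
      simp only [Quotient.map_mk]
      exact Quotient.sound (Relation.EqvGen.symm _ _ (retract a mid x))
    · refine fun q => Quotient.inductionOn q (fun u => ?_)
      simp only [Quotient.map_mk]
      have : toSmall a mid (toBig a mid u) = u := by
        refine Subtype.ext ?_
        have hu := u.2
        have h4 := sum_small a mid
        show psi a mid.sum (2*a + u.1) = u.1
        simp only [psi]; split_ifs <;> omega
      rw [this]
  show Nat.card _ = Nat.card _
  exact Nat.card_congr e
end
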